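/- arXiv:2506.08831 — 7 statements merged into one kernel-verified Lean document; each statement's English description precedes it below -/
import Mathlib

section
/- Let n ≥ 1 be an integer and let k, ℓ, δ, ε be real numbers with 0 ≤ k < n, 0 ≤ ℓ < n, δ > 0, ε > 0, k + ℓ + δ ≥ n and k + ℓ ≠ n. Then there is a constant C (depending only on n, k, ℓ, δ, ε) such that for all x, y ∈ ℝⁿ with x ≠ y: ∫_{ℝⁿ} ⟨z⟩^{−δ−ε} |z − x|^{−k} |y − z|^{−ℓ} dz ≤ C·|x − y|^{−max{0, k+ℓ−n}} whenever |x − y| < 1, and ∫_{ℝⁿ} ⟨z⟩^{−δ−ε} |z − x|^{−k} |y − z|^{−ℓ} dz ≤ C·|x − y|^{−min{k, ℓ, k+ℓ+δ−n}} whenever |x − y| ≥ 1. -/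
open MeasureTheory Metric Set

noncomputable section Aux

variable {n : ℕ}

/-- The Japanese bracket. -/
def jp (z : EuclideanSpace ℝ (Fin n)) : ℝ := Real.sqrt (1 + ‖z‖ ^ 2)

lemma jp_one_le (z : EuclideanSpace ℝ (Fin n)) : 1 ≤ jp z :=
  Real.one_le_sqrt.2 (by nlinarith [sq_nonneg ‖z‖])

lemma jp_pos (z : EuclideanSpace ℝ (Fin n)) : 0 < jp z := lt_of_lt_of_le one_pos (jp_one_le z)

lemma norm_le_jp (z : EuclideanSpace ℝ (Fin n)) : ‖z‖ ≤ jp z := by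
  have : ‖z‖ ^ 2 ≤ 1 + ‖z‖ ^ 2 := by nlinarith
  calc ‖z‖ = Real.sqrt (‖z‖ ^ 2) := (Real.sqrt_sq (norm_nonneg z)).symm
  _ ≤ jp z := Real.sqrt_le_sqrt this

lemma measurable_jp : Measurable (jp (n := n)) := by unfold jp; fun_prop

lemma jp_rpow_le_one (z : EuclideanSpace ℝ (Fin n)) {a : ℝ} (ha : 0 ≤ a) : jp z ^ (-a) ≤ 1 :=
  Real.rpow_le_one_of_one_le_of_nonpos (jp_one_le z) (by linarith)

lemma jp_rpow_nonneg (z : EuclideanSpace ℝ (Fin n)) (a : ℝ) : 0 ≤ jp z ^ a :=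
  Real.rpow_nonneg (jp_pos z).le a

/-- if ‖w‖ ≥ 1/2 then jp w ≤ √5 ‖w‖; we use the rpow-consequence directly:
‖w‖^(-b) ≤ 5^(b/2) * jp w ^(-b) for b ≥ 0. -/
lemma norm_rpow_le_jp (w : EuclideanSpace ℝ (Fin n)) {b : ℝ} (hb : 0 ≤ b) (hw : 1/2 ≤ ‖w‖) :
    ‖w‖ ^ (-b) ≤ (Real.sqrt 5) ^ b * jp w ^ (-b) := by
  have hw0 : (0:ℝ) < ‖w‖ := by linarith
  have h5 : jp w ≤ Real.sqrt 5 * ‖w‖ := by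
    rw [jp, show Real.sqrt 5 * ‖w‖ = Real.sqrt (5 * ‖w‖^2) by
      rw [Real.sqrt_mul (by norm_num), Real.sqrt_sq (norm_nonneg w)]]
    apply Real.sqrt_le_sqrt
    nlinarith
  have h2 : (Real.sqrt 5 * ‖w‖) ^ (-b) ≤ jp w ^ (-b) :=
    Real.rpow_le_rpow_of_nonpos (jp_pos w) h5 (by linarith)
  have h3 : (Real.sqrt 5 * ‖w‖) ^ (-b) = (Real.sqrt 5) ^ (-b) * ‖w‖ ^ (-b) :=
    Real.mul_rpow (Real.sqrt_nonneg 5) (norm_nonneg w)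
  have h4 : (0:ℝ) < Real.sqrt 5 ^ b := Real.rpow_pos_of_pos (by positivity) _
  rw [h3] at h2
  have := mul_le_mul_of_nonneg_left h2 h4.le
  rw [← mul_assoc, ← Real.rpow_add (by positivity : (0:ℝ) < Real.sqrt 5)] at this
  simpa [add_neg_cancel] using this

-- note: for ‖w‖ ≥ 1 the same lemma suffices.

/-- Peetre-type pointwise bound. -/
lemma jp_mul_le (z w : EuclideanSpace ℝ (Fin n)) {a b : ℝ} (ha : 0 ≤ a) (hb : 0 ≤ b) :
    jp z ^ (-a) * jp w ^ (-b) ≤ jp z ^ (-(a+b)) + jp w ^ (-(a+b)) := by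
  rcases le_total (jp z) (jp w) with h | h
  · have h1 : jp w ^ (-b) ≤ jp z ^ (-b) := Real.rpow_le_rpow_of_nonpos (jp_pos z) h (by linarith)
    have h2 : jp z ^ (-a) * jp w ^ (-b) ≤ jp z ^ (-a) * jp z ^ (-b) :=
      mul_le_mul_of_nonneg_left h1 (jp_rpow_nonneg z _)
    rw [← Real.rpow_add (jp_pos z)] at h2
    calc jp z ^ (-a) * jp w ^ (-b) ≤ jp z ^ (-a + -b) := h2
    _ = jp z ^ (-(a+b)) := by ring_nf
    _ ≤ _ := le_add_of_nonneg_right (jp_rpow_nonneg w _)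
  · have h1 : jp z ^ (-a) ≤ jp w ^ (-a) := Real.rpow_le_rpow_of_nonpos (jp_pos w) h (by linarith)
    have h2 : jp z ^ (-a) * jp w ^ (-b) ≤ jp w ^ (-a) * jp w ^ (-b) :=
      mul_le_mul_of_nonneg_right h1 (jp_rpow_nonneg w _)
    rw [← Real.rpow_add (jp_pos w)] at h2
    calc jp z ^ (-a) * jp w ^ (-b) ≤ jp w ^ (-a + -b) := h2
    _ = jp w ^ (-(a+b)) := by ring_nf
    _ ≤ _ := le_add_of_nonneg_left (jp_rpow_nonneg z _)



lemma translate_lintegral (f : EuclideanSpace ℝ (Fin n) → ENNReal)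
    {s : Set (EuclideanSpace ℝ (Fin n))} (hs : MeasurableSet s)
    (x : EuclideanSpace ℝ (Fin n)) :
    ∫⁻ z in {z | z - x ∈ s}, f (z - x) = ∫⁻ w in s, f w := by
  have hs' : MeasurableSet {z : EuclideanSpace ℝ (Fin n) | z - x ∈ s} :=
    (measurable_id.sub measurable_const) hs
  rw [← lintegral_indicator hs', ← lintegral_indicator hs]
  have key : ∀ w, ({z | z - x ∈ s}.indicator (fun z => f (z - x))) (w + x) = s.indicator f w := by
    intro w
    by_cases hw : w ∈ s <;> simp [Set.indicator, hw]
  calc ∫⁻ z, ({z | z - x ∈ s}.indicator (fun z => f (z - x))) z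
      = ∫⁻ w, ({z | z - x ∈ s}.indicator (fun z => f (z - x))) (w + x) :=
        (lintegral_add_right_eq_self _ x).symm
  _ = ∫⁻ w, s.indicator f w := by simp only [key]

lemma ball_eq_sub_mem (x : EuclideanSpace ℝ (Fin n)) (R : ℝ) :
    ball x R = {z | z - x ∈ ball (0 : EuclideanSpace ℝ (Fin n)) R} := by
  ext z; simp [mem_ball, dist_eq_norm]

lemma compl_ball_eq_sub_mem (x : EuclideanSpace ℝ (Fin n)) (R : ℝ) :
    (ball x R)ᶜ = {z | z - x ∈ (ball (0 : EuclideanSpace ℝ (Fin n)) R)ᶜ} := by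
  ext z; simp [mem_ball, dist_eq_norm]

/-- Scaling of lintegrals on Euclidean space. -/
lemma lintegral_scale (f : EuclideanSpace ℝ (Fin n) → ENNReal) (hf : Measurable f)
    {R : ℝ} (hR : 0 < R) :
    ∫⁻ z, f z = ENNReal.ofReal (R ^ n) * ∫⁻ w, f (R • w) := by
  have h1 : ∫⁻ w, f (R • w) =
      ENNReal.ofReal |(R ^ Module.finrank ℝ (EuclideanSpace ℝ (Fin n)))⁻¹| * ∫⁻ z, f z := by
    rw [← lintegral_map hf (measurable_const_smul R),
      Measure.map_addHaar_smul volume hR.ne', lintegral_smul_measure, smul_eq_mul]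
  rw [h1, ← mul_assoc, finrank_euclideanSpace_fin, ← ENNReal.ofReal_mul (by positivity),
    abs_of_nonneg (by positivity), mul_inv_cancel₀ (by positivity)]
  simp


lemma nontrivial_euc (hn : 1 ≤ n) : Nontrivial (EuclideanSpace ℝ (Fin n)) := by
  have h : 0 < Module.finrank ℝ (EuclideanSpace ℝ (Fin n)) := by
    rw [finrank_euclideanSpace_fin]; exact hn
  exact Module.nontrivial_of_finrank_pos h

/-- Finiteness of the unit-ball integral of ‖z‖^(-p), 0 ≤ p < n. -/
lemma ball_one_finite (hn : 1 ≤ n) {p : ℝ} (hp0 : 0 ≤ p) (hpn : p < n) :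
    ∫⁻ z in ball (0 : EuclideanSpace ℝ (Fin n)) 1, ENNReal.ofReal (‖z‖ ^ (-p)) < ⊤ := by
  haveI := nontrivial_euc hn
  rcases eq_or_lt_of_le hp0 with hp | hp
  · simp only [← hp, neg_zero, Real.rpow_zero, ENNReal.ofReal_one]
    simpa using measure_ball_lt_top (x := (0 : EuclideanSpace ℝ (Fin n))) (r := 1)
  set μ' := volume.restrict (ball (0 : EuclideanSpace ℝ (Fin n)) 1) with hμ'
  have hnn : (0 : EuclideanSpace ℝ (Fin n) → ℝ) ≤ᶠ[ae μ'] fun z : EuclideanSpace ℝ (Fin n) => ‖z‖ ^ (-p) :=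
    Filter.Eventually.of_forall fun z => by
      simp only [Pi.zero_apply]; positivity
  have hmeas : AEMeasurable (fun z : EuclideanSpace ℝ (Fin n) => ‖z‖ ^ (-p)) μ' := by fun_prop
  rw [lintegral_eq_lintegral_meas_lt μ' hnn hmeas]
  have hsplit : (Ioc (0:ℝ) 1) ∪ (Ioi 1) = Ioi 0 := Ioc_union_Ioi_eq_Ioi zero_le_one
  rw [← hsplit, lintegral_union measurableSet_Ioi (Ioc_disjoint_Ioi le_rfl)]
  have vB : volume (ball (0 : EuclideanSpace ℝ (Fin n)) 1) < ⊤ := measure_ball_lt_top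
  have part1 : ∫⁻ t in Ioc (0:ℝ) 1, μ' {a | t < ‖a‖ ^ (-p)} < ⊤ := by
    have hb : ∀ t, μ' {a | t < ‖a‖ ^ (-p)} ≤ volume (ball (0 : EuclideanSpace ℝ (Fin n)) 1) := by
      intro t
      calc μ' {a | t < ‖a‖ ^ (-p)} ≤ μ' univ := measure_mono (subset_univ _)
      _ = volume (ball (0 : EuclideanSpace ℝ (Fin n)) 1) := by
          rw [hμ', Measure.restrict_apply_univ]
    calc ∫⁻ t in Ioc (0:ℝ) 1, μ' {a | t < ‖a‖ ^ (-p)}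
        ≤ ∫⁻ _ in Ioc (0:ℝ) 1, volume (ball (0 : EuclideanSpace ℝ (Fin n)) 1) :=
          setLIntegral_mono measurable_const fun t _ => hb t
    _ = volume (ball (0 : EuclideanSpace ℝ (Fin n)) 1) * volume (Ioc (0:ℝ) 1) := by
          rw [setLIntegral_const]
    _ < ⊤ := by
          apply ENNReal.mul_lt_top vB
          rw [Real.volume_Ioc]; exact ENNReal.ofReal_lt_top
  have part2 : ∫⁻ t in Ioi (1:ℝ), μ' {a | t < ‖a‖ ^ (-p)} < ⊤ := by
    have key : ∀ t ∈ Ioi (1:ℝ), μ' {a | t < ‖a‖ ^ (-p)}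
        ≤ volume (ball (0 : EuclideanSpace ℝ (Fin n)) 1) * ENNReal.ofReal (t ^ (-((n:ℝ)/p))) := by
      intro t ht
      have ht1 : (1:ℝ) < t := ht
      have ht0 : (0:ℝ) < t := lt_trans one_pos ht1
      have hr0 : (0:ℝ) < t ^ (-(1/p)) := Real.rpow_pos_of_pos ht0 _
      have hsub : {a : EuclideanSpace ℝ (Fin n) | t < ‖a‖ ^ (-p)}
          ⊆ ball 0 (t ^ (-(1/p))) := by
        intro a ha
        simp only [mem_setOf_eq] at ha
        have ha0 : a ≠ 0 := by
          intro h
          rw [h, norm_zero, Real.zero_rpow (neg_ne_zero.2 hp.ne')] at ha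
          linarith
        have hna : (0:ℝ) < ‖a‖ := norm_pos_iff.2 ha0
        have hkey : (t ^ (-(1/p))) ^ (-p) < ‖a‖ ^ (-p) := by
          rw [← Real.rpow_mul ht0.le]
          have : -(1/p) * -p = 1 := by field_simp
          rw [this, Real.rpow_one]
          exact ha
        have := (Real.rpow_lt_rpow_iff_of_neg hr0 hna (neg_neg_iff_pos.2 hp)).1 hkey
        simpa [mem_ball, dist_eq_norm] using this
      calc μ' {a | t < ‖a‖ ^ (-p)} ≤ volume {a : EuclideanSpace ℝ (Fin n) | t < ‖a‖ ^ (-p)} :=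
            Measure.restrict_apply_le _ _
      _ ≤ volume (ball (0 : EuclideanSpace ℝ (Fin n)) (t ^ (-(1/p)))) := measure_mono hsub
      _ = ENNReal.ofReal ((t ^ (-(1/p))) ^ n) * volume (ball (0 : EuclideanSpace ℝ (Fin n)) 1) := by
            rw [Measure.addHaar_ball volume 0 hr0.le, finrank_euclideanSpace_fin]
      _ = volume (ball (0 : EuclideanSpace ℝ (Fin n)) 1) * ENNReal.ofReal (t ^ (-((n:ℝ)/p))) := by
            rw [mul_comm]
            congr 1
            rw [← Real.rpow_natCast (t ^ (-(1/p))) n, ← Real.rpow_mul ht0.le]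
            congr 1
            field_simp
    have hint : IntegrableOn (fun t : ℝ => t ^ (-((n:ℝ)/p))) (Ioi (1:ℝ)) := by
      apply integrableOn_Ioi_rpow_of_lt _ one_pos
      have : (1:ℝ) < (n:ℝ)/p := (one_lt_div hp).2 hpn
      linarith
    have hfin : ∫⁻ t in Ioi (1:ℝ), ENNReal.ofReal (t ^ (-((n:ℝ)/p))) < ⊤ := by
      have h1 := hint.hasFiniteIntegral
      rw [hasFiniteIntegral_iff_ofReal] at h1
      · exact h1
      · refine ae_restrict_of_forall_mem measurableSet_Ioi fun t ht => ?_
        exact Real.rpow_nonneg (le_trans zero_le_one (le_of_lt ht)) _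
    calc ∫⁻ t in Ioi (1:ℝ), μ' {a | t < ‖a‖ ^ (-p)}
        ≤ ∫⁻ t in Ioi (1:ℝ), volume (ball (0 : EuclideanSpace ℝ (Fin n)) 1) *
            ENNReal.ofReal (t ^ (-((n:ℝ)/p))) := by
          apply setLIntegral_mono (by fun_prop) key
    _ = volume (ball (0 : EuclideanSpace ℝ (Fin n)) 1) *
          ∫⁻ t in Ioi (1:ℝ), ENNReal.ofReal (t ^ (-((n:ℝ)/p))) :=
          lintegral_const_mul _ (by fun_prop)
    _ < ⊤ := ENNReal.mul_lt_top vB hfin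
  exact ENNReal.add_lt_top.2 ⟨part1, part2⟩


/-- Generic scaling identity for integrals of ‖z‖^(-p) over scale-invariant families. -/
lemma lintegral_norm_rpow_scale (p : ℝ) {R : ℝ} (hR : 0 < R)
    {s s₁ : Set (EuclideanSpace ℝ (Fin n))} (hs : MeasurableSet s) (hs₁ : MeasurableSet s₁)
    (hss : ∀ w : EuclideanSpace ℝ (Fin n), R • w ∈ s ↔ w ∈ s₁) :
    (∫⁻ z in s, ENNReal.ofReal (‖z‖ ^ (-p)))
      = ENNReal.ofReal (R ^ ((n:ℝ) - p)) * ∫⁻ w in s₁, ENNReal.ofReal (‖w‖ ^ (-p)) := by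
  have hF : Measurable (s.indicator fun z : EuclideanSpace ℝ (Fin n) =>
      ENNReal.ofReal (‖z‖ ^ (-p))) := (Measurable.indicator (by fun_prop) hs)
  have key : ∀ w : EuclideanSpace ℝ (Fin n),
      (s.indicator fun z => ENNReal.ofReal (‖z‖ ^ (-p))) (R • w)
      = s₁.indicator (fun w => ENNReal.ofReal (R ^ (-p)) * ENNReal.ofReal (‖w‖ ^ (-p))) w := by
    intro w
    have hmem : (R • w ∈ s) = (w ∈ s₁) := propext (hss w)
    have hval : ENNReal.ofReal (‖R • w‖ ^ (-p))
        = ENNReal.ofReal (R ^ (-p)) * ENNReal.ofReal (‖w‖ ^ (-p)) := by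
      rw [norm_smul, Real.norm_eq_abs, abs_of_pos hR, Real.mul_rpow hR.le (norm_nonneg w),
        ENNReal.ofReal_mul (Real.rpow_nonneg hR.le _)]
    by_cases hw : w ∈ s₁
    · have : R • w ∈ s := (hss w).2 hw
      simp only [Set.indicator_of_mem this, Set.indicator_of_mem hw, hval]
    · have : R • w ∉ s := fun h => hw ((hss w).1 h)
      simp only [Set.indicator_of_notMem this, Set.indicator_of_notMem hw]
  calc (∫⁻ z in s, ENNReal.ofReal (‖z‖ ^ (-p)))
      = ∫⁻ z, (s.indicator fun z => ENNReal.ofReal (‖z‖ ^ (-p))) z := by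
        rw [lintegral_indicator hs]
  _ = ENNReal.ofReal (R ^ n) * ∫⁻ w, (s.indicator fun z => ENNReal.ofReal (‖z‖ ^ (-p))) (R • w) :=
        lintegral_scale _ hF hR
  _ = ENNReal.ofReal (R ^ n) * ∫⁻ w,
        s₁.indicator (fun w => ENNReal.ofReal (R ^ (-p)) * ENNReal.ofReal (‖w‖ ^ (-p))) w := by
        simp only [key]
  _ = ENNReal.ofReal (R ^ n) * (ENNReal.ofReal (R ^ (-p)) *
        ∫⁻ w in s₁, ENNReal.ofReal (‖w‖ ^ (-p))) := by
        rw [lintegral_indicator hs₁, lintegral_const_mul _ (by fun_prop)]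
  _ = ENNReal.ofReal (R ^ ((n:ℝ) - p)) * ∫⁻ w in s₁, ENNReal.ofReal (‖w‖ ^ (-p)) := by
        rw [← mul_assoc, ← ENNReal.ofReal_mul (by positivity)]
        congr 2
        rw [← Real.rpow_natCast R n, ← Real.rpow_add hR, sub_eq_add_neg]




/-- Main ball bound: ∫_{B(x,R)} ‖z-x‖^(-p) ≤ C R^(n-p). -/
lemma ball_rpow_bound (hn : 1 ≤ n) {p : ℝ} (hp0 : 0 ≤ p) (hpn : p < n) :
    ∃ C : ℝ, 0 < C ∧ ∀ (x : EuclideanSpace ℝ (Fin n)) (R : ℝ), 0 < R →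
      ∫⁻ z in ball x R, ENNReal.ofReal (‖z - x‖ ^ (-p))
        ≤ ENNReal.ofReal (C * R ^ ((n:ℝ) - p)) := by
  set K := ∫⁻ z in ball (0 : EuclideanSpace ℝ (Fin n)) 1, ENNReal.ofReal (‖z‖ ^ (-p)) with hK
  have hKfin : K < ⊤ := ball_one_finite hn hp0 hpn
  refine ⟨K.toReal + 1, by positivity, fun x R hR => ?_⟩
  have h1 : ∫⁻ z in ball x R, ENNReal.ofReal (‖z - x‖ ^ (-p))
      = ∫⁻ w in ball (0 : EuclideanSpace ℝ (Fin n)) R, ENNReal.ofReal (‖w‖ ^ (-p)) := by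
    rw [ball_eq_sub_mem]
    exact translate_lintegral (fun w => ENNReal.ofReal (‖w‖ ^ (-p))) measurableSet_ball x
  have h2 := lintegral_norm_rpow_scale (n := n) p hR
    (s := ball (0 : EuclideanSpace ℝ (Fin n)) R) (s₁ := ball (0 : EuclideanSpace ℝ (Fin n)) 1)
    measurableSet_ball measurableSet_ball
    (fun w => by
      simp only [mem_ball_zero_iff, norm_smul, Real.norm_eq_abs, abs_of_pos hR]
      exact mul_lt_iff_lt_one_right hR)
  rw [h1, h2, ← hK]
  have hKle : K ≤ ENNReal.ofReal (K.toReal + 1) :=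
    le_trans (le_of_eq (ENNReal.ofReal_toReal hKfin.ne).symm)
      (ENNReal.ofReal_le_ofReal (by linarith))
  calc ENNReal.ofReal (R ^ ((n:ℝ) - p)) * K
      ≤ ENNReal.ofReal (R ^ ((n:ℝ) - p)) * ENNReal.ofReal (K.toReal + 1) :=
        mul_le_mul_right hKle _
  _ = ENNReal.ofReal ((K.toReal + 1) * R ^ ((n:ℝ) - p)) := by
        rw [← ENNReal.ofReal_mul (by positivity), mul_comm]

/-- Finiteness of the exterior integral of ‖z‖^(-q), q > n. -/
lemma ext_one_finite (hq : (n:ℝ) < q) :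
    ∫⁻ z in (ball (0 : EuclideanSpace ℝ (Fin n)) 1)ᶜ, ENNReal.ofReal (‖z‖ ^ (-q)) < ⊤ := by
  have hq0 : 0 ≤ q := le_trans (Nat.cast_nonneg n) hq.le
  have hpt : ∀ z ∈ (ball (0 : EuclideanSpace ℝ (Fin n)) 1)ᶜ,
      ENNReal.ofReal (‖z‖ ^ (-q)) ≤ ENNReal.ofReal ((2:ℝ) ^ q * (1 + ‖z‖) ^ (-q)) := by
    intro z hz
    simp only [mem_compl_iff, mem_ball, dist_eq_norm, sub_zero, not_lt] at hz
    apply ENNReal.ofReal_le_ofReal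
    have h1 : (0:ℝ) < (1 + ‖z‖) / 2 := by positivity
    have h2 : (1 + ‖z‖) / 2 ≤ ‖z‖ := by linarith
    have h3 : ‖z‖ ^ (-q) ≤ ((1 + ‖z‖) / 2) ^ (-q) :=
      Real.rpow_le_rpow_of_nonpos h1 h2 (by linarith)
    calc ‖z‖ ^ (-q) ≤ ((1 + ‖z‖) / 2) ^ (-q) := h3
    _ = (2:ℝ) ^ q * (1 + ‖z‖) ^ (-q) := by
        rw [Real.div_rpow (by positivity) (by norm_num),
          Real.rpow_neg (by norm_num : (0:ℝ) ≤ 2), div_eq_mul_inv, inv_inv, mul_comm]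
  calc ∫⁻ z in (ball (0 : EuclideanSpace ℝ (Fin n)) 1)ᶜ, ENNReal.ofReal (‖z‖ ^ (-q))
      ≤ ∫⁻ z in (ball (0 : EuclideanSpace ℝ (Fin n)) 1)ᶜ,
          ENNReal.ofReal ((2:ℝ) ^ q * (1 + ‖z‖) ^ (-q)) :=
        setLIntegral_mono (by fun_prop) hpt
  _ ≤ ∫⁻ z, ENNReal.ofReal ((2:ℝ) ^ q * (1 + ‖z‖) ^ (-q)) := setLIntegral_le_lintegral _ _
  _ = ENNReal.ofReal ((2:ℝ) ^ q) * ∫⁻ z, ENNReal.ofReal ((1 + ‖z‖) ^ (-q)) := by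
        simp_rw [ENNReal.ofReal_mul (by positivity : (0:ℝ) ≤ (2:ℝ) ^ q)]
        exact lintegral_const_mul _ (by fun_prop)
  _ < ⊤ := by
        apply ENNReal.mul_lt_top ENNReal.ofReal_lt_top
        apply finite_integral_one_add_norm
        rwa [finrank_euclideanSpace_fin]

/-- Main exterior bound. -/
lemma ext_rpow_bound (hq : (n:ℝ) < q) :
    ∃ C : ℝ, 0 < C ∧ ∀ (x : EuclideanSpace ℝ (Fin n)) (R : ℝ), 0 < R →
      ∫⁻ z in (ball x R)ᶜ, ENNReal.ofReal (‖z - x‖ ^ (-q))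
        ≤ ENNReal.ofReal (C * R ^ ((n:ℝ) - q)) := by
  set K := ∫⁻ z in (ball (0 : EuclideanSpace ℝ (Fin n)) 1)ᶜ, ENNReal.ofReal (‖z‖ ^ (-q)) with hK
  have hKfin : K < ⊤ := ext_one_finite hq
  refine ⟨K.toReal + 1, by positivity, fun x R hR => ?_⟩
  have h1 : ∫⁻ z in (ball x R)ᶜ, ENNReal.ofReal (‖z - x‖ ^ (-q))
      = ∫⁻ w in (ball (0 : EuclideanSpace ℝ (Fin n)) R)ᶜ, ENNReal.ofReal (‖w‖ ^ (-q)) := by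
    rw [compl_ball_eq_sub_mem]
    exact translate_lintegral (fun w => ENNReal.ofReal (‖w‖ ^ (-q)))
      measurableSet_ball.compl x
  have h2 := lintegral_norm_rpow_scale (n := n) q hR
    (s := (ball (0 : EuclideanSpace ℝ (Fin n)) R)ᶜ)
    (s₁ := (ball (0 : EuclideanSpace ℝ (Fin n)) 1)ᶜ)
    measurableSet_ball.compl measurableSet_ball.compl
    (fun w => by
      simp only [mem_compl_iff, mem_ball_zero_iff, norm_smul, Real.norm_eq_abs,
        abs_of_pos hR, not_lt]
      exact le_mul_iff_one_le_right hR)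
  rw [h1, h2, ← hK]
  have hKle : K ≤ ENNReal.ofReal (K.toReal + 1) :=
    le_trans (le_of_eq (ENNReal.ofReal_toReal hKfin.ne).symm)
      (ENNReal.ofReal_le_ofReal (by linarith))
  calc ENNReal.ofReal (R ^ ((n:ℝ) - q)) * K
      ≤ ENNReal.ofReal (R ^ ((n:ℝ) - q)) * ENNReal.ofReal (K.toReal + 1) :=
        mul_le_mul_right hKle _
  _ = ENNReal.ofReal ((K.toReal + 1) * R ^ ((n:ℝ) - q)) := by
        rw [← ENNReal.ofReal_mul (by positivity), mul_comm]

/-- Global finiteness of the Japanese-bracket integral, s > n. -/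
lemma jp_global_finite (hs : (n:ℝ) < s) :
    ∫⁻ z : EuclideanSpace ℝ (Fin n), ENNReal.ofReal (jp z ^ (-s)) < ⊤ := by
  have hs0 : 0 ≤ s := le_trans (Nat.cast_nonneg n) hs.le
  have hpt : ∀ z : EuclideanSpace ℝ (Fin n),
      ENNReal.ofReal (jp z ^ (-s)) ≤
        ENNReal.ofReal ((Real.sqrt 2) ^ s * (1 + ‖z‖) ^ (-s)) := by
    intro z
    apply ENNReal.ofReal_le_ofReal
    have h1 : (1 + ‖z‖) / Real.sqrt 2 ≤ jp z := by
      rw [div_le_iff₀ (by positivity), mul_comm]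
      exact one_add_norm_le_sqrt_two_mul_sqrt z
    have h2 : (0:ℝ) < (1 + ‖z‖) / Real.sqrt 2 := by positivity
    calc jp z ^ (-s) ≤ ((1 + ‖z‖) / Real.sqrt 2) ^ (-s) :=
        Real.rpow_le_rpow_of_nonpos h2 h1 (by linarith)
    _ = (Real.sqrt 2) ^ s * (1 + ‖z‖) ^ (-s) := by
        rw [Real.div_rpow (by positivity) (Real.sqrt_nonneg 2),
          Real.rpow_neg (Real.sqrt_nonneg 2), div_eq_mul_inv, inv_inv, mul_comm]
  calc ∫⁻ z : EuclideanSpace ℝ (Fin n), ENNReal.ofReal (jp z ^ (-s))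
      ≤ ∫⁻ z, ENNReal.ofReal ((Real.sqrt 2) ^ s * (1 + ‖z‖) ^ (-s)) :=
        lintegral_mono hpt
  _ = ENNReal.ofReal ((Real.sqrt 2) ^ s) * ∫⁻ z, ENNReal.ofReal ((1 + ‖z‖) ^ (-s)) := by
        simp_rw [ENNReal.ofReal_mul (by positivity : (0:ℝ) ≤ (Real.sqrt 2) ^ s)]
        exact lintegral_const_mul _ (by fun_prop)
  _ < ⊤ := by
        apply ENNReal.mul_lt_top ENNReal.ofReal_lt_top
        apply finite_integral_one_add_norm
        rwa [finrank_euclideanSpace_fin]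

/-- Uniform bound for shifted bracket products: a,b ≥ 0, a+b > n. -/
lemma jp_shift_bound {a b : ℝ} (ha : 0 ≤ a) (hb : 0 ≤ b) (hab : (n:ℝ) < a + b) :
    ∃ C : ℝ, 0 < C ∧ ∀ x : EuclideanSpace ℝ (Fin n),
      ∫⁻ z, ENNReal.ofReal (jp z ^ (-a) * jp (z - x) ^ (-b)) ≤ ENNReal.ofReal C := by
  set K := ∫⁻ z : EuclideanSpace ℝ (Fin n), ENNReal.ofReal (jp z ^ (-(a+b))) with hKdef
  have hKfin : K < ⊤ := jp_global_finite hab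
  refine ⟨2 * K.toReal + 1, by positivity, fun x => ?_⟩
  have hpt : ∀ z : EuclideanSpace ℝ (Fin n),
      ENNReal.ofReal (jp z ^ (-a) * jp (z - x) ^ (-b))
      ≤ ENNReal.ofReal (jp z ^ (-(a+b))) + ENNReal.ofReal (jp (z - x) ^ (-(a+b))) := by
    intro z
    rw [← ENNReal.ofReal_add (jp_rpow_nonneg _ _) (jp_rpow_nonneg _ _)]
    exact ENNReal.ofReal_le_ofReal (jp_mul_le z (z - x) ha hb)
  have htrans : ∫⁻ z : EuclideanSpace ℝ (Fin n), ENNReal.ofReal (jp (z - x) ^ (-(a+b))) = K := by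
    have := lintegral_add_right_eq_self (μ := (volume : Measure (EuclideanSpace ℝ (Fin n))))
      (fun w : EuclideanSpace ℝ (Fin n) => ENNReal.ofReal (jp w ^ (-(a+b)))) (-x)
    rw [hKdef, ← this]
    simp_rw [sub_eq_add_neg]
  calc ∫⁻ z, ENNReal.ofReal (jp z ^ (-a) * jp (z - x) ^ (-b))
      ≤ ∫⁻ z, (ENNReal.ofReal (jp z ^ (-(a+b))) + ENNReal.ofReal (jp (z - x) ^ (-(a+b)))) :=
        lintegral_mono hpt
  _ = K + K := by
        rw [lintegral_add_left (by unfold jp; fun_prop), htrans]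
  _ ≤ ENNReal.ofReal (2 * K.toReal + 1) := by
        have hkK : K = ENNReal.ofReal K.toReal := (ENNReal.ofReal_toReal hKfin.ne).symm
        have h0 : 0 ≤ K.toReal := ENNReal.toReal_nonneg
        calc K + K = ENNReal.ofReal K.toReal + ENNReal.ofReal K.toReal := by rw [← hkK]
        _ = ENNReal.ofReal (K.toReal + K.toReal) := (ENNReal.ofReal_add h0 h0).symm
        _ ≤ ENNReal.ofReal (2 * K.toReal + 1) := ENNReal.ofReal_le_ofReal (by linarith)

/-- Bracket integral over a ball centered at the origin. -/
lemma jp_ball_zero (hn : 1 ≤ n) {s : ℝ} (hs0 : 0 < s) (hsn : s < n) :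
    ∃ C : ℝ, 0 < C ∧ ∀ R : ℝ, 0 < R →
      ∫⁻ z in ball (0 : EuclideanSpace ℝ (Fin n)) R, ENNReal.ofReal (jp z ^ (-s))
        ≤ ENNReal.ofReal (C * R ^ ((n:ℝ) - s)) := by
  haveI := nontrivial_euc hn
  obtain ⟨C, hC, hB⟩ := ball_rpow_bound hn hs0.le hsn
  refine ⟨C, hC, fun R hR => ?_⟩
  have hae : ∀ᵐ z ∂(volume.restrict (ball (0 : EuclideanSpace ℝ (Fin n)) R)),
      ENNReal.ofReal (jp z ^ (-s)) ≤ ENNReal.ofReal (‖z‖ ^ (-s)) := by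
    have h0 : ∀ᵐ z : EuclideanSpace ℝ (Fin n) ∂volume,
        ENNReal.ofReal (jp z ^ (-s)) ≤ ENNReal.ofReal (‖z‖ ^ (-s)) := by
      have hnull : volume ({0} : Set (EuclideanSpace ℝ (Fin n))) = 0 := measure_singleton 0
      refine measure_mono_null (fun z hz => ?_) hnull
      simp only [mem_compl_iff, mem_setOf_eq, not_le] at hz ⊢
      by_contra hz0
      apply absurd hz
      push_neg
      have hzn : (0:ℝ) < ‖z‖ := norm_pos_iff.2 hz0
      exact ENNReal.ofReal_le_ofReal
        (Real.rpow_le_rpow_of_nonpos hzn (norm_le_jp z) (by linarith))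
    exact Filter.Eventually.filter_mono (ae_mono Measure.restrict_le_self) h0
  calc ∫⁻ z in ball (0 : EuclideanSpace ℝ (Fin n)) R, ENNReal.ofReal (jp z ^ (-s))
      ≤ ∫⁻ z in ball (0 : EuclideanSpace ℝ (Fin n)) R, ENNReal.ofReal (‖z‖ ^ (-s)) :=
        lintegral_mono_ae hae
  _ ≤ ENNReal.ofReal (C * R ^ ((n:ℝ) - s)) := by
        have := hB 0 R hR
        simpa using this

/-- Bracket integral over an arbitrary ball. -/
lemma jp_ball_any (hn : 1 ≤ n) {s : ℝ} (hs0 : 0 < s) (hsn : s < n) :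
    ∃ C : ℝ, 0 < C ∧ ∀ (x : EuclideanSpace ℝ (Fin n)) (R : ℝ), 0 < R →
      ∫⁻ z in ball x R, ENNReal.ofReal (jp z ^ (-s))
        ≤ ENNReal.ofReal (C * R ^ ((n:ℝ) - s)) := by
  haveI := nontrivial_euc hn
  obtain ⟨C₀, hC₀, hB₀⟩ := jp_ball_zero hn hs0 hsn
  set V := (volume (ball (0 : EuclideanSpace ℝ (Fin n)) 1)).toReal with hV
  have hVnn : 0 ≤ V := ENNReal.toReal_nonneg
  refine ⟨C₀ * 2 ^ ((n:ℝ) - s) + 2 ^ (-s) * V, by positivity, fun x R hR => ?_⟩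
  have hsplit := lintegral_inter_add_diff (μ := (volume : Measure (EuclideanSpace ℝ (Fin n))))
    (fun z : EuclideanSpace ℝ (Fin n) => ENNReal.ofReal (jp z ^ (-s)))
    (ball x R) (measurableSet_ball (x := (0 : EuclideanSpace ℝ (Fin n))) (ε := 2 * R))
  have h1 : ∫⁻ z in ball x R ∩ ball (0 : EuclideanSpace ℝ (Fin n)) (2 * R),
      ENNReal.ofReal (jp z ^ (-s)) ≤ ENNReal.ofReal ((C₀ * 2 ^ ((n:ℝ) - s)) * R ^ ((n:ℝ) - s)) := by
    calc ∫⁻ z in ball x R ∩ ball (0 : EuclideanSpace ℝ (Fin n)) (2 * R),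
        ENNReal.ofReal (jp z ^ (-s))
        ≤ ∫⁻ z in ball (0 : EuclideanSpace ℝ (Fin n)) (2 * R), ENNReal.ofReal (jp z ^ (-s)) :=
          lintegral_mono_set inter_subset_right
    _ ≤ ENNReal.ofReal (C₀ * (2 * R) ^ ((n:ℝ) - s)) := hB₀ _ (by linarith)
    _ = ENNReal.ofReal ((C₀ * 2 ^ ((n:ℝ) - s)) * R ^ ((n:ℝ) - s)) := by
        rw [Real.mul_rpow (by norm_num) hR.le]; ring_nf
  have h2 : ∫⁻ z in ball x R \ ball (0 : EuclideanSpace ℝ (Fin n)) (2 * R),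
      ENNReal.ofReal (jp z ^ (-s)) ≤ ENNReal.ofReal ((2 ^ (-s) * V) * R ^ ((n:ℝ) - s)) := by
    have hpt : ∀ z ∈ ball x R \ ball (0 : EuclideanSpace ℝ (Fin n)) (2 * R),
        ENNReal.ofReal (jp z ^ (-s)) ≤ ENNReal.ofReal ((2 * R) ^ (-s)) := by
      intro z hz
      have hz2 : 2 * R ≤ ‖z‖ := by
        have := hz.2
        simpa [mem_ball_zero_iff, not_lt] using this
      have hjz : 2 * R ≤ jp z := le_trans hz2 (norm_le_jp z)
      exact ENNReal.ofReal_le_ofReal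
        (Real.rpow_le_rpow_of_nonpos (by linarith) hjz (by linarith))
    calc ∫⁻ z in ball x R \ ball (0 : EuclideanSpace ℝ (Fin n)) (2 * R),
        ENNReal.ofReal (jp z ^ (-s))
        ≤ ∫⁻ _ in ball x R \ ball (0 : EuclideanSpace ℝ (Fin n)) (2 * R),
            ENNReal.ofReal ((2 * R) ^ (-s)) := setLIntegral_mono measurable_const hpt
    _ = ENNReal.ofReal ((2 * R) ^ (-s)) *
          volume (ball x R \ ball (0 : EuclideanSpace ℝ (Fin n)) (2 * R)) := setLIntegral_const _ _
    _ ≤ ENNReal.ofReal ((2 * R) ^ (-s)) * volume (ball x R) :=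
          mul_le_mul_right (measure_mono diff_subset) _
    _ = ENNReal.ofReal ((2 * R) ^ (-s)) * ENNReal.ofReal (R ^ n * V) := by
          rw [Measure.addHaar_ball volume x hR.le, finrank_euclideanSpace_fin, hV,
            ENNReal.ofReal_mul (by positivity), ENNReal.ofReal_toReal measure_ball_lt_top.ne]
    _ = ENNReal.ofReal ((2 * R) ^ (-s) * (R ^ n * V)) := by
          rw [ENNReal.ofReal_mul (by positivity : (0:ℝ) ≤ (2*R) ^ (-s)),
            ENNReal.ofReal_mul (by positivity : (0:ℝ) ≤ R ^ n)]
    _ ≤ ENNReal.ofReal ((2 ^ (-s) * V) * R ^ ((n:ℝ) - s)) := by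
          apply ENNReal.ofReal_le_ofReal
          apply le_of_eq
          rw [Real.mul_rpow (by norm_num) hR.le, ← Real.rpow_natCast R n,
            Real.rpow_sub hR, Real.rpow_neg hR.le]
          field_simp
  calc ∫⁻ z in ball x R, ENNReal.ofReal (jp z ^ (-s))
      = _ + _ := hsplit.symm
  _ ≤ ENNReal.ofReal ((C₀ * 2 ^ ((n:ℝ) - s)) * R ^ ((n:ℝ) - s))
      + ENNReal.ofReal ((2 ^ (-s) * V) * R ^ ((n:ℝ) - s)) := add_le_add h1 h2
  _ = ENNReal.ofReal ((C₀ * 2 ^ ((n:ℝ) - s) + 2 ^ (-s) * V) * R ^ ((n:ℝ) - s)) := by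
      rw [← ENNReal.ofReal_add (by positivity) (by positivity)]; ring_nf

lemma one_le_two_rho_rpow {ρ t : ℝ} (hρ : 1/2 ≤ ρ) (ht : 0 ≤ t) : 1 ≤ 2 ^ t * ρ ^ t := by
  have h2ρ : 1 ≤ 2 * ρ := by linarith
  have : (1:ℝ) ≤ (2 * ρ) ^ t := Real.one_le_rpow h2ρ ht
  rwa [Real.mul_rpow (by norm_num) (by linarith : (0:ℝ) ≤ ρ)] at this

/-- The "near" bound: integral of jp z ^(-a) * ‖z-x‖^(-k) over a ball of radius ρ ≥ 1/2. -/
lemma near_bound (hn : 1 ≤ n) {k a t : ℝ} (hk0 : 0 ≤ k) (hkn : k < n) (ha : 0 < a)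
    (ht0 : 0 ≤ t) (htn : t < n) (hsum : (n:ℝ) < a + k + t)
    (hc : a + k ≤ n → 0 < t) :
    ∃ C : ℝ, 0 < C ∧ ∀ (x : EuclideanSpace ℝ (Fin n)) (ρ : ℝ), 1/2 ≤ ρ →
      ∫⁻ z in ball x ρ, ENNReal.ofReal (jp z ^ (-a) * ‖z - x‖ ^ (-k))
        ≤ ENNReal.ofReal (C * ρ ^ t) := by
  obtain ⟨C₁, hC₁, hB₁⟩ := ball_rpow_bound hn hk0 hkn
  -- part 1 : over ball x ρ ∩ ball x 1
  have part1 : ∀ (x : EuclideanSpace ℝ (Fin n)) (ρ : ℝ), 1/2 ≤ ρ →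
      ∫⁻ z in ball x ρ ∩ ball x 1, ENNReal.ofReal (jp z ^ (-a) * ‖z - x‖ ^ (-k))
        ≤ ENNReal.ofReal ((C₁ * 2 ^ t) * ρ ^ t) := by
    intro x ρ hρ
    have hpt : ∀ z ∈ ball x ρ ∩ ball x 1,
        ENNReal.ofReal (jp z ^ (-a) * ‖z - x‖ ^ (-k)) ≤ ENNReal.ofReal (‖z - x‖ ^ (-k)) := by
      intro z _
      apply ENNReal.ofReal_le_ofReal
      calc jp z ^ (-a) * ‖z - x‖ ^ (-k) ≤ 1 * ‖z - x‖ ^ (-k) :=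
        mul_le_mul_of_nonneg_right (jp_rpow_le_one z ha.le) (Real.rpow_nonneg (norm_nonneg _) _)
      _ = ‖z - x‖ ^ (-k) := one_mul _
    calc ∫⁻ z in ball x ρ ∩ ball x 1, ENNReal.ofReal (jp z ^ (-a) * ‖z - x‖ ^ (-k))
        ≤ ∫⁻ z in ball x ρ ∩ ball x 1, ENNReal.ofReal (‖z - x‖ ^ (-k)) :=
          setLIntegral_mono (by fun_prop) hpt
    _ ≤ ∫⁻ z in ball x 1, ENNReal.ofReal (‖z - x‖ ^ (-k)) :=
          lintegral_mono_set inter_subset_right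
    _ ≤ ENNReal.ofReal (C₁ * 1 ^ ((n:ℝ) - k)) := hB₁ x 1 one_pos
    _ ≤ ENNReal.ofReal ((C₁ * 2 ^ t) * ρ ^ t) := by
          apply ENNReal.ofReal_le_ofReal
          rw [Real.one_rpow, mul_one]
          have := one_le_two_rho_rpow hρ ht0
          nlinarith [Real.rpow_nonneg (show (0:ℝ) ≤ 2 by norm_num) t,
            Real.rpow_nonneg (show (0:ℝ) ≤ ρ by linarith) t]
  -- part 2 : over (ball x ρ) \ ball x 1
  rcases lt_or_ge (n:ℝ) (a + k) with hak | hak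
  · -- a + k > n : uniform bound on the shell
    obtain ⟨C₂, hC₂, hB₂⟩ := jp_shift_bound (n := n) ha.le hk0 hak
    refine ⟨C₁ * 2 ^ t + Real.sqrt 5 ^ k * C₂ * 2 ^ t, by positivity, fun x ρ hρ => ?_⟩
    have hρ0 : (0:ℝ) < ρ := by linarith
    have part2 : ∫⁻ z in ball x ρ \ ball x 1, ENNReal.ofReal (jp z ^ (-a) * ‖z - x‖ ^ (-k))
        ≤ ENNReal.ofReal ((Real.sqrt 5 ^ k * C₂) * 1) := by
      have hpt : ∀ z ∈ ball x ρ \ ball x 1,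
          ENNReal.ofReal (jp z ^ (-a) * ‖z - x‖ ^ (-k))
          ≤ ENNReal.ofReal (Real.sqrt 5 ^ k * (jp z ^ (-a) * jp (z - x) ^ (-k))) := by
        intro z hz
        have h1 : (1:ℝ) ≤ ‖z - x‖ := by
          have := hz.2
          simpa [mem_ball, dist_eq_norm, not_lt] using this
        apply ENNReal.ofReal_le_ofReal
        have h2 : ‖z - x‖ ^ (-k) ≤ Real.sqrt 5 ^ k * jp (z - x) ^ (-k) :=
          norm_rpow_le_jp (z - x) hk0 (by linarith)
        calc jp z ^ (-a) * ‖z - x‖ ^ (-k)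
            ≤ jp z ^ (-a) * (Real.sqrt 5 ^ k * jp (z - x) ^ (-k)) :=
              mul_le_mul_of_nonneg_left h2 (jp_rpow_nonneg z _)
        _ = Real.sqrt 5 ^ k * (jp z ^ (-a) * jp (z - x) ^ (-k)) := by ring
      calc ∫⁻ z in ball x ρ \ ball x 1, ENNReal.ofReal (jp z ^ (-a) * ‖z - x‖ ^ (-k))
          ≤ ∫⁻ z in ball x ρ \ ball x 1,
              ENNReal.ofReal (Real.sqrt 5 ^ k * (jp z ^ (-a) * jp (z - x) ^ (-k))) :=
            setLIntegral_mono (by unfold jp; fun_prop) hpt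
      _ ≤ ∫⁻ z, ENNReal.ofReal (Real.sqrt 5 ^ k * (jp z ^ (-a) * jp (z - x) ^ (-k))) :=
            setLIntegral_le_lintegral _ _
      _ = ENNReal.ofReal (Real.sqrt 5 ^ k) * ∫⁻ z, ENNReal.ofReal (jp z ^ (-a) * jp (z - x) ^ (-k)) := by
            simp_rw [ENNReal.ofReal_mul (by positivity : (0:ℝ) ≤ Real.sqrt 5 ^ k)]
            exact lintegral_const_mul _ (by unfold jp; fun_prop)
      _ ≤ ENNReal.ofReal (Real.sqrt 5 ^ k) * ENNReal.ofReal C₂ := mul_le_mul_right (hB₂ x) _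
      _ = ENNReal.ofReal ((Real.sqrt 5 ^ k * C₂) * 1) := by
            rw [← ENNReal.ofReal_mul (by positivity), mul_one]
    calc ∫⁻ z in ball x ρ, ENNReal.ofReal (jp z ^ (-a) * ‖z - x‖ ^ (-k))
        = (∫⁻ z in ball x ρ ∩ ball x 1, ENNReal.ofReal (jp z ^ (-a) * ‖z - x‖ ^ (-k)))
          + ∫⁻ z in ball x ρ \ ball x 1, ENNReal.ofReal (jp z ^ (-a) * ‖z - x‖ ^ (-k)) :=
          (lintegral_inter_add_diff (μ := (volume : Measure (EuclideanSpace ℝ (Fin n)))) _ _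
            measurableSet_ball).symm
    _ ≤ ENNReal.ofReal ((C₁ * 2 ^ t) * ρ ^ t) + ENNReal.ofReal ((Real.sqrt 5 ^ k * C₂) * 1) :=
          add_le_add (part1 x ρ hρ) part2
    _ ≤ ENNReal.ofReal ((C₁ * 2 ^ t) * ρ ^ t)
          + ENNReal.ofReal ((Real.sqrt 5 ^ k * C₂ * 2 ^ t) * ρ ^ t) := by
          apply add_le_add_right
          apply ENNReal.ofReal_le_ofReal
          have h1 := one_le_two_rho_rpow hρ ht0
          have h2 : (0:ℝ) ≤ Real.sqrt 5 ^ k * C₂ := by positivity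
          have h3 := mul_le_mul_of_nonneg_left h1 h2
          have h4 : Real.sqrt 5 ^ k * C₂ * (2 ^ t * ρ ^ t)
              = Real.sqrt 5 ^ k * C₂ * 2 ^ t * ρ ^ t := by ring
          linarith
    _ = ENNReal.ofReal ((C₁ * 2 ^ t + Real.sqrt 5 ^ k * C₂ * 2 ^ t) * ρ ^ t) := by
          rw [← ENNReal.ofReal_add (by positivity) (by positivity)]; ring_nf
  · -- a + k ≤ n : use s = n - t
    set s := (n:ℝ) - t with hs
    have hst : (n:ℝ) - s = t := by rw [hs]; ring
    have hs0 : 0 < s := by rw [hs]; linarith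
    have hsn : s < n := by rw [hs]; linarith [hc hak]
    have hsak : s ≤ a + k := by rw [hs]; linarith
    obtain ⟨C₃, hC₃, hB₃⟩ := jp_ball_any hn hs0 hsn
    refine ⟨C₁ * 2 ^ t + Real.sqrt 5 ^ k * (2 * C₃), by positivity, fun x ρ hρ => ?_⟩
    have hρ0 : (0:ℝ) < ρ := by linarith
    have part2 : ∫⁻ z in ball x ρ \ ball x 1, ENNReal.ofReal (jp z ^ (-a) * ‖z - x‖ ^ (-k))
        ≤ ENNReal.ofReal ((Real.sqrt 5 ^ k * (2 * C₃)) * ρ ^ t) := by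
      have hpt : ∀ z ∈ ball x ρ \ ball x 1,
          ENNReal.ofReal (jp z ^ (-a) * ‖z - x‖ ^ (-k))
          ≤ ENNReal.ofReal (Real.sqrt 5 ^ k * (jp z ^ (-s) + jp (z - x) ^ (-s))) := by
        intro z hz
        have h1 : (1:ℝ) ≤ ‖z - x‖ := by
          have := hz.2
          simpa [mem_ball, dist_eq_norm, not_lt] using this
        apply ENNReal.ofReal_le_ofReal
        have h2 : ‖z - x‖ ^ (-k) ≤ Real.sqrt 5 ^ k * jp (z - x) ^ (-k) :=
          norm_rpow_le_jp (z - x) hk0 (by linarith)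
        have h3 : jp z ^ (-a) * jp (z - x) ^ (-k) ≤ jp z ^ (-(a+k)) + jp (z - x) ^ (-(a+k)) :=
          jp_mul_le z (z - x) ha.le hk0
        have h4 : jp z ^ (-(a+k)) ≤ jp z ^ (-s) :=
          Real.rpow_le_rpow_of_exponent_le (jp_one_le z) (by linarith)
        have h5 : jp (z - x) ^ (-(a+k)) ≤ jp (z - x) ^ (-s) :=
          Real.rpow_le_rpow_of_exponent_le (jp_one_le (z - x)) (by linarith)
        calc jp z ^ (-a) * ‖z - x‖ ^ (-k)
            ≤ jp z ^ (-a) * (Real.sqrt 5 ^ k * jp (z - x) ^ (-k)) :=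
              mul_le_mul_of_nonneg_left h2 (jp_rpow_nonneg z _)
        _ = Real.sqrt 5 ^ k * (jp z ^ (-a) * jp (z - x) ^ (-k)) := by ring
        _ ≤ Real.sqrt 5 ^ k * (jp z ^ (-s) + jp (z - x) ^ (-s)) := by
              apply mul_le_mul_of_nonneg_left _ (by positivity)
              linarith
      have htr : ∫⁻ z in ball x ρ, ENNReal.ofReal (jp (z - x) ^ (-s))
          = ∫⁻ w in ball (0 : EuclideanSpace ℝ (Fin n)) ρ, ENNReal.ofReal (jp w ^ (-s)) := by
        rw [ball_eq_sub_mem]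
        exact translate_lintegral (fun w => ENNReal.ofReal (jp w ^ (-s))) measurableSet_ball x
      calc ∫⁻ z in ball x ρ \ ball x 1, ENNReal.ofReal (jp z ^ (-a) * ‖z - x‖ ^ (-k))
          ≤ ∫⁻ z in ball x ρ \ ball x 1,
              ENNReal.ofReal (Real.sqrt 5 ^ k * (jp z ^ (-s) + jp (z - x) ^ (-s))) :=
            setLIntegral_mono (by unfold jp; fun_prop) hpt
      _ ≤ ∫⁻ z in ball x ρ,
              ENNReal.ofReal (Real.sqrt 5 ^ k * (jp z ^ (-s) + jp (z - x) ^ (-s))) :=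
            lintegral_mono_set diff_subset
      _ = ENNReal.ofReal (Real.sqrt 5 ^ k) *
            ∫⁻ z in ball x ρ, ENNReal.ofReal (jp z ^ (-s) + jp (z - x) ^ (-s)) := by
            simp_rw [ENNReal.ofReal_mul (by positivity : (0:ℝ) ≤ Real.sqrt 5 ^ k)]
            exact lintegral_const_mul _ (by unfold jp; fun_prop)
      _ = ENNReal.ofReal (Real.sqrt 5 ^ k) *
            ((∫⁻ z in ball x ρ, ENNReal.ofReal (jp z ^ (-s)))
              + ∫⁻ z in ball x ρ, ENNReal.ofReal (jp (z - x) ^ (-s))) := by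
            congr 1
            simp_rw [ENNReal.ofReal_add (jp_rpow_nonneg _ _) (jp_rpow_nonneg _ _)]
            exact lintegral_add_left (by unfold jp; fun_prop) _
      _ ≤ ENNReal.ofReal (Real.sqrt 5 ^ k) *
            (ENNReal.ofReal (C₃ * ρ ^ t) + ENNReal.ofReal (C₃ * ρ ^ t)) := by
            apply mul_le_mul_right
            apply add_le_add
            · have := hB₃ x ρ hρ0
              rwa [hst] at this
            · rw [htr]
              have := hB₃ 0 ρ hρ0
              rwa [hst] at this
      _ = ENNReal.ofReal ((Real.sqrt 5 ^ k * (2 * C₃)) * ρ ^ t) := by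
            rw [← ENNReal.ofReal_add (by positivity) (by positivity),
              ← ENNReal.ofReal_mul (by positivity : (0:ℝ) ≤ Real.sqrt 5 ^ k)]
            ring_nf
    calc ∫⁻ z in ball x ρ, ENNReal.ofReal (jp z ^ (-a) * ‖z - x‖ ^ (-k))
        = (∫⁻ z in ball x ρ ∩ ball x 1, ENNReal.ofReal (jp z ^ (-a) * ‖z - x‖ ^ (-k)))
          + ∫⁻ z in ball x ρ \ ball x 1, ENNReal.ofReal (jp z ^ (-a) * ‖z - x‖ ^ (-k)) :=
          (lintegral_inter_add_diff (μ := (volume : Measure (EuclideanSpace ℝ (Fin n)))) _ _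
            measurableSet_ball).symm
    _ ≤ ENNReal.ofReal ((C₁ * 2 ^ t) * ρ ^ t) + ENNReal.ofReal ((Real.sqrt 5 ^ k * (2 * C₃)) * ρ ^ t) :=
          add_le_add (part1 x ρ hρ) part2
    _ = ENNReal.ofReal ((C₁ * 2 ^ t + Real.sqrt 5 ^ k * (2 * C₃)) * ρ ^ t) := by
          rw [← ENNReal.ofReal_add (by positivity) (by positivity)]; ring_nf

lemma mul3_le {u v w u' v' w' : ℝ} (h1 : u ≤ u') (h2 : v ≤ v') (h3 : w ≤ w')
    (hu : 0 ≤ u) (hv : 0 ≤ v) (hw : 0 ≤ w) (hu' : 0 ≤ u') (hv' : 0 ≤ v') :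
    u * v * w ≤ u' * v' * w' :=
  mul_le_mul (mul_le_mul h1 h2 hv hu') h3 hw (by positivity)

lemma div_rpow_eq {r c e : ℝ} (hr : 0 ≤ r) (hc : 0 < c) : (r/c) ^ e = r ^ e * c ^ (-e) := by
  rw [Real.div_rpow hr hc.le, Real.rpow_neg hc.le, div_eq_mul_inv]

lemma set_bound {G : EuclideanSpace ℝ (Fin n) → ENNReal} {g : EuclideanSpace ℝ (Fin n) → ℝ}
    {S : Set (EuclideanSpace ℝ (Fin n))} {c : ℝ} (hc : 0 ≤ c) (hg : Measurable g)
    (hpt : ∀ z ∈ S, G z ≤ ENNReal.ofReal (c * g z)) :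
    ∫⁻ z in S, G z ≤ ENNReal.ofReal c * ∫⁻ z in S, ENNReal.ofReal (g z) := by
  calc ∫⁻ z in S, G z ≤ ∫⁻ z in S, ENNReal.ofReal (c * g z) :=
        setLIntegral_mono ((measurable_const.mul hg).ennreal_ofReal) hpt
  _ = ∫⁻ z in S, ENNReal.ofReal c * ENNReal.ofReal (g z) := by simp_rw [ENNReal.ofReal_mul hc]
  _ = ENNReal.ofReal c * ∫⁻ z in S, ENNReal.ofReal (g z) :=
        lintegral_const_mul _ hg.ennreal_ofReal

end Aux

set_option maxHeartbeats 2000000 in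
open ENNReal in
theorem stmt2 (n : ℕ) (hn : 1 ≤ n) (k l δ ε : ℝ)
    (hk0 : 0 ≤ k) (hkn : k < n) (hl0 : 0 ≤ l) (hln : l < n)
    (hδ : 0 < δ) (hε : 0 < ε) (hsum : (n : ℝ) ≤ k + l + δ) (hne : k + l ≠ (n : ℝ)) :
    ∃ C : ℝ, 0 < C ∧ ∀ x y : EuclideanSpace ℝ (Fin n), x ≠ y →
      ((‖x - y‖ < 1 →
        (∫⁻ z, ENNReal.ofReal
            (Real.sqrt (1 + ‖z‖ ^ 2) ^ (-(δ + ε)) * ‖z - x‖ ^ (-k) * ‖y - z‖ ^ (-l)))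
          ≤ ENNReal.ofReal (C * ‖x - y‖ ^ (-(max 0 (k + l - n))))) ∧
      (1 ≤ ‖x - y‖ →
        (∫⁻ z, ENNReal.ofReal
            (Real.sqrt (1 + ‖z‖ ^ 2) ^ (-(δ + ε)) * ‖z - x‖ ^ (-k) * ‖y - z‖ ^ (-l)))
          ≤ ENNReal.ofReal (C * ‖x - y‖ ^ (-(min k (min l (k + l + δ - n))))))) := by
  classical
  have ha : 0 < δ + ε := by linarith
  set m := min k (min l (k + l + δ - (n:ℝ))) with hm
  have hm0 : 0 ≤ m := le_min hk0 (le_min hl0 (by linarith))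
  have hmk : m ≤ k := min_le_left _ _
  have hml : m ≤ l := le_trans (min_le_right _ _) (min_le_left _ _)
  have hmδ : m ≤ k + l + δ - n := le_trans (min_le_right _ _) (min_le_right _ _)
  obtain ⟨CA, hCA, hA⟩ := near_bound hn (k := k) (a := δ + ε) (t := l - m) hk0 hkn ha
    (by linarith) (by linarith) (by linarith) (fun h => by linarith)
  obtain ⟨CB, hCB, hBn⟩ := near_bound hn (k := l) (a := δ + ε) (t := k - m) hl0 hln ha
    (by linarith) (by linarith) (by linarith) (fun h => by linarith)
  obtain ⟨CK, hCK, hK⟩ := ball_rpow_bound hn hk0 hkn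
  obtain ⟨CL, hCL, hL⟩ := ball_rpow_bound hn hl0 hln
  obtain ⟨CF, hCF, hF⟩ := jp_shift_bound (n := n) (a := δ + ε) (b := k + l - m) ha.le
    (by linarith) (by linarith)
  obtain ⟨CU, hCU, hU⟩ := jp_shift_bound (n := n) (a := δ + ε) (b := k + l) ha.le
    (by linarith) (by linarith)
  obtain ⟨CM, hCM, hmid⟩ : ∃ CM : ℝ, 0 < CM ∧ ∀ (x : EuclideanSpace ℝ (Fin n)) (r : ℝ),
      0 < r → r < 1 →
      ∫⁻ z in (ball x (r/2))ᶜ ∩ ball x 1, ENNReal.ofReal (‖z - x‖ ^ (-(k+l)))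
        ≤ ENNReal.ofReal (CM * r ^ (-(max 0 (k + l - (n:ℝ))))) := by
    rcases hne.lt_or_gt with hkl | hkl
    · obtain ⟨C0, hC0, hb⟩ := ball_rpow_bound hn (by linarith : (0:ℝ) ≤ k + l) (by linarith)
      refine ⟨C0, hC0, fun x r hr0 hr1 => ?_⟩
      have hmax : max 0 (k + l - (n:ℝ)) = 0 := max_eq_left (by linarith)
      rw [hmax, neg_zero, Real.rpow_zero, mul_one]
      calc ∫⁻ z in (ball x (r/2))ᶜ ∩ ball x 1, ENNReal.ofReal (‖z - x‖ ^ (-(k+l)))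
          ≤ ∫⁻ z in ball x 1, ENNReal.ofReal (‖z - x‖ ^ (-(k+l))) :=
            lintegral_mono_set inter_subset_right
      _ ≤ ENNReal.ofReal (C0 * 1 ^ ((n:ℝ) - (k+l))) := hb x 1 one_pos
      _ = ENNReal.ofReal C0 := by rw [Real.one_rpow, mul_one]
    · obtain ⟨C0, hC0, hb⟩ := ext_rpow_bound (n := n) (q := k + l) hkl
      refine ⟨C0 * 2 ^ (k + l - (n:ℝ)), by positivity, fun x r hr0 hr1 => ?_⟩
      have hmax : max 0 (k + l - (n:ℝ)) = k + l - (n:ℝ) := max_eq_right (by linarith)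
      calc ∫⁻ z in (ball x (r/2))ᶜ ∩ ball x 1, ENNReal.ofReal (‖z - x‖ ^ (-(k+l)))
          ≤ ∫⁻ z in (ball x (r/2))ᶜ, ENNReal.ofReal (‖z - x‖ ^ (-(k+l))) :=
            lintegral_mono_set inter_subset_left
      _ ≤ ENNReal.ofReal (C0 * (r/2) ^ ((n:ℝ) - (k+l))) := hb x (r/2) (by linarith)
      _ = ENNReal.ofReal ((C0 * 2 ^ (k + l - (n:ℝ))) * r ^ (-(max 0 (k + l - (n:ℝ))))) := by
            congr 1
            rw [hmax, show ((n:ℝ) - (k+l)) = -(k + l - (n:ℝ)) by ring, div_rpow_eq hr0.le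
              (by norm_num : (0:ℝ) < 2), neg_neg]
            ring
  set C1 : ℝ := CK * 2 ^ (n:ℝ) + CL * 2 ^ (n:ℝ)
    + 3 ^ l * (CM + Real.sqrt 5 ^ (k+l) * CU) with hC1def
  set C2 : ℝ := CA * 2 ^ (n:ℝ) + CB * 2 ^ (n:ℝ)
    + 3 ^ l * Real.sqrt 5 ^ (k+l) * 2 ^ (n:ℝ) * CF with hC2def
  have hC1 : 0 < C1 := by positivity
  have hC2 : 0 < C2 := by positivity
  refine ⟨C1 + C2, by positivity, fun x y hxy => ?_⟩
  have hr0 : 0 < ‖x - y‖ := by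
    rw [norm_pos_iff]
    exact sub_ne_zero.2 hxy
  set r := ‖x - y‖ with hrdef
  have hρ : 0 < r/2 := by linarith
  set G : EuclideanSpace ℝ (Fin n) → ENNReal := fun z =>
    ENNReal.ofReal (jp z ^ (-(δ + ε)) * ‖z - x‖ ^ (-k) * ‖y - z‖ ^ (-l)) with hGdef
  have hGm : Measurable G := by rw [hGdef]; unfold jp; fun_prop
  -- geometry
  have tri : ∀ u v w : EuclideanSpace ℝ (Fin n), ‖u - w‖ ≤ ‖u - v‖ + ‖v - w‖ := fun u v w => by
    simpa [dist_eq_norm] using dist_triangle u v w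
  have geomA : ∀ z ∈ ball x (r/2), r/2 ≤ ‖y - z‖ := by
    intro z hz
    rw [mem_ball, dist_eq_norm] at hz
    have h := tri x z y
    rw [norm_sub_rev x z, norm_sub_rev z y] at h
    linarith
  have geomB : ∀ z ∈ ball y (r/2), r/2 ≤ ‖z - x‖ := by
    intro z hz
    rw [mem_ball, dist_eq_norm] at hz
    have h := tri x z y
    rw [norm_sub_rev x z] at h
    linarith
  have geomD : ∀ z ∈ (ball x (r/2))ᶜ \ ball y (r/2),
      r/2 ≤ ‖z - x‖ ∧ ‖z - x‖/3 ≤ ‖y - z‖ := by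
    intro z hz
    obtain ⟨hz1, hz2⟩ := hz
    rw [mem_compl_iff, mem_ball, dist_eq_norm, not_lt] at hz1
    rw [mem_ball, dist_eq_norm, not_lt] at hz2
    have h := tri z y x
    rw [norm_sub_rev y x] at h
    have hyz : ‖y - z‖ = ‖z - y‖ := norm_sub_rev y z
    constructor
    · exact hz1
    · rw [hyz]; linarith
  -- pointwise D bound
  have hptD : ∀ z ∈ (ball x (r/2))ᶜ \ ball y (r/2),
      G z ≤ ENNReal.ofReal ((3:ℝ) ^ l * (jp z ^ (-(δ + ε)) * ‖z - x‖ ^ (-(k+l)))) := by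
    intro z hz
    obtain ⟨hzx, hzy⟩ := geomD z hz
    have hzx0 : (0:ℝ) < ‖z - x‖ := by linarith
    rw [hGdef]
    apply ENNReal.ofReal_le_ofReal
    have e2 : ‖y - z‖ ^ (-l) ≤ (3:ℝ) ^ l * ‖z - x‖ ^ (-l) := by
      have h1 : ‖y - z‖ ^ (-l) ≤ (‖z - x‖/3) ^ (-l) :=
        Real.rpow_le_rpow_of_nonpos (by linarith) hzy (by linarith)
      have h2 : (‖z - x‖/3) ^ (-l) = ‖z - x‖ ^ (-l) * (3:ℝ) ^ l := by
        rw [div_rpow_eq (norm_nonneg _) (by norm_num : (0:ℝ) < 3), neg_neg]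
      linarith [h1, h2.le, h2.ge]
    have hnm : ‖z - x‖ ^ (-k) * ‖z - x‖ ^ (-l) = ‖z - x‖ ^ (-(k+l)) := by
      rw [← Real.rpow_add hzx0]; congr 1; ring
    calc jp z ^ (-(δ + ε)) * ‖z - x‖ ^ (-k) * ‖y - z‖ ^ (-l)
        ≤ jp z ^ (-(δ + ε)) * ‖z - x‖ ^ (-k) * ((3:ℝ) ^ l * ‖z - x‖ ^ (-l)) :=
          mul_le_mul_of_nonneg_left e2
            (mul_nonneg (jp_rpow_nonneg z _) (Real.rpow_nonneg (norm_nonneg _) _))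
    _ = (3:ℝ) ^ l * (jp z ^ (-(δ + ε)) * (‖z - x‖ ^ (-k) * ‖z - x‖ ^ (-l))) := by ring
    _ = (3:ℝ) ^ l * (jp z ^ (-(δ + ε)) * ‖z - x‖ ^ (-(k+l))) := by rw [hnm]
  -- the splitting skeleton
  have hsplit : ∫⁻ z, G z = (∫⁻ z in ball x (r/2), G z)
      + ((∫⁻ z in (ball x (r/2))ᶜ ∩ ball y (r/2), G z)
        + ∫⁻ z in (ball x (r/2))ᶜ \ ball y (r/2), G z) := by
    rw [lintegral_inter_add_diff (μ := (volume : Measure (EuclideanSpace ℝ (Fin n)))) G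
      ((ball x (r/2))ᶜ) measurableSet_ball,
      lintegral_add_compl G (measurableSet_ball (x := x) (ε := r/2))]
  constructor
  · -- case r < 1
    intro hr1
    show ∫⁻ z, G z ≤ ENNReal.ofReal ((C1 + C2) * r ^ (-(max 0 (k + l - (n:ℝ)))))
    set T := r ^ (-(max 0 (k + l - (n:ℝ)))) with hT
    have hT0 : 0 < T := Real.rpow_pos_of_pos hr0 _
    have hT1 : 1 ≤ T := by
      have := Real.rpow_le_rpow_of_exponent_ge hr0 hr1.le
        (neg_nonpos.2 (le_max_left 0 (k + l - (n:ℝ))) : -(max 0 (k + l - (n:ℝ))) ≤ 0)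
      rwa [Real.rpow_zero] at this
    have hpow1 : (r/2) ^ ((n:ℝ) - k - l) ≤ 2 ^ (n:ℝ) * T := by
      rcases hne.lt_or_gt with hkl | hkl
      · have hmax : max 0 (k + l - (n:ℝ)) = 0 := max_eq_left (by linarith)
        have h1 : (r/2) ^ ((n:ℝ) - k - l) ≤ 1 :=
          Real.rpow_le_one (by linarith) (by linarith) (by linarith)
        have h2 : (1:ℝ) ≤ 2 ^ (n:ℝ) := Real.one_le_rpow one_le_two (by positivity)
        rw [hT, hmax, neg_zero, Real.rpow_zero, mul_one]
        linarith
      · have hmax : max 0 (k + l - (n:ℝ)) = k + l - (n:ℝ) := max_eq_right (by linarith)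
        have he : (r/2) ^ ((n:ℝ) - k - l) = r ^ (-(k + l - (n:ℝ))) * 2 ^ (k + l - (n:ℝ)) := by
          rw [show ((n:ℝ) - k - l) = -(k + l - (n:ℝ)) by ring,
            div_rpow_eq hr0.le (by norm_num : (0:ℝ) < 2), neg_neg]
        have h2 : (2:ℝ) ^ (k + l - (n:ℝ)) ≤ 2 ^ (n:ℝ) :=
          Real.rpow_le_rpow_of_exponent_le one_le_two (by linarith)
        rw [he, hT, hmax]
        have h3 : (0:ℝ) ≤ r ^ (-(k + l - (n:ℝ))) := Real.rpow_nonneg hr0.le _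
        nlinarith
    -- piece A
    have pieceA : ∫⁻ z in ball x (r/2), G z ≤ ENNReal.ofReal ((CK * 2 ^ (n:ℝ)) * T) := by
      have hpt : ∀ z ∈ ball x (r/2),
          G z ≤ ENNReal.ofReal ((r/2) ^ (-l) * ‖z - x‖ ^ (-k)) := by
        intro z hz
        have hyz := geomA z hz
        rw [hGdef]
        apply ENNReal.ofReal_le_ofReal
        have e1 : jp z ^ (-(δ + ε)) ≤ 1 := jp_rpow_le_one z ha.le
        have e2 : ‖y - z‖ ^ (-l) ≤ (r/2) ^ (-l) :=
          Real.rpow_le_rpow_of_nonpos hρ hyz (by linarith)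
        calc jp z ^ (-(δ + ε)) * ‖z - x‖ ^ (-k) * ‖y - z‖ ^ (-l)
            ≤ 1 * ‖z - x‖ ^ (-k) * ((r/2) ^ (-l)) :=
              mul3_le e1 le_rfl e2 (jp_rpow_nonneg z _) (Real.rpow_nonneg (norm_nonneg _) _)
                (Real.rpow_nonneg (norm_nonneg _) _) zero_le_one
                (Real.rpow_nonneg (norm_nonneg _) _)
        _ = (r/2) ^ (-l) * ‖z - x‖ ^ (-k) := by ring
      calc ∫⁻ z in ball x (r/2), G z
          ≤ ENNReal.ofReal ((r/2) ^ (-l)) * ∫⁻ z in ball x (r/2), ENNReal.ofReal (‖z - x‖ ^ (-k)) :=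
            set_bound (Real.rpow_nonneg hρ.le _) (by fun_prop) hpt
      _ ≤ ENNReal.ofReal ((r/2) ^ (-l)) * ENNReal.ofReal (CK * (r/2) ^ ((n:ℝ) - k)) :=
            mul_le_mul_right (hK x (r/2) hρ) _
      _ = ENNReal.ofReal (CK * (r/2) ^ ((n:ℝ) - k - l)) := by
            rw [← ENNReal.ofReal_mul (Real.rpow_nonneg hρ.le _)]
            congr 1
            rw [show ((n:ℝ) - k - l) = -l + ((n:ℝ) - k) by ring, Real.rpow_add hρ]
            ring
      _ ≤ ENNReal.ofReal ((CK * 2 ^ (n:ℝ)) * T) := by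
            apply ENNReal.ofReal_le_ofReal
            nlinarith [Real.rpow_nonneg (le_of_lt hρ) ((n:ℝ) - k - l)]
    -- piece B
    have pieceB : ∫⁻ z in (ball x (r/2))ᶜ ∩ ball y (r/2), G z
        ≤ ENNReal.ofReal ((CL * 2 ^ (n:ℝ)) * T) := by
      have hpt : ∀ z ∈ ball y (r/2),
          G z ≤ ENNReal.ofReal ((r/2) ^ (-k) * ‖z - y‖ ^ (-l)) := by
        intro z hz
        have hzx := geomB z hz
        rw [hGdef]
        apply ENNReal.ofReal_le_ofReal
        have e1 : jp z ^ (-(δ + ε)) ≤ 1 := jp_rpow_le_one z ha.le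
        have e2 : ‖z - x‖ ^ (-k) ≤ (r/2) ^ (-k) :=
          Real.rpow_le_rpow_of_nonpos hρ hzx (by linarith)
        have e3 : ‖y - z‖ ^ (-l) = ‖z - y‖ ^ (-l) := by rw [norm_sub_rev]
        calc jp z ^ (-(δ + ε)) * ‖z - x‖ ^ (-k) * ‖y - z‖ ^ (-l)
            ≤ 1 * ((r/2) ^ (-k)) * ‖y - z‖ ^ (-l) :=
              mul3_le e1 e2 le_rfl (jp_rpow_nonneg z _) (Real.rpow_nonneg (norm_nonneg _) _)
                (Real.rpow_nonneg (norm_nonneg _) _) zero_le_one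
                (Real.rpow_nonneg hρ.le _)
        _ = (r/2) ^ (-k) * ‖z - y‖ ^ (-l) := by rw [← e3]; ring
      calc ∫⁻ z in (ball x (r/2))ᶜ ∩ ball y (r/2), G z
          ≤ ∫⁻ z in ball y (r/2), G z := lintegral_mono_set inter_subset_right
      _ ≤ ENNReal.ofReal ((r/2) ^ (-k)) * ∫⁻ z in ball y (r/2), ENNReal.ofReal (‖z - y‖ ^ (-l)) :=
            set_bound (Real.rpow_nonneg hρ.le _) (by fun_prop) hpt
      _ ≤ ENNReal.ofReal ((r/2) ^ (-k)) * ENNReal.ofReal (CL * (r/2) ^ ((n:ℝ) - l)) :=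
            mul_le_mul_right (hL y (r/2) hρ) _
      _ = ENNReal.ofReal (CL * (r/2) ^ ((n:ℝ) - k - l)) := by
            rw [← ENNReal.ofReal_mul (Real.rpow_nonneg hρ.le _)]
            congr 1
            rw [show ((n:ℝ) - k - l) = -k + ((n:ℝ) - l) by ring, Real.rpow_add hρ]
            ring
      _ ≤ ENNReal.ofReal ((CL * 2 ^ (n:ℝ)) * T) := by
            apply ENNReal.ofReal_le_ofReal
            nlinarith [Real.rpow_nonneg (le_of_lt hρ) ((n:ℝ) - k - l)]
    -- piece D
    have pieceD : ∫⁻ z in (ball x (r/2))ᶜ \ ball y (r/2), G z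
        ≤ ENNReal.ofReal ((3 ^ l * (CM + Real.sqrt 5 ^ (k+l) * CU)) * T) := by
      have hgm : Measurable (fun z : EuclideanSpace ℝ (Fin n) =>
          jp z ^ (-(δ + ε)) * ‖z - x‖ ^ (-(k+l))) := by unfold jp; fun_prop
      have step1 : ∫⁻ z in (ball x (r/2))ᶜ \ ball y (r/2), G z
          ≤ ENNReal.ofReal ((3:ℝ) ^ l) * ∫⁻ z in (ball x (r/2))ᶜ \ ball y (r/2),
              ENNReal.ofReal (jp z ^ (-(δ + ε)) * ‖z - x‖ ^ (-(k+l))) :=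
        set_bound (by positivity) hgm hptD
      set D := (ball x (r/2))ᶜ \ ball y (r/2) with hD
      have hsplit2 : ∫⁻ z in D, ENNReal.ofReal (jp z ^ (-(δ + ε)) * ‖z - x‖ ^ (-(k+l)))
          = (∫⁻ z in D ∩ ball x 1, ENNReal.ofReal (jp z ^ (-(δ + ε)) * ‖z - x‖ ^ (-(k+l))))
          + ∫⁻ z in D \ ball x 1, ENNReal.ofReal (jp z ^ (-(δ + ε)) * ‖z - x‖ ^ (-(k+l))) :=
        (lintegral_inter_add_diff (μ := (volume : Measure (EuclideanSpace ℝ (Fin n)))) _ D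
          measurableSet_ball).symm
      have hJ1 : ∫⁻ z in D ∩ ball x 1, ENNReal.ofReal (jp z ^ (-(δ + ε)) * ‖z - x‖ ^ (-(k+l)))
          ≤ ENNReal.ofReal (CM * T) := by
        have hpt1 : ∀ z ∈ D ∩ ball x 1,
            ENNReal.ofReal (jp z ^ (-(δ + ε)) * ‖z - x‖ ^ (-(k+l)))
            ≤ ENNReal.ofReal (‖z - x‖ ^ (-(k+l))) := by
          intro z _
          apply ENNReal.ofReal_le_ofReal
          have hb1 : jp z ^ (-(δ + ε)) * ‖z - x‖ ^ (-(k+l)) ≤ 1 * ‖z - x‖ ^ (-(k+l)) :=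
            mul_le_mul_of_nonneg_right (jp_rpow_le_one z ha.le)
              (Real.rpow_nonneg (norm_nonneg _) _)
          rw [one_mul] at hb1
          exact hb1
        calc ∫⁻ z in D ∩ ball x 1, ENNReal.ofReal (jp z ^ (-(δ + ε)) * ‖z - x‖ ^ (-(k+l)))
            ≤ ∫⁻ z in D ∩ ball x 1, ENNReal.ofReal (‖z - x‖ ^ (-(k+l))) :=
              setLIntegral_mono (by fun_prop) hpt1
        _ ≤ ∫⁻ z in (ball x (r/2))ᶜ ∩ ball x 1, ENNReal.ofReal (‖z - x‖ ^ (-(k+l))) :=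
              lintegral_mono_set (inter_subset_inter_left _ diff_subset)
        _ ≤ ENNReal.ofReal (CM * T) := hmid x r hr0 hr1
      have hJ2 : ∫⁻ z in D \ ball x 1, ENNReal.ofReal (jp z ^ (-(δ + ε)) * ‖z - x‖ ^ (-(k+l)))
          ≤ ENNReal.ofReal ((Real.sqrt 5 ^ (k+l) * CU) * T) := by
        have hpt2 : ∀ z ∈ D \ ball x 1,
            ENNReal.ofReal (jp z ^ (-(δ + ε)) * ‖z - x‖ ^ (-(k+l)))
            ≤ ENNReal.ofReal (Real.sqrt 5 ^ (k+l) *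
                (jp z ^ (-(δ + ε)) * jp (z - x) ^ (-(k+l)))) := by
          intro z hz
          have h1 : (1:ℝ) ≤ ‖z - x‖ := by
            have := hz.2
            simpa [mem_ball, dist_eq_norm, not_lt] using this
          apply ENNReal.ofReal_le_ofReal
          have h2 : ‖z - x‖ ^ (-(k+l)) ≤ Real.sqrt 5 ^ (k+l) * jp (z - x) ^ (-(k+l)) :=
            norm_rpow_le_jp (z - x) (by linarith) (by linarith)
          calc jp z ^ (-(δ + ε)) * ‖z - x‖ ^ (-(k+l))
              ≤ jp z ^ (-(δ + ε)) * (Real.sqrt 5 ^ (k+l) * jp (z - x) ^ (-(k+l))) :=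
                mul_le_mul_of_nonneg_left h2 (jp_rpow_nonneg z _)
          _ = Real.sqrt 5 ^ (k+l) * (jp z ^ (-(δ + ε)) * jp (z - x) ^ (-(k+l))) := by ring
        calc ∫⁻ z in D \ ball x 1, ENNReal.ofReal (jp z ^ (-(δ + ε)) * ‖z - x‖ ^ (-(k+l)))
            ≤ ∫⁻ z in D \ ball x 1, ENNReal.ofReal (Real.sqrt 5 ^ (k+l) *
                (jp z ^ (-(δ + ε)) * jp (z - x) ^ (-(k+l)))) :=
              setLIntegral_mono (by unfold jp; fun_prop) hpt2
        _ ≤ ∫⁻ z, ENNReal.ofReal (Real.sqrt 5 ^ (k+l) *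
                (jp z ^ (-(δ + ε)) * jp (z - x) ^ (-(k+l)))) := setLIntegral_le_lintegral _ _
        _ = ENNReal.ofReal (Real.sqrt 5 ^ (k+l)) *
              ∫⁻ z, ENNReal.ofReal (jp z ^ (-(δ + ε)) * jp (z - x) ^ (-(k+l))) := by
              simp_rw [ENNReal.ofReal_mul (by positivity : (0:ℝ) ≤ Real.sqrt 5 ^ (k+l))]
              exact lintegral_const_mul _ (by unfold jp; fun_prop)
        _ ≤ ENNReal.ofReal (Real.sqrt 5 ^ (k+l)) * ENNReal.ofReal CU :=
              mul_le_mul_right (hU x) _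
        _ = ENNReal.ofReal (Real.sqrt 5 ^ (k+l) * CU) := by
              rw [← ENNReal.ofReal_mul (by positivity)]
        _ ≤ ENNReal.ofReal ((Real.sqrt 5 ^ (k+l) * CU) * T) := by
              apply ENNReal.ofReal_le_ofReal
              nlinarith [mul_pos (Real.rpow_pos_of_pos (by positivity : (0:ℝ) < Real.sqrt 5) (k+l)) hCU]
      calc ∫⁻ z in D, G z
          ≤ ENNReal.ofReal ((3:ℝ) ^ l) * ∫⁻ z in D,
              ENNReal.ofReal (jp z ^ (-(δ + ε)) * ‖z - x‖ ^ (-(k+l))) := step1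
      _ ≤ ENNReal.ofReal ((3:ℝ) ^ l) *
            (ENNReal.ofReal (CM * T) + ENNReal.ofReal ((Real.sqrt 5 ^ (k+l) * CU) * T)) := by
            rw [hsplit2]
            exact mul_le_mul_right (add_le_add hJ1 hJ2) _
      _ = ENNReal.ofReal ((3 ^ l * (CM + Real.sqrt 5 ^ (k+l) * CU)) * T) := by
            rw [← ENNReal.ofReal_add (by positivity) (by positivity),
              ← ENNReal.ofReal_mul (by positivity : (0:ℝ) ≤ (3:ℝ) ^ l)]
            congr 1
            ring
    calc ∫⁻ z, G z
        = (∫⁻ z in ball x (r/2), G z)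
          + ((∫⁻ z in (ball x (r/2))ᶜ ∩ ball y (r/2), G z)
            + ∫⁻ z in (ball x (r/2))ᶜ \ ball y (r/2), G z) := hsplit
    _ ≤ ENNReal.ofReal ((CK * 2 ^ (n:ℝ)) * T) + (ENNReal.ofReal ((CL * 2 ^ (n:ℝ)) * T)
          + ENNReal.ofReal ((3 ^ l * (CM + Real.sqrt 5 ^ (k+l) * CU)) * T)) :=
        add_le_add pieceA (add_le_add pieceB pieceD)
    _ = ENNReal.ofReal (C1 * T) := by
        rw [← ENNReal.ofReal_add (by positivity) (by positivity),
          ← ENNReal.ofReal_add (by positivity) (by positivity)]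
        congr 1
        rw [hC1def]
        ring
    _ ≤ ENNReal.ofReal ((C1 + C2) * T) := by
        apply ENNReal.ofReal_le_ofReal
        nlinarith
  · -- case r ≥ 1
    intro hr1
    show ∫⁻ z, G z ≤ ENNReal.ofReal ((C1 + C2) * r ^ (-m))
    have hρhalf : 1/2 ≤ r/2 := by linarith
    have hTm0 : (0:ℝ) ≤ r ^ (-m) := Real.rpow_nonneg hr0.le _
    have hpowm : (r/2) ^ (-m) ≤ 2 ^ (n:ℝ) * r ^ (-m) := by
      rw [div_rpow_eq hr0.le (by norm_num : (0:ℝ) < 2), neg_neg]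
      have h2 : (2:ℝ) ^ m ≤ 2 ^ (n:ℝ) :=
        Real.rpow_le_rpow_of_exponent_le one_le_two (by linarith)
      nlinarith
    -- piece A
    have pieceA : ∫⁻ z in ball x (r/2), G z ≤ ENNReal.ofReal ((CA * 2 ^ (n:ℝ)) * r ^ (-m)) := by
      have hpt : ∀ z ∈ ball x (r/2),
          G z ≤ ENNReal.ofReal ((r/2) ^ (-l) * (jp z ^ (-(δ + ε)) * ‖z - x‖ ^ (-k))) := by
        intro z hz
        have hyz := geomA z hz
        rw [hGdef]
        apply ENNReal.ofReal_le_ofReal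
        have e2 : ‖y - z‖ ^ (-l) ≤ (r/2) ^ (-l) :=
          Real.rpow_le_rpow_of_nonpos hρ hyz (by linarith)
        have hb := mul_le_mul_of_nonneg_left e2
          (mul_nonneg (jp_rpow_nonneg z (-(δ + ε))) (Real.rpow_nonneg (norm_nonneg (z - x)) (-k)))
        calc jp z ^ (-(δ + ε)) * ‖z - x‖ ^ (-k) * ‖y - z‖ ^ (-l)
            ≤ jp z ^ (-(δ + ε)) * ‖z - x‖ ^ (-k) * ((r/2) ^ (-l)) := hb
        _ = (r/2) ^ (-l) * (jp z ^ (-(δ + ε)) * ‖z - x‖ ^ (-k)) := by ring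
      calc ∫⁻ z in ball x (r/2), G z
          ≤ ENNReal.ofReal ((r/2) ^ (-l)) * ∫⁻ z in ball x (r/2),
              ENNReal.ofReal (jp z ^ (-(δ + ε)) * ‖z - x‖ ^ (-k)) :=
            set_bound (Real.rpow_nonneg hρ.le _) (by unfold jp; fun_prop) hpt
      _ ≤ ENNReal.ofReal ((r/2) ^ (-l)) * ENNReal.ofReal (CA * (r/2) ^ (l - m)) :=
            mul_le_mul_right (hA x (r/2) hρhalf) _
      _ = ENNReal.ofReal (CA * (r/2) ^ (-m)) := by
            rw [← ENNReal.ofReal_mul (Real.rpow_nonneg hρ.le _)]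
            congr 1
            rw [show (-m) = -l + (l - m) by ring, Real.rpow_add hρ]
            ring
      _ ≤ ENNReal.ofReal ((CA * 2 ^ (n:ℝ)) * r ^ (-m)) := by
            apply ENNReal.ofReal_le_ofReal
            nlinarith
    -- piece B
    have pieceB : ∫⁻ z in (ball x (r/2))ᶜ ∩ ball y (r/2), G z
        ≤ ENNReal.ofReal ((CB * 2 ^ (n:ℝ)) * r ^ (-m)) := by
      have hpt : ∀ z ∈ ball y (r/2),
          G z ≤ ENNReal.ofReal ((r/2) ^ (-k) * (jp z ^ (-(δ + ε)) * ‖z - y‖ ^ (-l))) := by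
        intro z hz
        have hzx := geomB z hz
        rw [hGdef]
        apply ENNReal.ofReal_le_ofReal
        have e2 : ‖z - x‖ ^ (-k) ≤ (r/2) ^ (-k) :=
          Real.rpow_le_rpow_of_nonpos hρ hzx (by linarith)
        have e3 : ‖y - z‖ ^ (-l) = ‖z - y‖ ^ (-l) := by rw [norm_sub_rev]
        calc jp z ^ (-(δ + ε)) * ‖z - x‖ ^ (-k) * ‖y - z‖ ^ (-l)
            ≤ jp z ^ (-(δ + ε)) * ((r/2) ^ (-k)) * ‖y - z‖ ^ (-l) :=
              mul3_le le_rfl e2 le_rfl (jp_rpow_nonneg z _)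
                (Real.rpow_nonneg (norm_nonneg _) _) (Real.rpow_nonneg (norm_nonneg _) _)
                (jp_rpow_nonneg z _) (Real.rpow_nonneg hρ.le _)
        _ = (r/2) ^ (-k) * (jp z ^ (-(δ + ε)) * ‖z - y‖ ^ (-l)) := by rw [e3]; ring
      calc ∫⁻ z in (ball x (r/2))ᶜ ∩ ball y (r/2), G z
          ≤ ∫⁻ z in ball y (r/2), G z := lintegral_mono_set inter_subset_right
      _ ≤ ENNReal.ofReal ((r/2) ^ (-k)) * ∫⁻ z in ball y (r/2),
              ENNReal.ofReal (jp z ^ (-(δ + ε)) * ‖z - y‖ ^ (-l)) :=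
            set_bound (Real.rpow_nonneg hρ.le _) (by unfold jp; fun_prop) hpt
      _ ≤ ENNReal.ofReal ((r/2) ^ (-k)) * ENNReal.ofReal (CB * (r/2) ^ (k - m)) :=
            mul_le_mul_right (hBn y (r/2) hρhalf) _
      _ = ENNReal.ofReal (CB * (r/2) ^ (-m)) := by
            rw [← ENNReal.ofReal_mul (Real.rpow_nonneg hρ.le _)]
            congr 1
            rw [show (-m) = -k + (k - m) by ring, Real.rpow_add hρ]
            ring
      _ ≤ ENNReal.ofReal ((CB * 2 ^ (n:ℝ)) * r ^ (-m)) := by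
            apply ENNReal.ofReal_le_ofReal
            nlinarith
    -- piece D
    have pieceD : ∫⁻ z in (ball x (r/2))ᶜ \ ball y (r/2), G z
        ≤ ENNReal.ofReal ((3 ^ l * Real.sqrt 5 ^ (k+l) * 2 ^ (n:ℝ) * CF) * r ^ (-m)) := by
      have hpt : ∀ z ∈ (ball x (r/2))ᶜ \ ball y (r/2),
          G z ≤ ENNReal.ofReal ((3 ^ l * Real.sqrt 5 ^ (k+l) * (r/2) ^ (-m)) *
            (jp z ^ (-(δ + ε)) * jp (z - x) ^ (-(k + l - m)))) := by
        intro z hz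
        have hzx := (geomD z hz).1
        refine le_trans (hptD z hz) (ENNReal.ofReal_le_ofReal ?_)
        have h2 : ‖z - x‖ ^ (-(k+l)) ≤ Real.sqrt 5 ^ (k+l) * jp (z - x) ^ (-(k+l)) :=
          norm_rpow_le_jp (z - x) (by linarith) (by linarith)
        have h3 : jp (z - x) ^ (-(k+l)) = jp (z - x) ^ (-m) * jp (z - x) ^ (-(k + l - m)) := by
          rw [← Real.rpow_add (jp_pos _)]; congr 1; ring
        have h4 : jp (z - x) ^ (-m) ≤ (r/2) ^ (-m) :=
          Real.rpow_le_rpow_of_nonpos hρ (le_trans hzx (norm_le_jp _)) (by linarith)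
        have h5 : jp (z - x) ^ (-m) * jp (z - x) ^ (-(k + l - m))
            ≤ (r/2) ^ (-m) * jp (z - x) ^ (-(k + l - m)) :=
          mul_le_mul_of_nonneg_right h4 (jp_rpow_nonneg _ _)
        have h6 : ‖z - x‖ ^ (-(k+l))
            ≤ Real.sqrt 5 ^ (k+l) * ((r/2) ^ (-m) * jp (z - x) ^ (-(k + l - m))) := by
          rw [h3] at h2
          calc ‖z - x‖ ^ (-(k+l))
              ≤ Real.sqrt 5 ^ (k+l) * (jp (z - x) ^ (-m) * jp (z - x) ^ (-(k + l - m))) := h2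
          _ ≤ Real.sqrt 5 ^ (k+l) * ((r/2) ^ (-m) * jp (z - x) ^ (-(k + l - m))) :=
              mul_le_mul_of_nonneg_left h5 (by positivity)
        have h7 := mul_le_mul_of_nonneg_left h6 (jp_rpow_nonneg z (-(δ + ε)))
        have h8 := mul_le_mul_of_nonneg_left h7 (by positivity : (0:ℝ) ≤ (3:ℝ) ^ l)
        calc (3:ℝ) ^ l * (jp z ^ (-(δ + ε)) * ‖z - x‖ ^ (-(k+l)))
            ≤ (3:ℝ) ^ l * (jp z ^ (-(δ + ε)) *
                (Real.sqrt 5 ^ (k+l) * ((r/2) ^ (-m) * jp (z - x) ^ (-(k + l - m))))) := h8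
        _ = (3 ^ l * Real.sqrt 5 ^ (k+l) * (r/2) ^ (-m)) *
              (jp z ^ (-(δ + ε)) * jp (z - x) ^ (-(k + l - m))) := by ring
      calc ∫⁻ z in (ball x (r/2))ᶜ \ ball y (r/2), G z
          ≤ ENNReal.ofReal (3 ^ l * Real.sqrt 5 ^ (k+l) * (r/2) ^ (-m)) *
            ∫⁻ z in (ball x (r/2))ᶜ \ ball y (r/2),
              ENNReal.ofReal (jp z ^ (-(δ + ε)) * jp (z - x) ^ (-(k + l - m))) :=
            set_bound (by positivity) (by unfold jp; fun_prop) hpt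
      _ ≤ ENNReal.ofReal (3 ^ l * Real.sqrt 5 ^ (k+l) * (r/2) ^ (-m)) *
            ∫⁻ z, ENNReal.ofReal (jp z ^ (-(δ + ε)) * jp (z - x) ^ (-(k + l - m))) :=
            mul_le_mul_right (setLIntegral_le_lintegral _ _) _
      _ ≤ ENNReal.ofReal (3 ^ l * Real.sqrt 5 ^ (k+l) * (r/2) ^ (-m)) * ENNReal.ofReal CF :=
            mul_le_mul_right (hF x) _
      _ = ENNReal.ofReal ((3 ^ l * Real.sqrt 5 ^ (k+l) * (r/2) ^ (-m)) * CF) := by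
            rw [← ENNReal.ofReal_mul (by positivity)]
      _ ≤ ENNReal.ofReal ((3 ^ l * Real.sqrt 5 ^ (k+l) * 2 ^ (n:ℝ) * CF) * r ^ (-m)) := by
            apply ENNReal.ofReal_le_ofReal
            have hP : (0:ℝ) ≤ 3 ^ l * Real.sqrt 5 ^ (k+l) := by positivity
            have hh := mul_le_mul_of_nonneg_right
              (mul_le_mul_of_nonneg_left hpowm hP) hCF.le
            calc 3 ^ l * Real.sqrt 5 ^ (k+l) * (r/2) ^ (-m) * CF
                = (3 ^ l * Real.sqrt 5 ^ (k+l)) * ((r/2) ^ (-m)) * CF := by ring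
            _ ≤ (3 ^ l * Real.sqrt 5 ^ (k+l)) * (2 ^ (n:ℝ) * r ^ (-m)) * CF := hh
            _ = (3 ^ l * Real.sqrt 5 ^ (k+l) * 2 ^ (n:ℝ) * CF) * r ^ (-m) := by ring
    calc ∫⁻ z, G z
        = (∫⁻ z in ball x (r/2), G z)
          + ((∫⁻ z in (ball x (r/2))ᶜ ∩ ball y (r/2), G z)
            + ∫⁻ z in (ball x (r/2))ᶜ \ ball y (r/2), G z) := hsplit
    _ ≤ ENNReal.ofReal ((CA * 2 ^ (n:ℝ)) * r ^ (-m)) + (ENNReal.ofReal ((CB * 2 ^ (n:ℝ)) * r ^ (-m))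
          + ENNReal.ofReal ((3 ^ l * Real.sqrt 5 ^ (k+l) * 2 ^ (n:ℝ) * CF) * r ^ (-m))) :=
        add_le_add pieceA (add_le_add pieceB pieceD)
    _ = ENNReal.ofReal (C2 * r ^ (-m)) := by
        rw [← ENNReal.ofReal_add (by positivity) (by positivity),
          ← ENNReal.ofReal_add (by positivity) (by positivity)]
        congr 1
        rw [hC2def]
        ring
    _ ≤ ENNReal.ofReal ((C1 + C2) * r ^ (-m)) := by
        apply ENNReal.ofReal_le_ofReal
        nlinarith
end

section
/- Let n ≥ 1 be an integer and let k, δ be real numbers with 0 ≤ δ < n, 0 ≤ k < n and k + δ > n. Then there is a constant C (depending only on n, k, δ) such that for every y ∈ ℝⁿ: ∫_{ℝⁿ} ⟨x⟩^{−δ} |x − y|^{−k} dx ≤ C·⟨y⟩^{n−k−δ}. -/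
open MeasureTheory Metric Set

lemma meas_rpow_norm (n : ℕ) (c : ℝ) :
    Measurable (fun x : EuclideanSpace ℝ (Fin n) => ENNReal.ofReal (‖x‖ ^ (-c))) := by
  fun_prop

lemma lint_scale (n : ℕ) (f : EuclideanSpace ℝ (Fin n) → ENNReal) (hf : Measurable f)
    (R : ℝ) (hR : 0 < R) :
    ∫⁻ x, f (R⁻¹ • x) = ENNReal.ofReal (R ^ (n : ℝ)) * ∫⁻ x, f x := by
  have h0 : (R : ℝ)⁻¹ ≠ 0 := inv_ne_zero hR.ne'
  rw [← lintegral_map hf (measurable_const_smul R⁻¹),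
    Measure.map_addHaar_smul volume h0, lintegral_smul_measure]
  congr 1
  rw [finrank_euclideanSpace_fin, ← inv_pow, inv_inv, abs_of_pos (pow_pos hR n),
    Real.rpow_natCast]

-- the scaling identity, given any base set s (with s scaling to ball-type sets)
lemma scale_identity (n : ℕ) (c : ℝ) (s : Set (EuclideanSpace ℝ (Fin n)))
    (hs : MeasurableSet s) (R : ℝ) (hR : 0 < R)
    (t : Set (EuclideanSpace ℝ (Fin n))) (hts : MeasurableSet t)
    (hmem : ∀ x, R⁻¹ • x ∈ s ↔ x ∈ t) :
    ∫⁻ x, t.indicator (fun z => ENNReal.ofReal (‖z‖ ^ (-c))) x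
      = ENNReal.ofReal (R ^ ((n : ℝ) - c)) *
        ∫⁻ x, s.indicator (fun z => ENNReal.ofReal (‖z‖ ^ (-c))) x := by
  set g := s.indicator (fun z : EuclideanSpace ℝ (Fin n) => ENNReal.ofReal (‖z‖ ^ (-c))) with hg
  have hgm : Measurable g := (meas_rpow_norm n c).indicator hs
  have htm : Measurable (t.indicator (fun z : EuclideanSpace ℝ (Fin n) =>
      ENNReal.ofReal (‖z‖ ^ (-c)))) := (meas_rpow_norm n c).indicator hts
  have key : ∀ x : EuclideanSpace ℝ (Fin n),
      g (R⁻¹ • x) = ENNReal.ofReal (R ^ c) *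
        t.indicator (fun z => ENNReal.ofReal (‖z‖ ^ (-c))) x := by
    intro x
    have hnorm : ‖R⁻¹ • x‖ = R⁻¹ * ‖x‖ := by
      rw [norm_smul, norm_inv, Real.norm_eq_abs, abs_of_pos hR]
    by_cases hx : x ∈ t
    · rw [hg, Set.indicator_of_mem ((hmem x).2 hx), Set.indicator_of_mem hx, hnorm,
        Real.mul_rpow (inv_nonneg.2 hR.le) (norm_nonneg x),
        Real.inv_rpow hR.le, Real.rpow_neg hR.le, inv_inv,
        ENNReal.ofReal_mul (Real.rpow_nonneg hR.le _)]
    · rw [hg, Set.indicator_of_notMem (fun h => hx ((hmem x).1 h)),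
        Set.indicator_of_notMem hx, mul_zero]
  have h1 : ENNReal.ofReal (R ^ c) *
      ∫⁻ x, t.indicator (fun z => ENNReal.ofReal (‖z‖ ^ (-c))) x
      = ENNReal.ofReal (R ^ (n : ℝ)) * ∫⁻ x, g x := by
    rw [← lintegral_const_mul _ htm, ← lintegral_congr key, lint_scale n g hgm R hR]
  have hc_ne : ENNReal.ofReal (R ^ c) ≠ 0 :=
    (ENNReal.ofReal_pos.2 (Real.rpow_pos_of_pos hR c)).ne'
  refine (ENNReal.mul_right_inj hc_ne ENNReal.ofReal_ne_top).1 ?_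
  rw [h1, ← mul_assoc, ← ENNReal.ofReal_mul (Real.rpow_nonneg hR.le _),
    ← Real.rpow_add hR]
  norm_num


lemma tail_finite (n : ℕ) (p : ℝ) (hp : (n : ℝ) < p) :
    ∫⁻ x : EuclideanSpace ℝ (Fin n),
      ((ball (0 : EuclideanSpace ℝ (Fin n)) 1)ᶜ).indicator
        (fun z => ENNReal.ofReal (‖z‖ ^ (-p))) x ≠ ⊤ := by
  have hp0 : 0 < p := lt_of_le_of_lt (Nat.cast_nonneg n) hp
  have hbound : ∀ x : EuclideanSpace ℝ (Fin n),
      ((ball (0 : EuclideanSpace ℝ (Fin n)) 1)ᶜ).indicator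
        (fun z => ENNReal.ofReal (‖z‖ ^ (-p))) x
        ≤ ENNReal.ofReal ((2:ℝ) ^ p) * ENNReal.ofReal ((1 + ‖x‖) ^ (-p)) := by
    intro x
    by_cases hx : x ∈ (ball (0 : EuclideanSpace ℝ (Fin n)) 1)ᶜ
    · rw [Set.indicator_of_mem hx, ← ENNReal.ofReal_mul (Real.rpow_nonneg (by norm_num) _)]
      apply ENNReal.ofReal_le_ofReal
      have hx1 : 1 ≤ ‖x‖ := by simpa [mem_ball_zero_iff] using hx
      calc ‖x‖ ^ (-p) ≤ ((1 + ‖x‖) / 2) ^ (-p) :=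
            Real.rpow_le_rpow_of_nonpos (by linarith) (by linarith) (by linarith)
        _ = (1 + ‖x‖) ^ (-p) / (2:ℝ) ^ (-p) := Real.div_rpow (by positivity) (by norm_num) _
        _ = (2:ℝ) ^ p * (1 + ‖x‖) ^ (-p) := by
            rw [Real.rpow_neg (by norm_num : (0:ℝ) ≤ 2), div_eq_mul_inv, inv_inv, mul_comm]
    · rw [Set.indicator_of_notMem hx]; exact zero_le
  refine ne_top_of_le_ne_top ?_ (lintegral_mono hbound)
  rw [lintegral_const_mul _ (by fun_prop)]
  refine ENNReal.mul_ne_top ENNReal.ofReal_ne_top ?_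
  have := finite_integral_one_add_norm
    (E := EuclideanSpace ℝ (Fin n)) (μ := volume) (r := p) (by rwa [finrank_euclideanSpace_fin])
  exact this.ne

lemma ball_finite (n : ℕ) (hn : 1 ≤ n) (c : ℝ) (hc0 : 0 ≤ c) (hcn : c < n) :
    ∫⁻ x : EuclideanSpace ℝ (Fin n),
      (ball (0 : EuclideanSpace ℝ (Fin n)) 1).indicator
        (fun z => ENNReal.ofReal (‖z‖ ^ (-c))) x ≠ ⊤ := by
  classical
  haveI : Nonempty (Fin n) := ⟨⟨0, hn⟩⟩
  set E := EuclideanSpace ℝ (Fin n)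
  set V := volume (ball (0 : E) 1) with hV
  have hVlt : V < ⊤ := measure_ball_lt_top
  set u : ℕ → ℝ := fun j => ((2:ℝ) ^ j)⁻¹ with hu
  have hu_pos : ∀ j, 0 < u j := fun j => inv_pos.2 (pow_pos two_pos j)
  set A : ℕ → Set E := fun j => ball (0 : E) (u j) \ ball (0 : E) (u (j+1)) with hA
  have hAm : ∀ j, MeasurableSet (A j) := fun j =>
    measurableSet_ball.diff measurableSet_ball
  -- the cover
  have hcover : ball (0 : E) 1 ⊆ {(0 : E)} ∪ ⋃ j, A j := by
    intro x hx
    rcases eq_or_ne x 0 with rfl | hx0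
    · exact Or.inl rfl
    right
    have hxpos : 0 < ‖x‖ := norm_pos_iff.2 hx0
    have hex : ∃ m : ℕ, u (m + 1) ≤ ‖x‖ := by
      obtain ⟨m, hm⟩ := pow_unbounded_of_one_lt (‖x‖⁻¹) (one_lt_two (α := ℝ))
      refine ⟨m, ?_⟩
      have h1 : ‖x‖⁻¹ ≤ (2:ℝ) ^ (m+1) :=
        hm.le.trans (pow_le_pow_right₀ one_le_two (Nat.le_succ m))
      have := inv_anti₀ (inv_pos.2 hxpos) h1
      rwa [inv_inv] at this
    set j := Nat.find hex with hj
    have hlb : u (j + 1) ≤ ‖x‖ := Nat.find_spec hex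
    have hub : ‖x‖ < u j := by
      rcases Nat.eq_zero_or_pos j with h0 | hpos
      · rw [h0]; simpa [hu] using mem_ball_zero_iff.1 hx
      · have hlt : j - 1 < Nat.find hex := by rw [← hj]; exact Nat.sub_lt hpos one_pos
        have hmin := Nat.find_min hex hlt
        rw [Nat.sub_add_cancel hpos] at hmin
        exact lt_of_not_ge hmin
    exact mem_iUnion.2 ⟨j, mem_ball_zero_iff.2 hub,
      fun hmem => absurd (mem_ball_zero_iff.1 hmem) (not_lt.2 hlb)⟩
  set r : ENNReal := ENNReal.ofReal ((2:ℝ) ^ (c - (n:ℝ))) with hr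
  have hr1 : r < 1 := by
    rw [hr]
    refine ENNReal.ofReal_lt_one.2 ?_
    exact Real.rpow_lt_one_of_one_lt_of_neg one_lt_two (by linarith [hcn])
  -- per shell bound
  have hterm : ∀ j : ℕ, ∫⁻ x in A j, ENNReal.ofReal (‖x‖ ^ (-c)) ∂volume ≤
      ENNReal.ofReal ((2:ℝ) ^ c) * V * r ^ j := by
    intro j
    have hpt : ∀ x ∈ A j, ENNReal.ofReal (‖x‖ ^ (-c)) ≤ ENNReal.ofReal (u (j+1) ^ (-c)) := by
      intro x hx
      refine ENNReal.ofReal_le_ofReal ?_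
      exact Real.rpow_le_rpow_of_nonpos (hu_pos (j+1)) (le_of_not_gt fun h =>
        hx.2 (mem_ball_zero_iff.2 h)) (by linarith)
    have hreal : u (j+1) ^ (-c) * u j ^ n = (2:ℝ) ^ c * ((2:ℝ) ^ (c - (n:ℝ))) ^ j := by
      have h2 : ∀ m : ℕ, u m = (2:ℝ) ^ (-(m:ℝ)) := fun m => by
        show ((2:ℝ) ^ m)⁻¹ = (2:ℝ) ^ (-(m:ℝ))
        rw [← Real.rpow_natCast 2 m, ← Real.rpow_neg (by norm_num)]
      rw [h2, h2, ← Real.rpow_natCast ((2:ℝ) ^ (-((j:ℝ)))) n, ← Real.rpow_natCast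
        ((2:ℝ) ^ (c - (n:ℝ))) j, ← Real.rpow_mul (by norm_num), ← Real.rpow_mul (by norm_num),
        ← Real.rpow_mul (by norm_num), ← Real.rpow_add (by norm_num), ← Real.rpow_add (by norm_num)]
      congr 1
      push_cast
      ring
    calc ∫⁻ x in A j, ENNReal.ofReal (‖x‖ ^ (-c)) ∂volume
        ≤ ∫⁻ _ in A j, ENNReal.ofReal (u (j+1) ^ (-c)) ∂volume :=
          setLIntegral_mono measurable_const hpt
      _ = ENNReal.ofReal (u (j+1) ^ (-c)) * volume (A j) := setLIntegral_const _ _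
      _ ≤ ENNReal.ofReal (u (j+1) ^ (-c)) * volume (ball (0:E) (u j)) :=
          mul_le_mul_right (measure_mono diff_subset) _
      _ = ENNReal.ofReal ((2:ℝ) ^ c) * V * r ^ j := by
          rw [Measure.addHaar_ball volume (0:E) (hu_pos j).le, finrank_euclideanSpace_fin,
            ← mul_assoc, ← ENNReal.ofReal_mul (Real.rpow_nonneg (hu_pos (j+1)).le _), hreal, hr,
            ← ENNReal.ofReal_pow (Real.rpow_nonneg (by norm_num) _),
            ENNReal.ofReal_mul (Real.rpow_nonneg (by norm_num) _)]
          ring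
  -- put everything together
  have : ∫⁻ x : E, (ball (0 : E) 1).indicator (fun z => ENNReal.ofReal (‖z‖ ^ (-c))) x < ⊤ := by
    rw [lintegral_indicator measurableSet_ball]
    calc ∫⁻ x in ball (0:E) 1, ENNReal.ofReal (‖x‖ ^ (-c)) ∂volume
        ≤ ∫⁻ x in {(0:E)} ∪ ⋃ j, A j, ENNReal.ofReal (‖x‖ ^ (-c)) ∂volume :=
          lintegral_mono_set hcover
      _ ≤ (∫⁻ x in {(0:E)}, ENNReal.ofReal (‖x‖ ^ (-c)) ∂volume)
          + ∫⁻ x in ⋃ j, A j, ENNReal.ofReal (‖x‖ ^ (-c)) ∂volume := lintegral_union_le _ _ _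
      _ = ∫⁻ x in ⋃ j, A j, ENNReal.ofReal (‖x‖ ^ (-c)) ∂volume := by
          rw [setLIntegral_measure_zero _ _ (measure_singleton _), zero_add]
      _ ≤ ∑' j, ∫⁻ x in A j, ENNReal.ofReal (‖x‖ ^ (-c)) ∂volume := lintegral_iUnion_le _ _
      _ ≤ ∑' j : ℕ, ENNReal.ofReal ((2:ℝ) ^ c) * V * r ^ j := ENNReal.tsum_le_tsum hterm
      _ = ENNReal.ofReal ((2:ℝ) ^ c) * V * ∑' j : ℕ, r ^ j := ENNReal.tsum_mul_left
      _ < ⊤ := by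
          refine ENNReal.mul_lt_top (ENNReal.mul_lt_top ENNReal.ofReal_lt_top hVlt) ?_
          rw [ENNReal.tsum_geometric]
          refine ENNReal.inv_lt_top.2 ?_
          rw [tsub_pos_iff_lt]
          exact hr1
  exact this.ne


set_option maxHeartbeats 2000000 in
theorem stmt4 (n : ℕ) (hn : 1 ≤ n) (k δ : ℝ)
    (hδ0 : 0 ≤ δ) (hδn : δ < n) (hk0 : 0 ≤ k) (hkn : k < n) (hkδ : (n : ℝ) < k + δ) :
    ∃ C : ℝ, 0 < C ∧ ∀ y : EuclideanSpace ℝ (Fin n),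
      (∫⁻ x, ENNReal.ofReal (Real.sqrt (1 + ‖x‖ ^ 2) ^ (-δ) * ‖x - y‖ ^ (-k)))
        ≤ ENNReal.ofReal (C * Real.sqrt (1 + ‖y‖ ^ 2) ^ ((n : ℝ) - k - δ)) := by
  classical
  haveI : Nonempty (Fin n) := ⟨⟨0, hn⟩⟩
  set E := EuclideanSpace ℝ (Fin n) with hE
  -- the three reference integrals
  set Jk : ENNReal := ∫⁻ x : E, (ball (0:E) 1).indicator
    (fun z => ENNReal.ofReal (‖z‖ ^ (-k))) x with hJk_def
  set Jδ : ENNReal := ∫⁻ x : E, (ball (0:E) 1).indicator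
    (fun z => ENNReal.ofReal (‖z‖ ^ (-δ))) x with hJδ_def
  set Jp : ENNReal := ∫⁻ x : E, ((ball (0:E) 1)ᶜ).indicator
    (fun z => ENNReal.ofReal (‖z‖ ^ (-(k + δ)))) x with hJp_def
  have hJk : Jk ≠ ⊤ := ball_finite n hn k hk0 hkn
  have hJδ : Jδ ≠ ⊤ := ball_finite n hn δ hδ0 hδn
  have hJp : Jp ≠ ⊤ := tail_finite n (k + δ) hkδ
  set c1 : ℝ := Jk.toReal with hc1
  set c3 : ℝ := Jδ.toReal with hc3
  set c2 : ℝ := Jp.toReal with hc2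
  have hc1n : 0 ≤ c1 := ENNReal.toReal_nonneg
  have hc3n : 0 ≤ c3 := ENNReal.toReal_nonneg
  have hc2n : 0 ≤ c2 := ENNReal.toReal_nonneg
  set C : ℝ := 2 ^ (k + δ - (n:ℝ)) * (c1 + c2) + 2 ^ k * c3 + c2 + 1 with hC
  have hCpos : 0 < C := by
    have h1 : (0:ℝ) < 2 ^ (k + δ - (n:ℝ)) := Real.rpow_pos_of_pos (by norm_num) _
    have h2 : (0:ℝ) < 2 ^ k := Real.rpow_pos_of_pos (by norm_num) _
    nlinarith
  refine ⟨C, hCpos, fun y => ?_⟩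
  -- basic facts about the bracket of y
  set b : ℝ := Real.sqrt (1 + ‖y‖ ^ 2) with hb
  have hbsq : b ^ 2 = 1 + ‖y‖ ^ 2 := Real.sq_sqrt (by positivity)
  have hbnn : 0 ≤ b := Real.sqrt_nonneg _
  have hb1 : 1 ≤ b := by nlinarith [norm_nonneg y, sq_nonneg ‖y‖]
  have hb0 : 0 < b := lt_of_lt_of_le one_pos hb1
  set R : ℝ := b / 2 with hRdef
  have hR0 : 0 < R := by positivity
  -- the four comparison functions
  set g1 : E → ENNReal := fun x => ENNReal.ofReal (R ^ (-δ)) *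
    (ball (0:E) R).indicator (fun z => ENNReal.ofReal (‖z‖ ^ (-k))) (x - y) with hg1
  set g2 : E → ENNReal := fun x =>
    ((ball (0:E) R)ᶜ).indicator (fun z => ENNReal.ofReal (‖z‖ ^ (-(k + δ)))) (x - y) with hg2
  set g3 : E → ENNReal := fun x => ENNReal.ofReal (R ^ (-k)) *
    (ball (0:E) b).indicator (fun z => ENNReal.ofReal (‖z‖ ^ (-δ))) x with hg3
  set g4 : E → ENNReal := fun x =>
    ((ball (0:E) b)ᶜ).indicator (fun z => ENNReal.ofReal (‖z‖ ^ (-(k + δ)))) x with hg4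
  have m1' : Measurable (fun x : E => (ball (0:E) R).indicator
      (fun z => ENNReal.ofReal (‖z‖ ^ (-k))) (x - y)) :=
    ((meas_rpow_norm n k).indicator measurableSet_ball).comp
      (measurable_id.sub measurable_const)
  have m2' : Measurable (fun x : E => ((ball (0:E) R)ᶜ).indicator
      (fun z => ENNReal.ofReal (‖z‖ ^ (-(k + δ)))) (x - y)) :=
    ((meas_rpow_norm n (k + δ)).indicator measurableSet_ball.compl).comp
      (measurable_id.sub measurable_const)
  have m1 : Measurable g1 := m1'.const_mul _
  have m2 : Measurable g2 := m2'
  have m3 : Measurable g3 :=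
    (((meas_rpow_norm n δ).indicator measurableSet_ball)).const_mul _
  have m4 : Measurable g4 := (meas_rpow_norm n (k + δ)).indicator measurableSet_ball.compl
  -- pointwise a.e. bound
  have h0 : ∀ᵐ x : E ∂volume, x ≠ (0:E) := by
    refine ae_iff.2 ?_
    simpa using measure_singleton (0:E)
  have hae : ∀ᵐ x : E ∂volume,
      ENNReal.ofReal (Real.sqrt (1 + ‖x‖ ^ 2) ^ (-δ) * ‖x - y‖ ^ (-k))
        ≤ g1 x + g2 x + g3 x + g4 x := by
    filter_upwards [h0] with x hx0
    have t1 : g1 x ≤ g1 x + g2 x + g3 x + g4 x := le_add_right (le_add_right le_self_add)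
    have t2 : g2 x ≤ g1 x + g2 x + g3 x + g4 x := le_add_right (le_add_right le_add_self)
    have t3 : g3 x ≤ g1 x + g2 x + g3 x + g4 x := le_add_right le_add_self
    have t4 : g4 x ≤ g1 x + g2 x + g3 x + g4 x := le_add_self
    set s : ℝ := Real.sqrt (1 + ‖x‖ ^ 2) with hs
    have hssq : s ^ 2 = 1 + ‖x‖ ^ 2 := Real.sq_sqrt (by positivity)
    have hsnn : 0 ≤ s := Real.sqrt_nonneg _
    have hs1 : 1 ≤ s := by nlinarith [norm_nonneg x, sq_nonneg ‖x‖]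
    have hs0 : 0 < s := lt_of_lt_of_le one_pos hs1
    have hsx : ‖x‖ ≤ s := by nlinarith [norm_nonneg x]
    set d : ℝ := ‖x - y‖ with hd
    have hd0 : 0 ≤ d := norm_nonneg _
    have hLip : b ≤ s + d := by
      have hxy : ‖y‖ ≤ ‖x‖ + d := by
        have : y = x - (x - y) := by abel
        calc ‖y‖ = ‖x - (x - y)‖ := by rw [← this]
          _ ≤ ‖x‖ + ‖x - y‖ := norm_sub_le _ _
      calc b = Real.sqrt (1 + ‖y‖ ^ 2) := rfl
        _ ≤ Real.sqrt ((s + d) ^ 2) := by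
            apply Real.sqrt_le_sqrt
            nlinarith [norm_nonneg x, norm_nonneg y]
        _ = s + d := Real.sqrt_sq (by positivity)
    by_cases hcase1 : d < R
    · refine le_trans ?_ t1
      have hmem : x - y ∈ ball (0:E) R := mem_ball_zero_iff.2 hcase1
      rw [hg1]
      simp only [Set.indicator_of_mem hmem]
      rw [← ENNReal.ofReal_mul (Real.rpow_nonneg hR0.le _)]
      apply ENNReal.ofReal_le_ofReal
      have hsR : R ≤ s := by linarith
      have : s ^ (-δ) ≤ R ^ (-δ) :=
        Real.rpow_le_rpow_of_nonpos hR0 hsR (neg_nonpos.2 hδ0)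
      exact mul_le_mul_of_nonneg_right this (Real.rpow_nonneg hd0 _)
    · push_neg at hcase1
      have hdpos : 0 < d := lt_of_lt_of_le hR0 hcase1
      by_cases hcase2 : d ≤ ‖x‖
      · refine le_trans ?_ t2
        have hmem : x - y ∈ (ball (0:E) R)ᶜ := by
          simp only [mem_compl_iff, mem_ball_zero_iff, not_lt]
          exact hcase1
        rw [hg2]
        simp only [Set.indicator_of_mem hmem]
        apply ENNReal.ofReal_le_ofReal
        have h1 : s ^ (-δ) ≤ d ^ (-δ) :=
          Real.rpow_le_rpow_of_nonpos hdpos (hcase2.trans hsx) (neg_nonpos.2 hδ0)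
        calc s ^ (-δ) * d ^ (-k) ≤ d ^ (-δ) * d ^ (-k) :=
              mul_le_mul_of_nonneg_right h1 (Real.rpow_nonneg hd0 _)
          _ = d ^ (-(k + δ)) := by
              rw [← Real.rpow_add hdpos]; ring_nf
      · push_neg at hcase2
        have hxpos : 0 < ‖x‖ := norm_pos_iff.2 hx0
        by_cases hcase3 : ‖x‖ < b
        · refine le_trans ?_ t3
          have hmem : x ∈ ball (0:E) b := mem_ball_zero_iff.2 hcase3
          rw [hg3]
          simp only [Set.indicator_of_mem hmem]
          rw [← ENNReal.ofReal_mul (Real.rpow_nonneg hR0.le _)]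
          apply ENNReal.ofReal_le_ofReal
          have h1 : s ^ (-δ) ≤ ‖x‖ ^ (-δ) :=
            Real.rpow_le_rpow_of_nonpos hxpos hsx (neg_nonpos.2 hδ0)
          have h2 : d ^ (-k) ≤ R ^ (-k) :=
            Real.rpow_le_rpow_of_nonpos hR0 hcase1 (neg_nonpos.2 hk0)
          calc s ^ (-δ) * d ^ (-k) ≤ ‖x‖ ^ (-δ) * R ^ (-k) := by
                apply mul_le_mul h1 h2 (Real.rpow_nonneg hd0 _) (Real.rpow_nonneg hxpos.le _)
            _ = R ^ (-k) * ‖x‖ ^ (-δ) := by ring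
        · push_neg at hcase3
          refine le_trans ?_ t4
          have hmem : x ∈ (ball (0:E) b)ᶜ := by
            simp only [mem_compl_iff, mem_ball_zero_iff, not_lt]
            exact hcase3
          rw [hg4]
          simp only [Set.indicator_of_mem hmem]
          apply ENNReal.ofReal_le_ofReal
          have h1 : s ^ (-δ) ≤ ‖x‖ ^ (-δ) :=
            Real.rpow_le_rpow_of_nonpos hxpos hsx (neg_nonpos.2 hδ0)
          have h2 : d ^ (-k) ≤ ‖x‖ ^ (-k) :=
            Real.rpow_le_rpow_of_nonpos hxpos hcase2.le (neg_nonpos.2 hk0)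
          calc s ^ (-δ) * d ^ (-k) ≤ ‖x‖ ^ (-δ) * ‖x‖ ^ (-k) :=
                mul_le_mul h1 h2 (Real.rpow_nonneg hd0 _) (Real.rpow_nonneg hxpos.le _)
            _ = ‖x‖ ^ (-(k + δ)) := by
                rw [← Real.rpow_add hxpos]; ring_nf
  -- memberships for the scaling identities
  have hmem_ball : ∀ (ρ : ℝ), 0 < ρ → ∀ x : E, ρ⁻¹ • x ∈ ball (0:E) 1 ↔ x ∈ ball (0:E) ρ := by
    intro ρ hρ x
    rw [mem_ball_zero_iff, mem_ball_zero_iff, norm_smul, norm_inv, Real.norm_eq_abs,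
      abs_of_pos hρ, inv_mul_eq_div, div_lt_one hρ]
  have hmem_compl : ∀ (ρ : ℝ), 0 < ρ → ∀ x : E,
      ρ⁻¹ • x ∈ (ball (0:E) 1)ᶜ ↔ x ∈ (ball (0:E) ρ)ᶜ := by
    intro ρ hρ x
    simp only [mem_compl_iff, not_iff_not]
    exact hmem_ball ρ hρ x
  -- compute the four integrals
  have i1' : ∫⁻ x : E, (ball (0:E) R).indicator (fun z => ENNReal.ofReal (‖z‖ ^ (-k))) (x - y)
      = ENNReal.ofReal (R ^ ((n:ℝ) - k)) * Jk := by
    rw [lintegral_sub_right_eq_self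
      (fun x => (ball (0:E) R).indicator (fun z => ENNReal.ofReal (‖z‖ ^ (-k))) x) y]
    exact scale_identity n k _ measurableSet_ball R hR0 _ measurableSet_ball (hmem_ball R hR0)
  have i2' : ∫⁻ x : E, ((ball (0:E) R)ᶜ).indicator
      (fun z => ENNReal.ofReal (‖z‖ ^ (-(k + δ)))) (x - y)
      = ENNReal.ofReal (R ^ ((n:ℝ) - (k + δ))) * Jp := by
    rw [lintegral_sub_right_eq_self
      (fun x => ((ball (0:E) R)ᶜ).indicator (fun z => ENNReal.ofReal (‖z‖ ^ (-(k + δ)))) x) y]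
    exact scale_identity n (k + δ) _ measurableSet_ball.compl R hR0 _ measurableSet_ball.compl
      (hmem_compl R hR0)
  have i3' : ∫⁻ x : E, (ball (0:E) b).indicator (fun z => ENNReal.ofReal (‖z‖ ^ (-δ))) x
      = ENNReal.ofReal (b ^ ((n:ℝ) - δ)) * Jδ :=
    scale_identity n δ _ measurableSet_ball b hb0 _ measurableSet_ball (hmem_ball b hb0)
  have i4' : ∫⁻ x : E, ((ball (0:E) b)ᶜ).indicator
      (fun z => ENNReal.ofReal (‖z‖ ^ (-(k + δ)))) x
      = ENNReal.ofReal (b ^ ((n:ℝ) - (k + δ))) * Jp :=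
    scale_identity n (k + δ) _ measurableSet_ball.compl b hb0 _ measurableSet_ball.compl
      (hmem_compl b hb0)
  -- rewrite J's as ofReal of toReal
  have hJk' : Jk = ENNReal.ofReal c1 := by rw [hc1, ENNReal.ofReal_toReal hJk]
  have hJδ' : Jδ = ENNReal.ofReal c3 := by rw [hc3, ENNReal.ofReal_toReal hJδ]
  have hJp' : Jp = ENNReal.ofReal c2 := by rw [hc2, ENNReal.ofReal_toReal hJp]
  -- the final computation
  calc ∫⁻ x : E, ENNReal.ofReal (Real.sqrt (1 + ‖x‖ ^ 2) ^ (-δ) * ‖x - y‖ ^ (-k))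
      ≤ ∫⁻ x : E, (g1 x + g2 x + g3 x + g4 x) := lintegral_mono_ae hae
    _ = (∫⁻ x : E, g1 x) + (∫⁻ x : E, g2 x) + (∫⁻ x : E, g3 x) + (∫⁻ x : E, g4 x) := by
        rw [lintegral_add_right _ m4, lintegral_add_right _ m3, lintegral_add_right _ m2]
    _ ≤ ENNReal.ofReal (C * b ^ ((n:ℝ) - k - δ)) := by
        rw [hg1, hg2, hg3, hg4]
        rw [lintegral_const_mul _ m1', lintegral_const_mul _
          ((meas_rpow_norm n δ).indicator measurableSet_ball)]
        rw [i1', i2', i3', i4', hJk', hJδ', hJp']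
        have T1 : ENNReal.ofReal (R ^ (-δ)) *
            (ENNReal.ofReal (R ^ ((n:ℝ) - k)) * ENNReal.ofReal c1)
            = ENNReal.ofReal (R ^ (-δ) * (R ^ ((n:ℝ) - k) * c1)) := by
          rw [ENNReal.ofReal_mul (Real.rpow_nonneg hR0.le _),
            ENNReal.ofReal_mul (Real.rpow_nonneg hR0.le _)]
        have T2 : ENNReal.ofReal (R ^ ((n:ℝ) - (k + δ))) * ENNReal.ofReal c2
            = ENNReal.ofReal (R ^ ((n:ℝ) - (k + δ)) * c2) :=
          (ENNReal.ofReal_mul (Real.rpow_nonneg hR0.le _)).symm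
        have T3 : ENNReal.ofReal (R ^ (-k)) *
            (ENNReal.ofReal (b ^ ((n:ℝ) - δ)) * ENNReal.ofReal c3)
            = ENNReal.ofReal (R ^ (-k) * (b ^ ((n:ℝ) - δ) * c3)) := by
          rw [ENNReal.ofReal_mul (Real.rpow_nonneg hR0.le _),
            ENNReal.ofReal_mul (Real.rpow_nonneg hbnn _)]
        have T4 : ENNReal.ofReal (b ^ ((n:ℝ) - (k + δ))) * ENNReal.ofReal c2
            = ENNReal.ofReal (b ^ ((n:ℝ) - (k + δ)) * c2) :=
          (ENNReal.ofReal_mul (Real.rpow_nonneg hbnn _)).symm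
        rw [T1, T2, T3, T4,
          ← ENNReal.ofReal_add (by positivity) (by positivity),
          ← ENNReal.ofReal_add (by positivity) (by positivity),
          ← ENNReal.ofReal_add (by positivity) (by positivity)]
        apply ENNReal.ofReal_le_ofReal
        -- now a pure real computation
        have hbz : ∀ z : ℝ, R ^ z = 2 ^ (-z) * b ^ z := by
          intro z
          rw [hRdef, Real.div_rpow hbnn (by norm_num : (0:ℝ) ≤ 2), div_eq_mul_inv,
            ← Real.rpow_neg (by norm_num : (0:ℝ) ≤ 2), mul_comm]
        have hbm : ∀ u v : ℝ, b ^ u * b ^ v = b ^ (u + v) :=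
          fun u v => (Real.rpow_add hb0 u v).symm
        have h2m : ∀ u v : ℝ, (2:ℝ) ^ u * 2 ^ v = 2 ^ (u + v) :=
          fun u v => (Real.rpow_add (by norm_num) u v).symm
        have e1 : R ^ (-δ) * (R ^ ((n:ℝ) - k) * c1)
            = 2 ^ (k + δ - (n:ℝ)) * c1 * b ^ ((n:ℝ) - k - δ) := by
          calc R ^ (-δ) * (R ^ ((n:ℝ) - k) * c1)
              = (2 ^ δ * b ^ (-δ)) * ((2 ^ (-((n:ℝ) - k)) * b ^ ((n:ℝ) - k)) * c1) := by
                rw [hbz, hbz, neg_neg]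
            _ = (2 ^ δ * 2 ^ (-((n:ℝ) - k))) * (b ^ (-δ) * b ^ ((n:ℝ) - k)) * c1 := by ring
            _ = 2 ^ (k + δ - (n:ℝ)) * c1 * b ^ ((n:ℝ) - k - δ) := by
                rw [hbm, h2m, show δ + -((n:ℝ) - k) = k + δ - (n:ℝ) by ring,
                  show -δ + ((n:ℝ) - k) = (n:ℝ) - k - δ by ring]
                ring
        have e2 : R ^ ((n:ℝ) - (k + δ)) * c2
            = 2 ^ (k + δ - (n:ℝ)) * c2 * b ^ ((n:ℝ) - k - δ) := by
          rw [hbz, show -((n:ℝ) - (k + δ)) = k + δ - (n:ℝ) by ring,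
            show (n:ℝ) - (k + δ) = (n:ℝ) - k - δ by ring]
          ring
        have e3 : R ^ (-k) * (b ^ ((n:ℝ) - δ) * c3)
            = 2 ^ k * c3 * b ^ ((n:ℝ) - k - δ) := by
          calc R ^ (-k) * (b ^ ((n:ℝ) - δ) * c3)
              = (2 ^ k * b ^ (-k)) * (b ^ ((n:ℝ) - δ) * c3) := by rw [hbz, neg_neg]
            _ = 2 ^ k * (b ^ (-k) * b ^ ((n:ℝ) - δ)) * c3 := by ring
            _ = 2 ^ k * c3 * b ^ ((n:ℝ) - k - δ) := by
                rw [hbm, show -k + ((n:ℝ) - δ) = (n:ℝ) - k - δ by ring]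
                ring
        have e4 : b ^ ((n:ℝ) - (k + δ)) * c2 = c2 * b ^ ((n:ℝ) - k - δ) := by
          rw [show (n:ℝ) - (k + δ) = (n:ℝ) - k - δ by ring]; ring
        rw [e1, e2, e3, e4, hC]
        have hbp : 0 < b ^ ((n:ℝ) - k - δ) := Real.rpow_pos_of_pos hb0 _
        nlinarith [hbp]
end

section
/- Let m > 0 and 0 < z₁ ≤ 1/2. Then there is a constant C (depending only on m, z₁) such that for every continuously differentiable function E : (0,∞) → ℂ supported in (0, z₁) and satisfying |E(z)| ≤ z^{−2}(log z)^{−2} and |E′(z)| ≤ z^{−3}(log z)^{−2} for all z ∈ (0, z₁), and for every t > 2: | ∫₀^∞ e^{−it√(z²+m²)} · (z/√(z²+m²)) · E(z) dz | ≤ C / log t. -/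
open MeasureTheory Set

/- ## Auxiliary lemmas about 1/(z log² z) -/

lemma aux_cont_h {b : ℝ} (hb : 0 < b) (hb' : b ≤ 1/2) :
    ContinuousOn (fun z : ℝ => -1 / Real.log z) (Icc 0 b) := by
  intro x hx
  rcases eq_or_lt_of_le hx.1 with h0 | h0
  · subst h0
    have h1 : Filter.Tendsto (fun z : ℝ => -1 / Real.log z) (nhdsWithin 0 (Ioi 0)) (nhds 0) := by
      have h2 : Filter.Tendsto (fun z : ℝ => -Real.log z) (nhdsWithin 0 (Ioi 0)) Filter.atTop :=
        Filter.tendsto_neg_atTop_iff.2 Real.tendsto_log_nhdsGT_zero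
      have h3 := h2.inv_tendsto_atTop
      refine h3.congr (fun z => ?_)
      simp [Pi.inv_apply, neg_div, ← one_div, div_neg]
    have h4 : ContinuousWithinAt (fun z : ℝ => -1 / Real.log z) (Ioi 0) 0 := by
      unfold ContinuousWithinAt
      simpa [Real.log_zero] using h1
    have h5 : ContinuousWithinAt (fun z : ℝ => -1 / Real.log z) (Ici 0) 0 :=
      continuousWithinAt_Ioi_iff_Ici.1 h4
    exact h5.mono (fun y hy => hy.1)
  · have hlx : Real.log x < 0 := Real.log_neg h0 (lt_of_le_of_lt hx.2 (by linarith))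
    exact ContinuousAt.continuousWithinAt
      ((continuous_const.continuousAt).div (Real.continuousAt_log h0.ne') hlx.ne)

lemma aux_hderiv {x : ℝ} (h0 : 0 < x) (h1 : x < 1) :
    HasDerivAt (fun z : ℝ => -1 / Real.log z) (1 / (x * Real.log x ^ 2)) x := by
  have hlx : Real.log x < 0 := Real.log_neg h0 h1
  have hd : HasDerivAt (fun z : ℝ => (Real.log z)⁻¹) (-(x⁻¹) / (Real.log x) ^ 2) x :=
    (Real.hasDerivAt_log h0.ne').inv hlx.ne
  have := hd.neg
  have e : (-fun z : ℝ => (Real.log z)⁻¹) = (fun z : ℝ => -1 / Real.log z) := by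
    funext z; simp only [Pi.neg_apply, neg_div, one_div]
  rw [e] at this
  refine this.congr_deriv ?_
  rw [neg_div, neg_neg, one_div, mul_inv, div_eq_mul_inv]

lemma aux_integrable {b : ℝ} (hb : 0 < b) (hb' : b ≤ 1/2) :
    IntegrableOn (fun z : ℝ => 1 / (z * Real.log z ^ 2)) (Ioc 0 b) := by
  refine intervalIntegral.integrableOn_deriv_of_nonneg (aux_cont_h hb hb')
    (fun x hx => aux_hderiv hx.1 (by linarith [hx.2])) (fun x hx => ?_)
  have hlx : Real.log x ≠ 0 := (Real.log_neg hx.1 (by linarith [hx.2])).ne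
  have hx0 : 0 < x := hx.1
  positivity

lemma aux_value {b : ℝ} (hb : 0 < b) (hb' : b ≤ 1/2) :
    ∫ z in Ioc 0 b, 1 / (z * Real.log z ^ 2) = -1 / Real.log b := by
  have := intervalIntegral.integral_eq_sub_of_hasDeriv_right_of_le hb.le (aux_cont_h hb hb')
    (fun x hx => (aux_hderiv hx.1 (by linarith [hx.2])).hasDerivWithinAt)
    ((intervalIntegrable_iff_integrableOn_Ioc_of_le hb.le).2 (aux_integrable hb hb'))
  rw [intervalIntegral.integral_of_le hb.le] at this
  rw [this, Real.log_zero]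
  norm_num

/- ## The phase function and its derivative -/

lemma phi_pos (m z : ℝ) (hm : 0 < m) : 0 < Real.sqrt (z ^ 2 + m ^ 2) :=
  Real.sqrt_pos.2 (by positivity)

lemma phi_ge (m z : ℝ) (hm : 0 ≤ m) : m ≤ Real.sqrt (z ^ 2 + m ^ 2) :=
  le_trans (le_of_eq (Real.sqrt_sq hm).symm) (Real.sqrt_le_sqrt (by nlinarith))

lemma phi_hasDeriv (m z : ℝ) (hm : 0 < m) :
    HasDerivAt (fun z : ℝ => Real.sqrt (z ^ 2 + m ^ 2)) (z / Real.sqrt (z ^ 2 + m ^ 2)) z := by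
  have hp : HasDerivAt (fun z : ℝ => z ^ 2 + m ^ 2) (2 * z) z := by
    simpa using (hasDerivAt_pow 2 z).add_const (m ^ 2)
  have h0 : z ^ 2 + m ^ 2 ≠ 0 := by positivity
  have h := (Real.hasDerivAt_sqrt h0).comp z hp
  refine h.congr_deriv ?_
  have hs : 0 < Real.sqrt (z ^ 2 + m ^ 2) := phi_pos m z hm
  field_simp

noncomputable def gg (m t : ℝ) : ℝ → ℂ :=
  fun z => Complex.exp (-Complex.I * ((t * Real.sqrt (z ^ 2 + m ^ 2) : ℝ) : ℂ))

noncomputable def ggd (m t : ℝ) : ℝ → ℂ :=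
  fun z => gg m t z * (-Complex.I * ((t * (z / Real.sqrt (z ^ 2 + m ^ 2)) : ℝ) : ℂ))

noncomputable def ff (m t : ℝ) (E : ℝ → ℂ) : ℝ → ℂ :=
  fun z => gg m t z * ((z / Real.sqrt (z ^ 2 + m ^ 2) : ℝ) : ℂ) * E z

lemma psi_cont (m : ℝ) (hm : 0 < m) :
    Continuous (fun z : ℝ => z / Real.sqrt (z ^ 2 + m ^ 2)) := by
  apply Continuous.div continuous_id
  · exact Real.continuous_sqrt.comp (by continuity)
  · exact fun z => (phi_pos m z hm).ne'

lemma gg_cont (m t : ℝ) : Continuous (gg m t) := by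
  unfold gg
  apply Complex.continuous_exp.comp
  apply Continuous.mul continuous_const
  exact Complex.continuous_ofReal.comp (continuous_const.mul (Real.continuous_sqrt.comp (by continuity)))

lemma ggd_cont (m t : ℝ) (hm : 0 < m) : Continuous (ggd m t) := by
  unfold ggd
  exact (gg_cont m t).mul (continuous_const.mul
    (Complex.continuous_ofReal.comp (continuous_const.mul (psi_cont m hm))))

lemma gg_norm (m t z : ℝ) : ‖gg m t z‖ = 1 := by
  unfold gg
  rw [Complex.norm_exp]
  simp

lemma gg_hasDeriv (m t z : ℝ) (hm : 0 < m) : HasDerivAt (gg m t) (ggd m t z) z := by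
  have h1 : HasDerivAt (fun z : ℝ => t * Real.sqrt (z ^ 2 + m ^ 2))
      (t * (z / Real.sqrt (z ^ 2 + m ^ 2))) z := (phi_hasDeriv m z hm).const_mul t
  have h2 := h1.ofReal_comp
  have h3 := HasDerivAt.const_mul (-Complex.I) h2
  exact h3.cexp


lemma rpow_neg_three {x : ℝ} (hx : 0 < x) : x ^ (-3:ℝ) = (x^3)⁻¹ := by
  rw [show (-3:ℝ) = -((3:ℕ):ℝ) by norm_num, Real.rpow_neg hx.le, Real.rpow_natCast]

set_option maxHeartbeats 2000000 in
theorem stmt9 (m z₁ : ℝ) (hm : 0 < m) (hz₁ : 0 < z₁) (hz₁' : z₁ ≤ 1/2) :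
    ∃ C : ℝ, 0 < C ∧ ∀ E : ℝ → ℂ, ContDiffOn ℝ 1 E (Set.Ioi 0) →
      (∀ z : ℝ, z₁ ≤ z → E z = 0) →
      (∀ z : ℝ, 0 < z → z < z₁ → ‖E z‖ ≤ 1 / (z ^ 2 * Real.log z ^ 2)) →
      (∀ z : ℝ, 0 < z → z < z₁ → ‖deriv E z‖ ≤ 1 / (z ^ 3 * Real.log z ^ 2)) →
      ∀ t : ℝ, 2 < t →
        ‖∫ z in Set.Ioi (0 : ℝ),
            Complex.exp (-Complex.I * ((t * Real.sqrt (z ^ 2 + m ^ 2) : ℝ) : ℂ)) *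
              ((z / Real.sqrt (z ^ 2 + m ^ 2) : ℝ) : ℂ) * E z‖
          ≤ C / Real.log t := by
  have hlz₁ : Real.log z₁ < 0 := Real.log_neg hz₁ (by linarith)
  have hlz₁' : Real.log z₁ ≠ 0 := hlz₁.ne
  have hlog2 : (0:ℝ) < Real.log 2 := Real.log_pos (by norm_num)
  refine ⟨2 / m + 12 / Real.log 2 + 16 / 3 / Real.log z₁ ^ 2, by positivity, ?_⟩
  intro E hE hE0 hEb hEb' t ht
  have ht0 : (0:ℝ) < t := by linarith
  have ht1 : (1:ℝ) < t := by linarith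
  have hL : 0 < Real.log t := Real.log_pos ht1
  have hL2 : Real.log 2 < Real.log t := by
    have := Real.log_lt_log (by norm_num : (0:ℝ) < 2) ht
    exact this
  set L := Real.log t with hLdef
  show ‖∫ z in Set.Ioi (0:ℝ), ff m t E z‖ ≤ (2 / m + 12 / Real.log 2 + 16 / 3 / Real.log z₁ ^ 2) / L
  -- basic continuity facts
  have hEc : ContinuousOn E (Ioi 0) := hE.continuousOn
  have hffc : ContinuousOn (ff m t E) (Ioi 0) := by
    apply ContinuousOn.mul _ hEc
    exact ((gg_cont m t).mul (Complex.continuous_ofReal.comp (psi_cont m hm))).continuousOn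
  -- norm formula and pointwise bound
  have hpsi_nonneg : ∀ z : ℝ, 0 ≤ z → 0 ≤ z / Real.sqrt (z ^ 2 + m ^ 2) :=
    fun z hz => div_nonneg hz (Real.sqrt_nonneg _)
  have hffnorm : ∀ z : ℝ, ‖ff m t E z‖ = |z / Real.sqrt (z ^ 2 + m ^ 2)| * ‖E z‖ := by
    intro z
    unfold ff
    rw [norm_mul, norm_mul, gg_norm, Complex.norm_real, Real.norm_eq_abs, one_mul]
  have hfb : ∀ z ∈ Ioc (0:ℝ) z₁, ‖ff m t E z‖ ≤ 1/m * (1 / (z * Real.log z ^ 2)) := by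
    intro z hz
    obtain ⟨hz0, hzz⟩ := hz
    rw [hffnorm z, abs_of_nonneg (hpsi_nonneg z hz0.le)]
    rcases eq_or_lt_of_le hzz with heq | hlt
    · subst heq
      rw [hE0 z le_rfl, norm_zero, mul_zero]
      have h5 : Real.log z ≠ 0 := (Real.log_neg hz0 (by linarith)).ne
      positivity
    · have h1 := hEb z hz0 hlt
      have hlz : Real.log z ≠ 0 := (Real.log_neg hz0 (by linarith)).ne
      have h2 : z / Real.sqrt (z ^ 2 + m ^ 2) ≤ z / m := by
        gcongr
        exacts [phi_ge m z hm.le]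
      calc z / Real.sqrt (z^2+m^2) * ‖E z‖ ≤ (z/m) * (1/(z^2 * Real.log z^2)) :=
            mul_le_mul h2 h1 (norm_nonneg _) (by positivity)
        _ = 1/m * (1/(z * Real.log z^2)) := by field_simp
  -- integrability on (0, z₁]
  have hffi : IntegrableOn (ff m t E) (Ioc 0 z₁) := by
    refine Integrable.mono' ((aux_integrable hz₁ hz₁').const_mul (1/m))
      ((hffc.mono Ioc_subset_Ioi_self).aestronglyMeasurable measurableSet_Ioc) ?_
    exact (ae_restrict_iff' measurableSet_Ioc).2 (Filter.Eventually.of_forall hfb)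
  -- reduce to (0, z₁]
  have hred : ∫ z in Set.Ioi (0:ℝ), ff m t E z = ∫ z in Ioc 0 z₁, ff m t E z := by
    have hzero : ∀ z ∈ Ioi z₁, ff m t E z = 0 := by
      intro z hz
      unfold ff
      rw [hE0 z (le_of_lt hz), mul_zero]
    have hint2 : IntegrableOn (ff m t E) (Ioi z₁) := by
      rw [integrableOn_congr_fun hzero measurableSet_Ioi]
      exact integrableOn_zero
    rw [← Ioc_union_Ioi_eq_Ioi hz₁.le,
      setIntegral_union (Ioc_disjoint_Ioi le_rfl) measurableSet_Ioi hffi hint2,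
      setIntegral_congr_fun measurableSet_Ioi hzero, integral_zero, add_zero]
  rw [hred]
  set d : ℝ := t ^ (-(1:ℝ)/2) with hddef
  have hd0 : 0 < d := Real.rpow_pos_of_pos ht0 _
  have hlogd : Real.log d = -(1/2) * L := by
    rw [hddef, Real.log_rpow ht0]; ring
  by_cases hcase : z₁ ≤ d
  · -- trivial bound suffices
    have hnb := MeasureTheory.norm_integral_le_of_norm_le ((aux_integrable hz₁ hz₁').const_mul (1/m))
      ((ae_restrict_iff' measurableSet_Ioc).2 (Filter.Eventually.of_forall hfb))
    have hval : ∫ z in Ioc (0:ℝ) z₁, 1/m * (1 / (z * Real.log z ^ 2)) = 1/m * (-1/Real.log z₁) := by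
      rw [integral_const_mul, aux_value hz₁ hz₁']
    rw [hval] at hnb
    have hle : Real.log z₁ ≤ -(1/2) * L := by
      rw [← hlogd]; exact Real.log_le_log hz₁ hcase
    have h1 : 1/m * (-1/Real.log z₁) ≤ (2/m)/L := by
      have hmid : 1/(-Real.log z₁) ≤ 2/L := by
        rw [div_le_div_iff₀ (by linarith) hL]
        linarith
      calc 1/m * (-1/Real.log z₁) = 1/m * (1/(-Real.log z₁)) := by ring_nf
        _ ≤ 1/m * (2/L) := mul_le_mul_of_nonneg_left hmid (by positivity)
        _ = (2/m)/L := by ring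
    have h2 : (2/m)/L ≤ (2 / m + 12 / Real.log 2 + 16 / 3 / Real.log z₁ ^ 2) / L := by
      have h3 : (0:ℝ) < 12 / Real.log 2 := by positivity
      have h4 : (0:ℝ) < 16 / 3 / Real.log z₁ ^ 2 := by positivity
      apply div_le_div_of_nonneg_right (by linarith) hL.le
    linarith
  · push_neg at hcase   -- hcase : d < z₁
    have hdz1 : d ≤ z₁ := hcase.le
    have hdhalf : d ≤ 1/2 := le_trans hdz1 hz₁'
    have hsub : Icc d z₁ ⊆ Ioi (0:ℝ) := fun x hx => lt_of_lt_of_le hd0 hx.1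
    rw [← intervalIntegral.integral_of_le hz₁.le]
    have hii1 : IntervalIntegrable (ff m t E) volume 0 d :=
      (intervalIntegrable_iff_integrableOn_Ioc_of_le hd0.le).2
        (hffi.mono_set (Ioc_subset_Ioc_right hdz1))
    have hii2 : IntervalIntegrable (ff m t E) volume d z₁ :=
      (intervalIntegrable_iff_integrableOn_Ioc_of_le hdz1).2
        (hffi.mono_set (Ioc_subset_Ioc_left hd0.le))
    rw [← intervalIntegral.integral_add_adjacent_intervals hii1 hii2]
    -- Part A : the piece near 0
    have hA : ‖∫ x in (0:ℝ)..d, ff m t E x‖ ≤ (2/m)/L := by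
      rw [intervalIntegral.integral_of_le hd0.le]
      have hnb := MeasureTheory.norm_integral_le_of_norm_le
        ((aux_integrable hd0 hdhalf).const_mul (1/m))
        ((ae_restrict_iff' measurableSet_Ioc).2 (Filter.Eventually.of_forall
          (fun z hz => hfb z (Ioc_subset_Ioc_right hdz1 hz))))
      have hval : ∫ z in Ioc (0:ℝ) d, 1/m * (1 / (z * Real.log z ^ 2)) = 1/m * (-1/Real.log d) := by
        rw [integral_const_mul, aux_value hd0 hdhalf]
      rw [hval] at hnb
      have heq2 : 1/m * (-1/Real.log d) = (2/m)/L := by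
        rw [hlogd]
        field_simp
      linarith
    -- derivative infrastructure
    have hEdiff : ∀ x : ℝ, 0 < x → HasDerivAt E (deriv E x) x := fun x hx =>
      ((hE.differentiableOn (by norm_num)).differentiableAt (isOpen_Ioi.mem_nhds hx)).hasDerivAt
    have hderivc : ContinuousOn (deriv E) (Ioi 0) := by
      have h1 := hE.continuousOn_derivWithin isOpen_Ioi.uniqueDiffOn le_rfl
      exact h1.congr fun x hx => (derivWithin_of_isOpen isOpen_Ioi hx).symm
    -- integration by parts
    have hu : ContinuousOn (gg m t) (uIcc d z₁) := (gg_cont m t).continuousOn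
    have hv : ContinuousOn E (uIcc d z₁) := by rw [uIcc_of_le hdz1]; exact hEc.mono hsub
    have huu' : ∀ x ∈ Ioo (d ⊓ z₁) (d ⊔ z₁), HasDerivAt (gg m t) (ggd m t x) x :=
      fun x _ => gg_hasDeriv m t x hm
    have hvv' : ∀ x ∈ Ioo (d ⊓ z₁) (d ⊔ z₁), HasDerivAt E (deriv E x) x := by
      intro x hx
      rw [inf_of_le_left hdz1] at hx
      exact hEdiff x (lt_trans hd0 hx.1)
    have hu' : IntervalIntegrable (ggd m t) volume d z₁ :=
      ((ggd_cont m t hm).continuousOn).intervalIntegrable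
    have hv' : IntervalIntegrable (deriv E) volume d z₁ := by
      apply ContinuousOn.intervalIntegrable
      rw [uIcc_of_le hdz1]
      exact hderivc.mono hsub
    have hibp := intervalIntegral.integral_deriv_mul_eq_sub_of_hasDerivAt hu hv huu' hvv' hu' hv'
    rw [hE0 z₁ le_rfl, mul_zero, zero_sub] at hibp
    have hgdE : IntervalIntegrable (fun x => ggd m t x * E x) volume d z₁ := by
      apply ContinuousOn.intervalIntegrable
      rw [uIcc_of_le hdz1]
      exact ((ggd_cont m t hm).continuousOn).mul (hEc.mono hsub)
    have hgE' : IntervalIntegrable (fun x => gg m t x * deriv E x) volume d z₁ := by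
      apply ContinuousOn.intervalIntegrable
      rw [uIcc_of_le hdz1]
      exact ((gg_cont m t).continuousOn).mul (hderivc.mono hsub)
    rw [intervalIntegral.integral_add hgdE hgE'] at hibp
    have heq1 : (∫ x in d..z₁, ggd m t x * E x)
        = -(gg m t d * E d) - ∫ x in d..z₁, gg m t x * deriv E x := by
      rw [eq_sub_iff_add_eq]
      exact hibp
    have htne : (t:ℂ) ≠ 0 := by
      simp only [ne_eq, Complex.ofReal_eq_zero]
      exact ht0.ne'
    have hfd : ∀ x : ℝ, ff m t E x = (Complex.I / (t:ℂ)) * (ggd m t x * E x) := by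
      intro x
      unfold ff ggd
      push_cast
      rw [div_mul_eq_mul_div, eq_div_iff htne]
      linear_combination (gg m t x * (t:ℂ) * (((x:ℝ):ℂ)/((Real.sqrt (x^2+m^2):ℝ):ℂ)) * E x) *
        Complex.I_mul_I
    have hintd : ∫ x in d..z₁, ff m t E x
        = (Complex.I / (t:ℂ)) * ((∫ x in d..z₁, ggd m t x * E x)) := by
      simp_rw [hfd]
      exact intervalIntegral.integral_const_mul _ _
    rw [heq1] at hintd
    -- deriv E vanishes at z₁
    have hEd0 : deriv E z₁ = 0 := by
      have h1 : HasDerivWithinAt E 0 (Ici z₁) z₁ :=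
        (hasDerivWithinAt_const z₁ _ (0:ℂ)).congr (fun x hx => hE0 x hx) (hE0 z₁ le_rfl)
      have h2 : HasDerivWithinAt E (deriv E z₁) (Ici z₁) z₁ := (hEdiff z₁ hz₁).hasDerivWithinAt
      have h3 := h1.derivWithin (uniqueDiffOn_Ici z₁ z₁ self_mem_Ici)
      have h4 := h2.derivWithin (uniqueDiffOn_Ici z₁ z₁ self_mem_Ici)
      rw [← h4, h3]
    -- exponent arithmetic
    have hd2 : d ^ (-2:ℝ) = t := by
      rw [hddef, ← Real.rpow_mul ht0.le]
      norm_num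
    have hd12 : d ^ (-(1:ℝ)/2) = t ^ ((1:ℝ)/4) := by
      rw [hddef, ← Real.rpow_mul ht0.le]
      norm_num
    set c2 : ℝ := t ^ ((3:ℝ)/8) / Real.log z₁ ^ 2 with hc2def
    have hc2 : 0 ≤ c2 := by
      rw [hc2def]
      positivity
    set W : ℝ → ℝ := fun x => 16 / L^2 * x ^ (-3:ℝ) + c2 * x ^ (-(3:ℝ)/2) with hWdef
    -- pointwise bound on the differentiated integrand
    have hWptw : ∀ x ∈ Ioc d z₁, ‖gg m t x * deriv E x‖ ≤ W x := by
      intro x hx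
      have hx0 : 0 < x := lt_trans hd0 hx.1
      rw [norm_mul, gg_norm, one_mul]
      rcases eq_or_lt_of_le hx.2 with heq | hlt
      · rw [heq, hEd0, norm_zero]
        simp only [hWdef]
        have u1 : (0:ℝ) ≤ z₁ ^ (-3:ℝ) := Real.rpow_nonneg hz₁.le _
        have u2 : (0:ℝ) ≤ z₁ ^ (-(3:ℝ)/2) := Real.rpow_nonneg hz₁.le _
        have u3 : (0:ℝ) ≤ 16/L^2 := by positivity
        nlinarith [mul_nonneg hc2 u2, mul_nonneg u3 u1]
      · have h1 := hEb' x hx0 hlt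
        have hx1 : x < 1 := by linarith
        have hlx : Real.log x < 0 := Real.log_neg hx0 hx1
        refine le_trans h1 ?_
        by_cases hsplitx : x ≤ t ^ (-(1:ℝ)/4)
        · have h2 : Real.log x ≤ -(1/4) * L := by
            calc Real.log x ≤ Real.log (t ^ (-(1:ℝ)/4)) := Real.log_le_log hx0 hsplitx
              _ = -(1/4) * L := by rw [Real.log_rpow ht0]; ring
          have h3 : L^2/16 ≤ Real.log x ^ 2 := by
            have hh := mul_self_le_mul_self (by linarith : (0:ℝ) ≤ L/4)
              (by linarith : L/4 ≤ -Real.log x)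
            nlinarith [hh]
          have key : 1/(x^3 * Real.log x^2) ≤ 16/L^2 * x ^ (-3:ℝ) := by
            rw [rpow_neg_three hx0]
            have e4 : 16/L^2 * (x^3)⁻¹ = 16/(L^2 * x^3) := by
              field_simp
            rw [e4, div_le_div_iff₀ (mul_pos (pow_pos hx0 3) (pow_two_pos_of_ne_zero hlx.ne))
              (mul_pos (pow_two_pos_of_ne_zero hL.ne') (pow_pos hx0 3))]
            have hmm := mul_le_mul_of_nonneg_left h3 (pow_pos hx0 3).le
            nlinarith [hmm]
          have hterm2 : 0 ≤ c2 * x ^ (-(3:ℝ)/2) :=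
            mul_nonneg hc2 (Real.rpow_nonneg hx0.le _)
          simp only [hWdef]
          linarith
        · push_neg at hsplitx
          have hrp : 0 < t ^ (-(1:ℝ)/4) := Real.rpow_pos_of_pos ht0 _
          have h2 : x ^ (-(3:ℝ)/2) ≤ (t ^ (-(1:ℝ)/4)) ^ (-(3:ℝ)/2) :=
            Real.rpow_le_rpow_of_nonpos hrp hsplitx.le (by norm_num)
          have h3 : (t ^ (-(1:ℝ)/4)) ^ (-(3:ℝ)/2) = t ^ ((3:ℝ)/8) := by
            rw [← Real.rpow_mul ht0.le]
            norm_num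
          rw [h3] at h2
          have h4 : Real.log x ≤ Real.log z₁ := Real.log_le_log hx0 hx.2
          have h5 : Real.log z₁ ^ 2 ≤ Real.log x ^ 2 := by
            have hh := mul_self_le_mul_self (by linarith : (0:ℝ) ≤ -Real.log z₁)
              (by linarith : -Real.log z₁ ≤ -Real.log x)
            nlinarith [hh]
          have key : 1/(x^3 * Real.log x^2) ≤ c2 * x ^ (-(3:ℝ)/2) := by
            have e3 : x ^ (-(3:ℝ)/2) * x ^ (-(3:ℝ)/2) = (x^3)⁻¹ := by
              rw [← Real.rpow_add hx0, show (-(3:ℝ)/2 + -(3:ℝ)/2) = (-3:ℝ) by norm_num,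
                rpow_neg_three hx0]
            calc 1/(x^3 * Real.log x^2) ≤ 1/(x^3 * Real.log z₁^2) := by
                  apply one_div_le_one_div_of_le (by positivity) ?_
                  exact mul_le_mul_of_nonneg_left h5 (pow_pos hx0 3).le
              _ = (x ^ (-(3:ℝ)/2) * x ^ (-(3:ℝ)/2))/Real.log z₁^2 := by rw [e3]; ring
              _ ≤ (t^((3:ℝ)/8) * x ^ (-(3:ℝ)/2))/Real.log z₁^2 := by
                  have hxx : 0 ≤ x ^ (-(3:ℝ)/2) := Real.rpow_nonneg hx0.le _
                  have hnum : x ^ (-(3:ℝ)/2) * x ^ (-(3:ℝ)/2) ≤ t^((3:ℝ)/8) * x ^ (-(3:ℝ)/2) :=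
                    mul_le_mul_of_nonneg_right h2 hxx
                  apply div_le_div_of_nonneg_right hnum (by positivity)
              _ = c2 * x ^ (-(3:ℝ)/2) := by rw [hc2def]; ring
          have hterm1 : 0 ≤ 16/L^2 * x ^ (-3:ℝ) := by
            have := Real.rpow_nonneg hx0.le (-3:ℝ)
            positivity
          simp only [hWdef]
          linarith
    -- boundary term
    have hbd : ‖E d‖ ≤ 4*t/L^2 := by
      have h1 := hEb d hd0 hcase
      have hd2' : d ^ 2 = t⁻¹ := by
        have h2 : d ^ ((2:ℕ):ℝ) = t ^ (-(1:ℝ)) := by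
          rw [hddef, ← Real.rpow_mul ht0.le]
          norm_num
        rw [← Real.rpow_natCast d 2, h2, Real.rpow_neg_one]
      calc ‖E d‖ ≤ 1/(d^2 * Real.log d^2) := h1
        _ = 4*t/L^2 := by
            rw [hd2', hlogd]
            field_simp
            ring
    -- integral of W
    have hrc : ∀ r : ℝ, ContinuousOn (fun x : ℝ => x ^ r) (Icc d z₁) := by
      intro r x hx
      exact (Real.continuousAt_rpow_const x r
        (Or.inl (ne_of_gt (lt_of_lt_of_le hd0 hx.1)))).continuousWithinAt
    have hW1 : IntervalIntegrable (fun x : ℝ => 16/L^2 * x ^ (-3:ℝ)) volume d z₁ := by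
      apply ContinuousOn.intervalIntegrable
      rw [uIcc_of_le hdz1]
      exact continuousOn_const.mul (hrc _)
    have hW2 : IntervalIntegrable (fun x : ℝ => c2 * x ^ (-(3:ℝ)/2)) volume d z₁ := by
      apply ContinuousOn.intervalIntegrable
      rw [uIcc_of_le hdz1]
      exact continuousOn_const.mul (hrc _)
    have hWint : IntervalIntegrable W volume d z₁ := by
      simp only [hWdef]
      exact hW1.add hW2
    have h0not : (0:ℝ) ∉ uIcc d z₁ := by
      rw [uIcc_of_le hdz1]
      intro h
      exact absurd h.1 (not_le.2 hd0)
    have hi3 : ∫ x in d..z₁, x ^ (-3:ℝ) = (z₁ ^ (-2:ℝ) - d ^ (-2:ℝ))/(-2) := by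
      rw [integral_rpow (Or.inr ⟨by norm_num, h0not⟩)]
      norm_num
    have hi32 : ∫ x in d..z₁, x ^ (-(3:ℝ)/2) = (z₁ ^ (-(1:ℝ)/2) - d ^ (-(1:ℝ)/2))/(-(1:ℝ)/2) := by
      rw [integral_rpow (Or.inr ⟨by norm_num, h0not⟩)]
      norm_num
    have hzA : z₁ ^ (-2:ℝ) ≤ d ^ (-2:ℝ) := Real.rpow_le_rpow_of_nonpos hd0 hdz1 (by norm_num)
    have hzB : z₁ ^ (-(1:ℝ)/2) ≤ d ^ (-(1:ℝ)/2) := Real.rpow_le_rpow_of_nonpos hd0 hdz1 (by norm_num)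
    have hzA0 : 0 ≤ z₁ ^ (-2:ℝ) := Real.rpow_nonneg hz₁.le _
    have hzB0 : 0 ≤ z₁ ^ (-(1:ℝ)/2) := Real.rpow_nonneg hz₁.le _
    have hL2' : (0:ℝ) < L^2 := by positivity
    have hWval : |∫ x in d..z₁, W x| ≤ 8*t/L^2 + c2 * (2 * t ^ ((1:ℝ)/4)) := by
      have hval : ∫ x in d..z₁, W x = 16/L^2 * ((z₁ ^ (-2:ℝ) - d ^ (-2:ℝ))/(-2))
          + c2 * ((z₁ ^ (-(1:ℝ)/2) - d ^ (-(1:ℝ)/2))/(-(1:ℝ)/2)) := by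
        simp only [hWdef]
        rw [intervalIntegral.integral_add hW1 hW2,
          intervalIntegral.integral_const_mul, intervalIntegral.integral_const_mul, hi3, hi32]
      rw [hval, hd2, hd12]
      have p1 : z₁ ^ (-2:ℝ) ≤ t := by rw [← hd2]; exact hzA
      have p2 : z₁ ^ (-(1:ℝ)/2) ≤ t ^ ((1:ℝ)/4) := by rw [← hd12]; exact hzB
      have q1 : 8*(z₁ ^ (-2:ℝ))/L^2 ≤ 8*t/L^2 := by
        apply div_le_div_of_nonneg_right (by linarith) hL2'.le
      have q1' : 0 ≤ 8*(z₁ ^ (-2:ℝ))/L^2 := by positivity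
      have q2 : 2*c2*(z₁ ^ (-(1:ℝ)/2)) ≤ 2*c2*(t ^ ((1:ℝ)/4)) := by
        apply mul_le_mul_of_nonneg_left p2 (by linarith)
      have q2' : 0 ≤ 2*c2*(z₁ ^ (-(1:ℝ)/2)) := by
        apply mul_nonneg (by linarith) hzB0
      have e1 : 16/L^2 * ((z₁ ^ (-2:ℝ) - t)/(-2)) + c2 * ((z₁ ^ (-(1:ℝ)/2) - t ^ ((1:ℝ)/4))/(-(1:ℝ)/2))
          = (8*t/L^2 - 8*(z₁ ^ (-2:ℝ))/L^2) + (2*c2*(t ^ ((1:ℝ)/4)) - 2*c2*(z₁ ^ (-(1:ℝ)/2))) := by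
        field_simp
        ring
      rw [e1, abs_of_nonneg (by linarith)]
      linarith
    -- bound for the oscillatory remainder integral
    have hosc : ‖∫ x in d..z₁, gg m t x * deriv E x‖ ≤ 8*t/L^2 + c2 * (2 * t ^ ((1:ℝ)/4)) := by
      refine le_trans (intervalIntegral.norm_integral_le_abs_of_norm_le ?_ hWint) hWval
      rw [uIoc_of_le hdz1]
      exact (ae_restrict_iff' measurableSet_Ioc).2 (Filter.Eventually.of_forall hWptw)
    -- Part B assembly
    have hB : ‖∫ x in d..z₁, ff m t E x‖ ≤ (12/Real.log 2)/L + (16/3/Real.log z₁^2)/L := by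
      rw [hintd, norm_mul]
      have hnI : ‖Complex.I / (t:ℂ)‖ = 1/t := by
        rw [norm_div, Complex.norm_I, Complex.norm_real, Real.norm_eq_abs, abs_of_pos ht0]
      rw [hnI]
      have h5 : ‖-(gg m t d * E d) - ∫ x in d..z₁, gg m t x * deriv E x‖
          ≤ 4*t/L^2 + (8*t/L^2 + c2 * (2 * t ^ ((1:ℝ)/4))) := by
        refine le_trans (norm_sub_le _ _) ?_
        have h6 : ‖-(gg m t d * E d)‖ = ‖E d‖ := by
          rw [norm_neg, norm_mul, gg_norm, one_mul]
        rw [h6]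
        exact add_le_add hbd hosc
      have h7 := mul_le_mul_of_nonneg_left h5 (le_of_lt (by positivity : (0:ℝ) < 1/t))
      refine le_trans h7 ?_
      have e2 : 1/t * (4*t/L^2 + (8*t/L^2 + c2 * (2 * t ^ ((1:ℝ)/4))))
          = 12/L^2 + 2*(t⁻¹ * (t ^ ((3:ℝ)/8) * t ^ ((1:ℝ)/4)))/Real.log z₁^2 := by
        rw [hc2def]
        field_simp
        ring
      rw [e2]
      have hts : t⁻¹ * (t ^ ((3:ℝ)/8) * t ^ ((1:ℝ)/4)) = t ^ (-(3:ℝ)/8) := by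
        rw [← Real.rpow_neg_one t, ← Real.rpow_add ht0, ← Real.rpow_add ht0]
        norm_num
      rw [hts]
      have h38 : t ^ (-(3:ℝ)/8) ≤ (8/3)/L := by
        have ha : (3/8)*L ≤ t^((3:ℝ)/8) := by
          have hb2 := Real.log_le_sub_one_of_pos (Real.rpow_pos_of_pos ht0 ((3:ℝ)/8))
          rw [Real.log_rpow ht0] at hb2
          linarith
        have hbpos : (0:ℝ) < (3/8)*L := by positivity
        have hc3 : t ^ (-(3:ℝ)/8) = (t^((3:ℝ)/8))⁻¹ := by
          rw [← Real.rpow_neg ht0.le]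
          norm_num
        rw [hc3]
        calc (t^((3:ℝ)/8))⁻¹ ≤ ((3/8)*L)⁻¹ := by
              apply inv_anti₀ hbpos ha
          _ = (8/3)/L := by
              field_simp
      have h12 : 12/L^2 ≤ (12/Real.log 2)/L := by
        rw [div_div]
        apply div_le_div_of_nonneg_left (by norm_num) (by positivity) (by nlinarith)
      have h16 : 2*(t ^ (-(3:ℝ)/8))/Real.log z₁^2 ≤ (16/3/Real.log z₁^2)/L := by
        have he : 2*((8/3)/L)/Real.log z₁^2 = (16/3/Real.log z₁^2)/L := by
          field_simp
          ring
        refine le_trans ?_ (le_of_eq he)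
        apply div_le_div_of_nonneg_right (by linarith) (by positivity)
      linarith
    calc ‖(∫ x in (0:ℝ)..d, ff m t E x) + ∫ x in d..z₁, ff m t E x‖
        ≤ ‖∫ x in (0:ℝ)..d, ff m t E x‖ + ‖∫ x in d..z₁, ff m t E x‖ := norm_add_le _ _
      _ ≤ (2/m)/L + ((12/Real.log 2)/L + (16/3/Real.log z₁^2)/L) := add_le_add hA hB
      _ = (2 / m + 12 / Real.log 2 + 16 / 3 / Real.log z₁ ^ 2) / L := by ring
end

section
/- Let m > 0 and 0 < z₁ ≤ 1/2. Then there is a constant C (depending only on m, z₁) such that for every continuously differentiable function E : (0,∞) → ℂ supported in (0, z₁) and satisfying |E(z)| ≤ 1/|log z| and |E′(z)| ≤ 1/(z·(log z)²) for all z ∈ (0, z₁), and for every t ∈ ℝ: | ∫₀^∞ e^{−it√(z²+m²)} · (z/√(z²+m²)) · E(z) dz | ≤ C·⟨t⟩^{−1}. -/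
open MeasureTheory Set Filter Topology

private lemma sqrtDeriv (m : ℝ) (hm : 0 < m) (z : ℝ) :
    HasDerivAt (fun z => Real.sqrt (z ^ 2 + m ^ 2)) (z / Real.sqrt (z ^ 2 + m ^ 2)) z := by
  have h : HasDerivAt (fun z : ℝ => z ^ 2 + m ^ 2) (2 * z) z := by
    simpa [mul_comm] using (hasDerivAt_pow 2 z).add_const (m ^ 2)
  have hne : z ^ 2 + m ^ 2 ≠ 0 := by positivity
  have hs : Real.sqrt (z ^ 2 + m ^ 2) ≠ 0 := Real.sqrt_ne_zero'.2 (by positivity)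
  convert h.sqrt hne using 1
  field_simp

private lemma psiDeriv (m t : ℝ) (hm : 0 < m) (z : ℝ) :
    HasDerivAt (fun z : ℝ => Complex.exp (-Complex.I * ((t * Real.sqrt (z ^ 2 + m ^ 2) : ℝ) : ℂ)))
      (Complex.exp (-Complex.I * ((t * Real.sqrt (z ^ 2 + m ^ 2) : ℝ) : ℂ)) *
        (-Complex.I * ((t * (z / Real.sqrt (z ^ 2 + m ^ 2)) : ℝ) : ℂ))) z := by
  have h1 := (sqrtDeriv m hm z).const_mul t
  have h2 := h1.ofReal_comp
  exact (h2.const_mul (-Complex.I)).cexp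

private lemma Gcont (z₁ : ℝ) (hz₁ : 0 < z₁) (hz₁1 : z₁ < 1) :
    ContinuousOn (fun z => -(Real.log z)⁻¹) (Icc 0 z₁) := by
  intro x hx
  rcases eq_or_lt_of_le hx.1 with h0 | h0
  · -- x = 0
    subst h0
    have h0t : Tendsto (fun z => -(Real.log z)⁻¹) (𝓝[>] (0:ℝ)) (𝓝 0) := by
      have h1 : Tendsto (fun z => -Real.log z) (𝓝[>] (0:ℝ)) atTop :=
        tendsto_neg_atBot_atTop.comp Real.tendsto_log_nhdsGT_zero
      have h2 := h1.inv_tendsto_atTop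
      have : (fun z => -Real.log z)⁻¹ = fun z => -(Real.log z)⁻¹ := by
        funext z; simp [Pi.inv_apply, inv_neg]
      rwa [this] at h2
    apply ContinuousWithinAt.mono _ Icc_subset_Ici_self
    rw [ContinuousWithinAt, ← Set.Ioi_insert, nhdsWithin_insert]
    have hval : -(Real.log (0:ℝ))⁻¹ = 0 := by simp
    rw [hval]
    exact tendsto_sup.2 ⟨by simpa [hval] using tendsto_pure_nhds (fun z : ℝ => -(Real.log z)⁻¹) 0, h0t⟩
  · have hlx : Real.log x < 0 := Real.log_neg h0 (lt_of_le_of_lt hx.2 hz₁1)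
    exact (((Real.continuousAt_log h0.ne').inv₀ hlx.ne).neg).continuousWithinAt

private lemma Gderiv (z₁ : ℝ) (hz₁1 : z₁ < 1) {x : ℝ} (hx : x ∈ Ioo 0 z₁) :
    HasDerivAt (fun z => -(Real.log z)⁻¹) (1 / (x * Real.log x ^ 2)) x := by
  have hlx : Real.log x < 0 := Real.log_neg hx.1 (lt_trans hx.2 hz₁1)
  have h := ((Real.hasDerivAt_log hx.1.ne').inv hlx.ne).neg
  refine h.congr_deriv ?_
  have hx0 : x ≠ 0 := hx.1.ne'
  field_simp

private lemma gInt (z₁ : ℝ) (hz₁ : 0 < z₁) (hz₁1 : z₁ < 1) :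
    IntegrableOn (fun z => 1 / (z * Real.log z ^ 2)) (Ioc 0 z₁) :=
  intervalIntegral.integrableOn_deriv_of_nonneg (Gcont z₁ hz₁ hz₁1)
    (fun x hx => Gderiv z₁ hz₁1 hx) (fun x hx => by have hx0 := hx.1; positivity)

private lemma intLe (z₁ : ℝ) (hz₁ : 0 < z₁) (hz₁1 : z₁ < 1) (φ : ℝ → ℝ)
    (hφint : IntegrableOn φ (Icc 0 z₁))
    (hφ : ∀ z ∈ Ioo 0 z₁, φ z ≤ 1 / (z * Real.log z ^ 2)) :
    ∫ z in (0:ℝ)..z₁, φ z ≤ -(Real.log z₁)⁻¹ := by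
  have key := intervalIntegral.integral_le_sub_of_hasDeriv_right_of_le hz₁.le
    (Gcont z₁ hz₁ hz₁1) (fun x hx => (Gderiv z₁ hz₁1 hx).hasDerivWithinAt) hφint hφ
  simpa using key

theorem stmt10 (m z₁ : ℝ) (hm : 0 < m) (hz₁ : 0 < z₁) (hz₁' : z₁ ≤ 1/2) :
    ∃ C : ℝ, 0 < C ∧ ∀ E : ℝ → ℂ, ContDiffOn ℝ 1 E (Set.Ioi 0) →
      (∀ z : ℝ, z₁ ≤ z → E z = 0) →
      (∀ z : ℝ, 0 < z → z < z₁ → ‖E z‖ ≤ 1 / |Real.log z|) →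
      (∀ z : ℝ, 0 < z → z < z₁ → ‖deriv E z‖ ≤ 1 / (z * Real.log z ^ 2)) →
      ∀ t : ℝ,
        ‖∫ z in Set.Ioi (0 : ℝ),
            Complex.exp (-Complex.I * ((t * Real.sqrt (z ^ 2 + m ^ 2) : ℝ) : ℂ)) *
              ((z / Real.sqrt (z ^ 2 + m ^ 2) : ℝ) : ℂ) * E z‖
          ≤ C / Real.sqrt (1 + t ^ 2) := by
  have hz₁1 : z₁ < 1 := lt_of_le_of_lt hz₁' (by norm_num)
  have hlog : Real.log z₁ < 0 := Real.log_neg hz₁ hz₁1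
  set c : ℝ := (-Real.log z₁)⁻¹ with hc_def
  have hcpos : 0 < c := inv_pos.2 (neg_pos.2 hlog)
  refine ⟨Real.sqrt 2 * (z₁ * c + c), by positivity, ?_⟩
  intro E hE hE0 hEbd hE'bd t
  set ψ : ℝ → ℂ := fun z =>
    Complex.exp (-Complex.I * ((t * Real.sqrt (z ^ 2 + m ^ 2) : ℝ) : ℂ)) with hψ_def
  set f : ℝ → ℂ := fun z => ψ z * ((z / Real.sqrt (z ^ 2 + m ^ 2) : ℝ) : ℂ) * E z with hf_def
  show ‖∫ z in Set.Ioi (0:ℝ), f z‖ ≤ _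
  -- basic facts
  have hφpos : ∀ z : ℝ, 0 < Real.sqrt (z ^ 2 + m ^ 2) := fun z => Real.sqrt_pos.2 (by positivity)
  have hψnorm : ∀ z : ℝ, ‖ψ z‖ = 1 := by
    intro z
    rw [hψ_def]
    simp [Complex.norm_exp]
  have hψcont : Continuous ψ := by
    rw [hψ_def]
    fun_prop
  have hratio : ∀ z : ℝ, 0 < z → z / Real.sqrt (z ^ 2 + m ^ 2) ≤ 1 := by
    intro z hz
    rw [div_le_one (hφpos z)]
    calc z = Real.sqrt (z ^ 2) := by rw [Real.sqrt_sq hz.le]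
    _ ≤ Real.sqrt (z ^ 2 + m ^ 2) := Real.sqrt_le_sqrt (by nlinarith)
  have hfle : ∀ z ∈ Ioo (0:ℝ) z₁, ‖f z‖ ≤ c := by
    intro z hz
    have hlz : Real.log z < 0 := Real.log_neg hz.1 (lt_trans hz.2 hz₁1)
    have hEz : ‖E z‖ ≤ c := by
      refine (hEbd z hz.1 hz.2).trans ?_
      rw [abs_of_neg hlz, hc_def, one_div]
      exact inv_anti₀ (neg_pos.2 hlog) (by linarith [Real.log_le_log hz.1 hz.2.le])
    have h1 : ‖f z‖ = ‖ψ z‖ * |z / Real.sqrt (z ^ 2 + m ^ 2)| * ‖E z‖ := by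
      rw [hf_def]; simp only [norm_mul, Complex.norm_real, Real.norm_eq_abs]
    rw [h1, hψnorm, one_mul]
    have habs : |z / Real.sqrt (z ^ 2 + m ^ 2)| ≤ 1 := by
      rw [abs_of_nonneg (div_nonneg hz.1.le (hφpos z).le)]
      exact hratio z hz.1
    calc |z / Real.sqrt (z ^ 2 + m ^ 2)| * ‖E z‖ ≤ 1 * ‖E z‖ :=
        mul_le_mul_of_nonneg_right habs (norm_nonneg _)
    _ = ‖E z‖ := one_mul _
    _ ≤ c := hEz
  -- measurability and integrability of f on Ioo 0 z₁
  have hEmeas : AEStronglyMeasurable E (volume.restrict (Ioo 0 z₁)) :=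
    ((hE.continuousOn).mono Ioo_subset_Ioi_self).aestronglyMeasurable measurableSet_Ioo
  have hvcont : Continuous fun z : ℝ => ((z / Real.sqrt (z ^ 2 + m ^ 2) : ℝ) : ℂ) := by
    refine Complex.continuous_ofReal.comp ?_
    exact continuous_id.div (by fun_prop) (fun z => (hφpos z).ne')
  have hfmeas : AEStronglyMeasurable f (volume.restrict (Ioo 0 z₁)) := by
    rw [hf_def]
    exact (((hψcont.mul hvcont).aestronglyMeasurable).restrict).mul hEmeas
  have hfint : IntegrableOn f (Ioo 0 z₁) := by
    refine Integrable.mono' (integrableOn_const measure_Ioo_lt_top.ne) hfmeas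
      ((ae_restrict_iff' measurableSet_Ioo).2 (Eventually.of_forall hfle))
  -- derivative facts about E
  have hEdiff : ∀ z : ℝ, 0 < z → HasDerivAt E (deriv E z) z := fun z hz =>
    ((hE.differentiableOn one_ne_zero).differentiableAt (Ioi_mem_nhds hz)).hasDerivAt
  have hE'zero : ∀ z : ℝ, z₁ < z → deriv E z = 0 := by
    intro z hz
    have h : E =ᶠ[nhds z] fun _ => (0:ℂ) := by
      filter_upwards [Ioi_mem_nhds hz] with y hy using hE0 y hy.le
    rw [h.deriv_eq, deriv_const]
  have hE'z₁ : deriv E z₁ = 0 := by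
    have h1 : HasDerivWithinAt E (deriv E z₁) (Ici z₁) z₁ := (hEdiff z₁ hz₁).hasDerivWithinAt
    have h2 : HasDerivWithinAt E 0 (Ici z₁) z₁ :=
      (hasDerivWithinAt_const z₁ _ (0:ℂ)).congr (fun y hy => hE0 y hy) (hE0 z₁ le_rfl)
    have u := uniqueDiffOn_Ici z₁ z₁ self_mem_Ici
    rw [← h1.derivWithin u, h2.derivWithin u]
  -- integrability of the derivative term
  have hE'int : IntegrableOn (fun z => ‖deriv E z‖) (Ioc 0 z₁) := by
    refine Integrable.mono' (gInt z₁ hz₁ hz₁1)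
      (((stronglyMeasurable_deriv E).aestronglyMeasurable).norm.restrict)
      ((ae_restrict_iff' measurableSet_Ioc).2 (Eventually.of_forall ?_))
    intro z hz
    rcases eq_or_lt_of_le hz.2 with h | h
    · have hz0 := hz.1
      rw [norm_norm, h, hE'z₁]
      simp only [norm_zero]
      positivity
    · rw [norm_norm]; exact hE'bd z hz.1 h
  have hderivmeas : AEStronglyMeasurable (deriv E) (volume.restrict (Ioo 0 z₁)) :=
    ((stronglyMeasurable_deriv E).aestronglyMeasurable).restrict
  have hψE'int : IntegrableOn (fun z => ψ z * deriv E z) (Ioo 0 z₁) := by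
    refine Integrable.mono' (hE'int.mono_set Ioo_subset_Ioc_self)
      ((hψcont.aestronglyMeasurable.restrict).mul hderivmeas) (Eventually.of_forall ?_)
    intro z; rw [norm_mul, hψnorm, one_mul]
  -- FTC / integration by parts on (0, z₁)
  have hFderiv : ∀ z ∈ Ioo (0:ℝ) z₁,
      HasDerivAt (fun z => ψ z * E z) ((-Complex.I * t) * f z + ψ z * deriv E z) z := by
    intro z hz
    have h1 := (psiDeriv m t hm z).mul (hEdiff z hz.1)
    refine h1.congr_deriv ?_
    rw [hf_def, hψ_def]
    push_cast
    ring
  have htend0 : Tendsto (fun z : ℝ => (-Real.log z)⁻¹) (nhdsWithin 0 (Ioi 0)) (nhds 0) := by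
    have h1 : Tendsto (fun z => -Real.log z) (nhdsWithin 0 (Ioi (0:ℝ))) atTop :=
      tendsto_neg_atBot_atTop.comp Real.tendsto_log_nhdsGT_zero
    have h2 := h1.inv_tendsto_atTop
    have h3 : (fun z => -Real.log z)⁻¹ = fun z : ℝ => (-Real.log z)⁻¹ := by
      funext z; simp [Pi.inv_apply]
    rwa [h3] at h2
  have hFa : Tendsto (fun z => ψ z * E z) (nhdsWithin 0 (Ioi (0:ℝ))) (nhds 0) := by
    refine squeeze_zero_norm' ?_ htend0
    filter_upwards [Ioo_mem_nhdsGT_of_mem (left_mem_Ico.2 hz₁)] with z hz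
    have hlz : Real.log z < 0 := Real.log_neg hz.1 (lt_trans hz.2 hz₁1)
    rw [norm_mul, hψnorm, one_mul]
    calc ‖E z‖ ≤ 1 / |Real.log z| := hEbd z hz.1 hz.2
    _ = (-Real.log z)⁻¹ := by rw [abs_of_neg hlz, one_div]
  have hFb : Tendsto (fun z => ψ z * E z) (nhdsWithin z₁ (Iio z₁)) (nhds 0) := by
    have hc2 : ContinuousAt (fun z => ψ z * E z) z₁ :=
      (hψcont.continuousAt).mul (hE.continuousOn.continuousAt (Ioi_mem_nhds hz₁))
    have h3 : Tendsto (fun z => ψ z * E z) (nhdsWithin z₁ (Iio z₁))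
        (nhds (ψ z₁ * E z₁)) := (hc2.continuousWithinAt).tendsto
    simpa [hE0 z₁ le_rfl] using h3
  have hF'int : IntervalIntegrable (fun z => (-Complex.I * t) * f z + ψ z * deriv E z)
      volume 0 z₁ :=
    (intervalIntegrable_iff_integrableOn_Ioo_of_le hz₁.le).2 ((hfint.const_mul _).add hψE'int)
  have hFTC : ∫ z in (0:ℝ)..z₁, ((-Complex.I * t) * f z + ψ z * deriv E z) = 0 := by
    rw [intervalIntegral.integral_eq_sub_of_hasDerivAt_of_tendsto hz₁ hFderiv hF'int hFa hFb]
    simp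
  have hIoo : (-Complex.I * t) * (∫ z in Ioo (0:ℝ) z₁, f z)
      + (∫ z in Ioo (0:ℝ) z₁, ψ z * deriv E z) = 0 := by
    rw [intervalIntegral.integral_of_le hz₁.le, integral_Ioc_eq_integral_Ioo,
      integral_add (hfint.const_mul _) hψE'int, integral_const_mul] at hFTC
    exact hFTC
  -- reduce the integral over Ioi 0 to Ioo 0 z₁
  have hredf : (∫ z in Ioi (0:ℝ), f z) = ∫ z in Ioo (0:ℝ) z₁, f z := by
    refine setIntegral_eq_of_subset_of_forall_diff_eq_zero measurableSet_Ioi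
      Ioo_subset_Ioi_self ?_
    intro z hz
    have hzz : z₁ ≤ z := by
      by_contra h
      push_neg at h
      exact hz.2 ⟨hz.1, h⟩
    rw [hf_def]
    simp [hE0 z hzz]
  -- the two key bounds
  have hφicc : IntegrableOn (fun z => ‖deriv E z‖) (Icc 0 z₁) :=
    (integrableOn_Icc_iff_integrableOn_Ioc (by simp)).2 hE'int
  have hB : ‖∫ z in Ioo (0:ℝ) z₁, ψ z * deriv E z‖ ≤ c := by
    calc ‖∫ z in Ioo (0:ℝ) z₁, ψ z * deriv E z‖
        ≤ ∫ z in Ioo (0:ℝ) z₁, ‖ψ z * deriv E z‖ := norm_integral_le_integral_norm _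
    _ = ∫ z in Ioo (0:ℝ) z₁, ‖deriv E z‖ := by
        refine setIntegral_congr_fun measurableSet_Ioo fun z hz => ?_
        rw [norm_mul, hψnorm, one_mul]
    _ = ∫ z in (0:ℝ)..z₁, ‖deriv E z‖ := by
        rw [intervalIntegral.integral_of_le hz₁.le, integral_Ioc_eq_integral_Ioo]
    _ ≤ -(Real.log z₁)⁻¹ := intLe z₁ hz₁ hz₁1 _ hφicc (fun z hz => hE'bd z hz.1 hz.2)
    _ = c := by rw [hc_def, inv_neg]
  have hA : ‖∫ z in Ioo (0:ℝ) z₁, f z‖ ≤ z₁ * c := by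
    calc ‖∫ z in Ioo (0:ℝ) z₁, f z‖ ≤ ∫ z in Ioo (0:ℝ) z₁, ‖f z‖ :=
        norm_integral_le_integral_norm _
    _ ≤ ∫ _z in Ioo (0:ℝ) z₁, c :=
        setIntegral_mono_on hfint.norm (integrableOn_const measure_Ioo_lt_top.ne)
          measurableSet_Ioo hfle
    _ = (volume (Ioo (0:ℝ) z₁)).toReal * c := by rw [setIntegral_const]; rfl
    _ = z₁ * c := by rw [Real.volume_Ioo, ENNReal.toReal_ofReal (by linarith : (0:ℝ) ≤ z₁ - 0)]
                     ring
  have hspos : 0 < Real.sqrt (1 + t ^ 2) := Real.sqrt_pos.2 (by positivity)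
  rw [hredf]
  rcases le_or_gt |t| 1 with ht | ht
  · -- small t : use the trivial bound
    have hs : Real.sqrt (1 + t ^ 2) ≤ Real.sqrt 2 :=
      Real.sqrt_le_sqrt (by nlinarith [sq_abs t, abs_nonneg t])
    have hkey : z₁ * c + c ≤ Real.sqrt 2 * (z₁ * c + c) / Real.sqrt (1 + t ^ 2) := by
      rw [le_div_iff₀ hspos]
      calc (z₁ * c + c) * Real.sqrt (1 + t ^ 2) ≤ (z₁ * c + c) * Real.sqrt 2 :=
          mul_le_mul_of_nonneg_left hs (by positivity)
      _ = Real.sqrt 2 * (z₁ * c + c) := mul_comm _ _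
    linarith [hA, hkey, hcpos]
  · -- large t : use integration by parts
    have habs : 0 < |t| := lt_trans one_pos ht
    have heq : (-Complex.I * t) * (∫ z in Ioo (0:ℝ) z₁, f z)
        = - ∫ z in Ioo (0:ℝ) z₁, ψ z * deriv E z := eq_neg_of_add_eq_zero_left hIoo
    have hnorm : |t| * ‖∫ z in Ioo (0:ℝ) z₁, f z‖
        = ‖∫ z in Ioo (0:ℝ) z₁, ψ z * deriv E z‖ := by
      have hh := congrArg norm heq
      rw [norm_neg, norm_mul, norm_mul, norm_neg, Complex.norm_I, one_mul,
        Complex.norm_real, Real.norm_eq_abs] at hh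
      exact hh
    have hfinalb : ‖∫ z in Ioo (0:ℝ) z₁, f z‖ ≤ c / |t| := by
      rw [le_div_iff₀ habs, mul_comm, hnorm]
      exact hB
    have hs : Real.sqrt (1 + t ^ 2) ≤ Real.sqrt 2 * |t| := by
      calc Real.sqrt (1 + t ^ 2) ≤ Real.sqrt (2 * t ^ 2) :=
          Real.sqrt_le_sqrt (by nlinarith [sq_abs t])
      _ = Real.sqrt 2 * |t| := by
          rw [Real.sqrt_mul (by norm_num : (0:ℝ) ≤ 2), Real.sqrt_sq_eq_abs]
    have hkey : c / |t| ≤ Real.sqrt 2 * (z₁ * c + c) / Real.sqrt (1 + t ^ 2) := by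
      rw [div_le_div_iff₀ habs hspos]
      calc c * Real.sqrt (1 + t ^ 2) ≤ c * (Real.sqrt 2 * |t|) :=
          mul_le_mul_of_nonneg_left hs hcpos.le
      _ = (Real.sqrt 2 * c) * |t| := by ring
      _ ≤ (Real.sqrt 2 * (z₁ * c + c)) * |t| := by
          have h1 : Real.sqrt 2 * c ≤ Real.sqrt 2 * (z₁ * c + c) := by
            have h2 : c ≤ z₁ * c + c := by nlinarith [mul_pos hz₁ hcpos]
            nlinarith [Real.sqrt_nonneg 2]
          exact mul_le_mul_of_nonneg_right h1 (abs_nonneg t)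
    exact le_trans hfinalb hkey
end

section
/- Let m > 0. Then there is a constant C (depending only on m) such that for every integer j ≥ 1, every t ∈ ℝ with t ≠ 0, and every twice continuously differentiable function E : (0,∞) → ℂ supported in [2^{j−1}, 2^{j+1}] satisfying |E(z)| ≤ z², |E′(z)| ≤ z and |E″(z)| ≤ 1 for all z > 0: | ∫₀^∞ e^{−it√(z²+m²)} · (z/√(z²+m²)) · E(z) dz | ≤ C·min( 2^{4j}, 2^{2j}·|t|^{−1}, 2^{j}·|t|^{−2} ). -/
open MeasureTheory

set_option maxHeartbeats 1000000 in
theorem stmt12 (m : ℝ) (hm : 0 < m) :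
    ∃ C : ℝ, 0 < C ∧ ∀ (j : ℕ), 1 ≤ j → ∀ (t : ℝ), t ≠ 0 →
      ∀ E : ℝ → ℂ, ContDiffOn ℝ 2 E (Set.Ioi 0) →
        (∀ z : ℝ, 0 < z → (z < (2:ℝ) ^ ((j : ℝ) - 1) ∨ (2:ℝ) ^ ((j : ℝ) + 1) < z) → E z = 0) →
        (∀ z : ℝ, 0 < z → ‖E z‖ ≤ z ^ 2) →
        (∀ z : ℝ, 0 < z → ‖deriv E z‖ ≤ z) →
        (∀ z : ℝ, 0 < z → ‖deriv (deriv E) z‖ ≤ 1) →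
        ‖∫ z in Set.Ioi (0 : ℝ),
            Complex.exp (-Complex.I * ((t * Real.sqrt (z ^ 2 + m ^ 2) : ℝ) : ℂ)) *
              ((z / Real.sqrt (z ^ 2 + m ^ 2) : ℝ) : ℂ) * E z‖
          ≤ C * min ((2:ℝ) ^ (4 * (j : ℝ)))
              (min ((2:ℝ) ^ (2 * (j : ℝ)) / |t|) ((2:ℝ) ^ (j : ℝ) / t ^ 2)) := by
  refine ⟨64 + 16 + 4 * (4 * m + 1), by linarith, ?_⟩
  intro j hj t ht E hE hsupp hb0 hb1 hb2
  have htC : (t : ℂ) ≠ 0 := Complex.ofReal_ne_zero.2 ht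
  have habs_t : 0 < |t| := abs_pos.2 ht
  set f : ℝ → ℂ := fun z => Complex.exp (-Complex.I * ((t * Real.sqrt (z ^ 2 + m ^ 2) : ℝ) : ℂ)) *
      ((z / Real.sqrt (z ^ 2 + m ^ 2) : ℝ) : ℂ) * E z with hf_def
  set P : ℝ := (2:ℝ) ^ (j:ℝ) with hP_def
  have hP2 : 2 ≤ P := by
    calc (2:ℝ) = 2 ^ (1:ℝ) := (Real.rpow_one 2).symm
    _ ≤ P := Real.rpow_le_rpow_of_exponent_le one_le_two (by exact_mod_cast hj)
  have hP1 : 1 ≤ P := le_trans one_le_two hP2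
  have hP0 : 0 < P := lt_of_lt_of_le one_pos hP1
  have ha : (2:ℝ) ^ ((j:ℝ) - 1) = P / 2 := by
    rw [hP_def, Real.rpow_sub two_pos, Real.rpow_one]
  have hbb : (2:ℝ) ^ ((j:ℝ) + 1) = 2 * P := by
    rw [hP_def, Real.rpow_add two_pos, Real.rpow_one]; ring
  set c : ℝ := P / 4 with hc_def
  set d : ℝ := 4 * P with hd_def
  have hc0 : 0 < c := by positivity
  have hcd : c ≤ d := by nlinarith
  have hchalf : 1/2 ≤ c := by rw [hc_def]; linarith
  -- support facts
  have hE_low : ∀ z : ℝ, 0 < z → z < P/2 → E z = 0 := fun z hz h =>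
    hsupp z hz (Or.inl (by rw [ha]; exact h))
  have hE_high : ∀ z : ℝ, 2*P < z → E z = 0 := fun z h =>
    hsupp z (by nlinarith) (Or.inr (by rw [hbb]; exact h))
  -- the sqrt function
  set s : ℝ → ℝ := fun z => Real.sqrt (z ^ 2 + m ^ 2) with hs_def
  have hsq : ∀ z : ℝ, 0 < z ^ 2 + m ^ 2 := fun z => by positivity
  have hs_pos : ∀ z : ℝ, 0 < s z := fun z => Real.sqrt_pos.2 (hsq z)
  have hs_ne : ∀ z : ℝ, s z ≠ 0 := fun z => (hs_pos z).ne'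
  have hs_sq : ∀ z : ℝ, s z ^ 2 = z ^ 2 + m ^ 2 := fun z => Real.sq_sqrt (hsq z).le
  have hs_cont : Continuous s :=
    Real.continuous_sqrt.comp (by continuity)
  have hds : ∀ z : ℝ, HasDerivAt s (z / s z) z := by
    intro z
    have h1 : HasDerivAt (fun z : ℝ => z ^ 2 + m ^ 2) (2 * z) z := by
      simpa using (hasDerivAt_pow 2 z).add_const (m ^ 2)
    have h2 := h1.sqrt (hsq z).ne'
    convert h2 using 1
    rw [show Real.sqrt (z ^ 2 + m ^ 2) = s z from rfl,
      mul_div_mul_left z (s z) (two_ne_zero)]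
  -- the phase function
  set g : ℝ → ℂ := fun z => Complex.exp (-Complex.I * ((t * s z : ℝ) : ℂ)) with hg_def
  have hg_norm : ∀ z : ℝ, ‖g z‖ = 1 := by
    intro z
    show ‖Complex.exp (-Complex.I * ((t * s z : ℝ) : ℂ))‖ = 1
    have h : -Complex.I * ((t * s z : ℝ) : ℂ) = ((-(t * s z) : ℝ) : ℂ) * Complex.I := by
      push_cast; ring
    rw [h, Complex.norm_exp_ofReal_mul_I]
  have hg_cont : Continuous g := by
    apply Complex.continuous_exp.comp
    exact continuous_const.mul (Complex.continuous_ofReal.comp (continuous_const.mul hs_cont))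
  have hdg : ∀ z : ℝ, HasDerivAt g
      (Complex.exp (-Complex.I * ((t * s z : ℝ) : ℂ)) * (-Complex.I * ((t * (z / s z) : ℝ) : ℂ))) z := by
    intro z
    have h1 : HasDerivAt (fun z : ℝ => t * s z) (t * (z / s z)) z := (hds z).const_mul t
    have h2 := h1.ofReal_comp
    have h3 := (h2.const_mul (-Complex.I)).cexp
    exact h3
  set G : ℝ → ℂ := fun z => (Complex.I / (t:ℂ)) * g z with hG_def
  have hG_cont : Continuous G := continuous_const.mul hg_cont
  have hII : Complex.I * -Complex.I = 1 := by rw [mul_neg, Complex.I_mul_I, neg_neg]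
  have htt : ((t:ℂ))⁻¹ * (t:ℂ) = 1 := inv_mul_cancel₀ htC
  have hdG : ∀ z : ℝ, HasDerivAt G (((z / s z : ℝ) : ℂ) * g z) z := by
    intro z
    have h := (hdg z).const_mul (Complex.I / (t:ℂ))
    have heq : Complex.I / (t:ℂ) *
        (Complex.exp (-Complex.I * ((t * s z : ℝ) : ℂ)) * (-Complex.I * ((t * (z / s z) : ℝ) : ℂ)))
        = ((z / s z : ℝ) : ℂ) * Complex.exp (-Complex.I * ((t * s z : ℝ) : ℂ)) := by
      calc Complex.I / (t:ℂ) *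
          (Complex.exp (-Complex.I * ((t * s z : ℝ) : ℂ)) * (-Complex.I * ((t * (z / s z) : ℝ) : ℂ)))
          = (Complex.I * -Complex.I) * (((t:ℂ))⁻¹ * (t:ℂ)) *
            (((z / s z : ℝ) : ℂ) * Complex.exp (-Complex.I * ((t * s z : ℝ) : ℂ))) := by
            push_cast; ring
        _ = ((z / s z : ℝ) : ℂ) * Complex.exp (-Complex.I * ((t * s z : ℝ) : ℂ)) := by
            rw [hII, htt]; ring
    rw [← heq]
    exact h
  have hv'_cont : Continuous (fun z : ℝ => ((z / s z : ℝ) : ℂ) * g z) :=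
    (Complex.continuous_ofReal.comp (continuous_id.div hs_cont hs_ne)).mul hg_cont
  -- derivatives of E
  have hE1' : ContDiffOn ℝ 1 (deriv E) (Set.Ioi 0) :=
    hE.deriv_of_isOpen isOpen_Ioi (by norm_num)
  have hcE' : ContinuousOn (deriv E) (Set.Ioi 0) := hE1'.continuousOn
  have hE2' : ContDiffOn ℝ 0 (deriv (deriv E)) (Set.Ioi 0) :=
    hE1'.deriv_of_isOpen isOpen_Ioi (by norm_num)
  have hcE'' : ContinuousOn (deriv (deriv E)) (Set.Ioi 0) := hE2'.continuousOn
  have hdE : ∀ z : ℝ, 0 < z → HasDerivAt E (deriv E z) z := fun z hz =>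
    ((hE.differentiableOn (by norm_num)).differentiableAt (isOpen_Ioi.mem_nhds hz)).hasDerivAt
  have hdE' : ∀ z : ℝ, 0 < z → HasDerivAt (deriv E) (deriv (deriv E) z) z := fun z hz =>
    ((hE1'.differentiableOn (by norm_num)).differentiableAt (isOpen_Ioi.mem_nhds hz)).hasDerivAt
  -- vanishing at the endpoints
  have hEc : E c = 0 := hE_low c hc0 (by rw [hc_def]; linarith)
  have hEd : E d = 0 := hE_high d (by rw [hd_def]; nlinarith)
  have hdEc : deriv E c = 0 := by
    have hev : E =ᶠ[nhds c] fun _ => (0:ℂ) := by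
      filter_upwards [Ioo_mem_nhds hc0 (show c < P/2 by rw [hc_def]; linarith)] with z hz
      exact hE_low z hz.1 hz.2
    rw [hev.deriv_eq]; simp
  have hdEd : deriv E d = 0 := by
    have hev : E =ᶠ[nhds d] fun _ => (0:ℂ) := by
      filter_upwards [Ioi_mem_nhds (show 2*P < d by rw [hd_def]; nlinarith)] with z hz
      exact hE_high z hz
    rw [hev.deriv_eq]; simp
  -- the auxiliary function for the second integration by parts
  set w : ℝ → ℂ := fun z => ((s z / z : ℝ) : ℂ) * deriv E z with hw_def
  set w' : ℝ → ℂ := fun z => ((-(m ^ 2) / (z ^ 2 * s z) : ℝ) : ℂ) * deriv E z +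
      ((s z / z : ℝ) : ℂ) * deriv (deriv E) z with hw'_def
  have hwc : w c = 0 := by simp [hw_def, hdEc]
  have hwd : w d = 0 := by simp [hw_def, hdEd]
  have hdw : ∀ z : ℝ, 0 < z → HasDerivAt w (w' z) z := by
    intro z hz
    have hq : HasDerivAt (fun z : ℝ => s z / z) (-(m ^ 2) / (z ^ 2 * s z)) z := by
      have h := (hds z).div (hasDerivAt_id z) hz.ne'
      refine h.congr_deriv (Eq.symm ?_)
      have hsz := hs_sq z
      simp only [id]
      have hz2 : z ≠ 0 := hz.ne'
      have hsz0 := hs_ne z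
      field_simp
      linear_combination hsz
    exact (hq.ofReal_comp).mul (hdE' z hz)
  -- the interval of integration
  have hsub : Set.uIcc c d ⊆ Set.Ioi (0:ℝ) := by
    rw [Set.uIcc_of_le hcd]; exact fun x hx => lt_of_lt_of_le hc0 hx.1
  have hsubo : Set.uIoc c d ⊆ Set.Ioi (0:ℝ) := fun x hx =>
    hsub (Set.uIoc_subset_uIcc hx)
  -- reduce integral over Ioi 0 to interval integral
  have hIoi : (∫ z in Set.Ioi (0:ℝ), f z) = ∫ z in c..d, f z := by
    have hind : Set.EqOn f ((Set.Ioo c d).indicator f) (Set.Ioi 0) := by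
      intro z hz
      by_cases hz2 : z ∈ Set.Ioo c d
      · rw [Set.indicator_of_mem hz2]
      · rw [Set.indicator_of_notMem hz2]
        have hEz : E z = 0 := by
          rcases le_or_gt z c with h | h
          · exact hE_low z hz (by rw [hc_def] at h; linarith)
          · have h2 : d ≤ z := by
              by_contra hlt
              push_neg at hlt
              exact hz2 ⟨h, hlt⟩
            exact hE_high z (by rw [hd_def] at h2; nlinarith)
        simp [hf_def, hEz]
    rw [setIntegral_congr_fun measurableSet_Ioi hind,
      setIntegral_indicator measurableSet_Ioo,
      show Set.Ioi (0:ℝ) ∩ Set.Ioo c d = Set.Ioo c d from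
        Set.inter_eq_self_of_subset_right (fun x hx => lt_trans hc0 hx.1),
      ← integral_Ioc_eq_integral_Ioo, ← intervalIntegral.integral_of_le hcd]
  -- integrability facts
  have hint_v' : IntervalIntegrable (fun z : ℝ => ((z / s z : ℝ) : ℂ) * g z) volume c d :=
    hv'_cont.intervalIntegrable c d
  have hint_E' : IntervalIntegrable (deriv E) volume c d :=
    (hcE'.mono hsub).intervalIntegrable
  have hint_w' : IntervalIntegrable w' volume c d := by
    apply ContinuousOn.intervalIntegrable
    apply ContinuousOn.add
    · apply ContinuousOn.mul ?_ (hcE'.mono hsub)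
      apply Complex.continuous_ofReal.comp_continuousOn
      apply ContinuousOn.div continuousOn_const
        (((continuous_pow 2).mul hs_cont).continuousOn)
      intro x hx
      have hx0 : 0 < x := hsub hx
      show x ^ 2 * s x ≠ 0
      exact mul_ne_zero (pow_ne_zero 2 hx0.ne') (hs_ne x)
    · apply ContinuousOn.mul ?_ (hcE''.mono hsub)
      apply Complex.continuous_ofReal.comp_continuousOn
      apply ContinuousOn.div hs_cont.continuousOn continuousOn_id
      intro x hx
      exact (hsub hx).ne'
  -- first integration by parts
  have ibp1 : (∫ z in c..d, f z) = -(Complex.I / (t:ℂ)) * ∫ z in c..d, deriv E z * g z := by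
    have h1 : (∫ z in c..d, f z) = ∫ z in c..d, E z * (((z / s z : ℝ) : ℂ) * g z) := by
      apply intervalIntegral.integral_congr
      intro z _
      simp only [hf_def, hg_def]
      ring
    have hIBP := intervalIntegral.integral_mul_deriv_eq_deriv_mul
      (u := E) (v := G) (u' := deriv E) (v' := fun z => ((z / s z : ℝ) : ℂ) * g z)
      (fun x hx => hdE x (hsub hx)) (fun x _ => hdG x) hint_E' hint_v'
    rw [h1, hIBP, hEc, hEd]
    have h2 : (∫ z in c..d, deriv E z * G z) = (Complex.I / (t:ℂ)) * ∫ z in c..d, deriv E z * g z := by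
      rw [← intervalIntegral.integral_const_mul]
      apply intervalIntegral.integral_congr
      intro z _
      simp only [hG_def]
      ring
    rw [h2]
    ring
  -- second integration by parts
  have ibp2 : (∫ z in c..d, deriv E z * g z) = -(Complex.I / (t:ℂ)) * ∫ z in c..d, w' z * g z := by
    have h1 : (∫ z in c..d, deriv E z * g z)
        = ∫ z in c..d, w z * (((z / s z : ℝ) : ℂ) * g z) := by
      apply intervalIntegral.integral_congr
      intro z hz
      have hz0 : 0 < z := hsub hz
      simp only [hw_def]
      have hone : ((s z / z : ℝ) : ℂ) * ((z / s z : ℝ) : ℂ) = 1 := by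
        rw [← Complex.ofReal_mul]
        norm_cast
        field_simp
        exact div_self (hs_ne z)
      calc deriv E z * g z = (((s z / z : ℝ) : ℂ) * ((z / s z : ℝ) : ℂ)) * (deriv E z * g z) := by
            rw [hone, one_mul]
        _ = ((s z / z : ℝ) : ℂ) * deriv E z * (((z / s z : ℝ) : ℂ) * g z) := by ring
    have hIBP := intervalIntegral.integral_mul_deriv_eq_deriv_mul
      (u := w) (v := G) (u' := w') (v' := fun z => ((z / s z : ℝ) : ℂ) * g z)
      (fun x hx => hdw x (hsub hx)) (fun x _ => hdG x) hint_w' hint_v'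
    rw [h1, hIBP, hwc, hwd]
    have h2 : (∫ z in c..d, w' z * G z) = (Complex.I / (t:ℂ)) * ∫ z in c..d, w' z * g z := by
      rw [← intervalIntegral.integral_const_mul]
      apply intervalIntegral.integral_congr
      intro z _
      simp only [hG_def]
      ring
    rw [h2]
    ring
  have hnorm_It : ‖-(Complex.I / (t:ℂ))‖ = 1 / |t| := by
    rw [norm_neg, norm_div, Complex.norm_I, Complex.norm_real, Real.norm_eq_abs]
  -- the three basic bounds
  have hJ1 : ‖∫ z in c..d, deriv E z * g z‖ ≤ 16 * P ^ 2 := by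
    have h := intervalIntegral.norm_integral_le_of_norm_le_const
      (a := c) (b := d) (C := d) (f := fun z => deriv E z * g z) ?_
    · calc ‖∫ z in c..d, deriv E z * g z‖ ≤ d * |d - c| := h
        _ ≤ 16 * P ^ 2 := by
            rw [abs_of_nonneg (by linarith), hd_def, hc_def]
            nlinarith [sq_nonneg P]
    · intro x hx
      have hx0 : 0 < x := hsubo hx
      have hxd : x ≤ d := by
        rcases Set.mem_uIoc.1 hx with h | h
        · exact h.2
        · exact le_trans h.2 hcd
      rw [norm_mul, hg_norm, mul_one]
      exact le_trans (hb1 x hx0) hxd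
  have hJ2 : ‖∫ z in c..d, w' z * g z‖ ≤ (4*m+1) * (4*P) := by
    have h := intervalIntegral.norm_integral_le_of_norm_le_const
      (a := c) (b := d) (C := 4*m+1) (f := fun z => w' z * g z) ?_
    · calc ‖∫ z in c..d, w' z * g z‖ ≤ (4*m+1) * |d - c| := h
        _ ≤ (4*m+1) * (4*P) := by
            rw [abs_of_nonneg (by linarith)]
            apply mul_le_mul_of_nonneg_left ?_ (by linarith)
            rw [hd_def, hc_def]
            linarith
    · intro x hx
      have hx0 : 0 < x := hsubo hx
      have hxc : c < x := by
        rcases Set.mem_uIoc.1 hx with h | h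
        · exact h.1
        · exact lt_of_le_of_lt hcd h.1
      have hxhalf : 1/2 ≤ x := le_trans hchalf hxc.le
      rw [norm_mul, hg_norm, mul_one, hw'_def]
      have hsm : m ≤ s x := by
        rw [show m = Real.sqrt (m^2) from (Real.sqrt_sq hm.le).symm]
        exact Real.sqrt_le_sqrt (by nlinarith)
      have hsx : s x ≤ x + m := by
        rw [show x + m = Real.sqrt ((x+m)^2) from (Real.sqrt_sq (by positivity)).symm]
        exact Real.sqrt_le_sqrt (by nlinarith)
      have ht1 : ‖((-(m ^ 2) / (x ^ 2 * s x) : ℝ) : ℂ) * deriv E x‖ ≤ 2*m := by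
        rw [norm_mul, Complex.norm_real, Real.norm_eq_abs]
        have hxb : ‖deriv E x‖ ≤ x := hb1 x hx0
        have habs : |(-(m ^ 2) / (x ^ 2 * s x))| = m^2 / (x^2 * s x) := by
          rw [abs_div, abs_neg, abs_of_nonneg (by positivity), abs_of_nonneg (by positivity)]
        rw [habs]
        calc m^2 / (x^2 * s x) * ‖deriv E x‖ ≤ m^2 / (x^2 * s x) * x := by
              apply mul_le_mul_of_nonneg_left hxb (by positivity)
          _ ≤ 2*m := by
              rw [div_mul_eq_mul_div, div_le_iff₀ (mul_pos (pow_pos hx0 2) (hs_pos x))]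
              nlinarith [mul_le_mul_of_nonneg_left hsm (show (0:ℝ) ≤ 2*m*x^2 by positivity),
                mul_nonneg (mul_nonneg (sq_nonneg m) hx0.le) (show (0:ℝ) ≤ 2*x - 1 by linarith)]
      have ht2 : ‖((s x / x : ℝ) : ℂ) * deriv (deriv E) x‖ ≤ 2*m + 1 := by
        rw [norm_mul, Complex.norm_real, Real.norm_eq_abs,
          abs_of_nonneg (by positivity)]
        have hxb : ‖deriv (deriv E) x‖ ≤ 1 := hb2 x hx0
        calc s x / x * ‖deriv (deriv E) x‖ ≤ s x / x * 1 := by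
              apply mul_le_mul_of_nonneg_left hxb (by positivity)
          _ ≤ 2*m + 1 := by
              rw [mul_one, div_le_iff₀ hx0]
              nlinarith
      calc ‖((-(m ^ 2) / (x ^ 2 * s x) : ℝ) : ℂ) * deriv E x +
            ((s x / x : ℝ) : ℂ) * deriv (deriv E) x‖
          ≤ ‖((-(m ^ 2) / (x ^ 2 * s x) : ℝ) : ℂ) * deriv E x‖ +
            ‖((s x / x : ℝ) : ℂ) * deriv (deriv E) x‖ := norm_add_le _ _
        _ ≤ 2*m + (2*m+1) := add_le_add ht1 ht2
        _ = 4*m+1 := by ring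
  have hJ0 : ‖∫ z in c..d, f z‖ ≤ 64 * P ^ 3 := by
    have h := intervalIntegral.norm_integral_le_of_norm_le_const
      (a := c) (b := d) (C := 16 * P^2) (f := f) ?_
    · calc ‖∫ z in c..d, f z‖ ≤ 16 * P^2 * |d - c| := h
        _ ≤ 16 * P^2 * (4*P) := by
            rw [abs_of_nonneg (by linarith)]
            apply mul_le_mul_of_nonneg_left ?_ (by positivity)
            rw [hd_def, hc_def]
            linarith
        _ = 64 * P ^ 3 := by ring
    · intro x hx
      have hx0 : 0 < x := hsubo hx
      have hxd : x ≤ d := by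
        rcases Set.mem_uIoc.1 hx with h | h
        · exact h.2
        · exact le_trans h.2 hcd
      simp only [hf_def]
      have hxs : x ≤ s x := by
        have h2 := Real.sqrt_le_sqrt (show x^2 ≤ x^2 + m^2 by nlinarith)
        rwa [Real.sqrt_sq hx0.le] at h2
      have h1 : ‖Complex.exp (-Complex.I * ((t * Real.sqrt (x ^ 2 + m ^ 2) : ℝ) : ℂ))‖ = 1 :=
        hg_norm x
      rw [norm_mul, norm_mul, h1, one_mul, Complex.norm_real, Real.norm_eq_abs,
        abs_of_nonneg (by positivity)]
      calc x / s x * ‖E x‖ ≤ 1 * ‖E x‖ := by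
            apply mul_le_mul_of_nonneg_right ?_ (norm_nonneg _)
            rw [div_le_one (hs_pos x)]; exact hxs
        _ = ‖E x‖ := one_mul _
        _ ≤ x ^ 2 := hb0 x hx0
        _ ≤ 16 * P ^ 2 := by nlinarith [hd_def ▸ hxd]
  -- assemble the three final bounds
  have bound1 : ‖∫ z in Set.Ioi (0:ℝ), f z‖ ≤ 64 * P ^ 4 := by
    rw [hIoi]
    calc ‖∫ z in c..d, f z‖ ≤ 64 * P ^ 3 := hJ0
      _ ≤ 64 * P ^ 4 := by
          nlinarith [mul_nonneg (mul_nonneg (sq_nonneg P) hP0.le) (show (0:ℝ) ≤ P - 1 by linarith)]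
  have bound2 : ‖∫ z in Set.Ioi (0:ℝ), f z‖ ≤ 16 * (P ^ 2 / |t|) := by
    rw [hIoi, ibp1, norm_mul, hnorm_It]
    calc 1 / |t| * ‖∫ z in c..d, deriv E z * g z‖ ≤ 1 / |t| * (16 * P ^ 2) := by
          apply mul_le_mul_of_nonneg_left hJ1 (by positivity)
      _ = 16 * (P ^ 2 / |t|) := by field_simp
  have bound3 : ‖∫ z in Set.Ioi (0:ℝ), f z‖ ≤ 4 * (4*m+1) * (P / t ^ 2) := by
    rw [hIoi, ibp1, norm_mul, hnorm_It, ibp2, norm_mul, hnorm_It]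
    calc 1 / |t| * (1 / |t| * ‖∫ z in c..d, w' z * g z‖)
        ≤ 1 / |t| * (1 / |t| * ((4*m+1) * (4*P))) := by
          apply mul_le_mul_of_nonneg_left ?_ (by positivity)
          apply mul_le_mul_of_nonneg_left hJ2 (by positivity)
      _ = 4 * (4*m+1) * (P / (|t| * |t|)) := by field_simp
      _ = 4 * (4*m+1) * (P / t ^ 2) := by rw [show |t| * |t| = t ^ 2 by rw [← abs_mul, abs_mul_self, sq]]
  -- rewrite the right hand side in terms of P
  have hA : (2:ℝ) ^ (4 * (j:ℝ)) = P ^ 4 := by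
    rw [hP_def, show (4 * (j:ℝ)) = (j:ℝ) * 4 from mul_comm _ _,
      Real.rpow_mul (by norm_num : (0:ℝ) ≤ 2),
      show ((4:ℝ)) = ((4:ℕ):ℝ) by norm_num, Real.rpow_natCast]
  have hB : (2:ℝ) ^ (2 * (j:ℝ)) = P ^ 2 := by
    rw [hP_def, show (2 * (j:ℝ)) = (j:ℝ) * 2 from mul_comm _ _,
      Real.rpow_mul (by norm_num : (0:ℝ) ≤ 2),
      show ((2:ℝ)) = ((2:ℕ):ℝ) by norm_num, Real.rpow_natCast]
  rw [hA, hB]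
  have hden : (0:ℝ) < t ^ 2 := by positivity
  rcases min_cases (P ^ 4) (min (P ^ 2 / |t|) (P / t ^ 2)) with ⟨hmin, _⟩ | ⟨hmin, _⟩
  · rw [hmin]
    calc ‖∫ z in Set.Ioi (0:ℝ), f z‖ ≤ 64 * P ^ 4 := bound1
      _ ≤ (64 + 16 + 4 * (4 * m + 1)) * P ^ 4 := by
          apply mul_le_mul_of_nonneg_right (by linarith) (by positivity)
  · rw [hmin]
    rcases min_cases (P ^ 2 / |t|) (P / t ^ 2) with ⟨hmin2, _⟩ | ⟨hmin2, _⟩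
    · rw [hmin2]
      calc ‖∫ z in Set.Ioi (0:ℝ), f z‖ ≤ 16 * (P ^ 2 / |t|) := bound2
        _ ≤ (64 + 16 + 4 * (4 * m + 1)) * (P ^ 2 / |t|) := by
            apply mul_le_mul_of_nonneg_right (by nlinarith) (by positivity)
    · rw [hmin2]
      calc ‖∫ z in Set.Ioi (0:ℝ), f z‖ ≤ 4 * (4*m+1) * (P / t ^ 2) := bound3
        _ ≤ (64 + 16 + 4 * (4 * m + 1)) * (P / t ^ 2) := by
            apply mul_le_mul_of_nonneg_right (by nlinarith) (by positivity)
end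

section
/- Let m > 0, ω ∈ (0, m), and ξ = (ξ₁, ξ₂, ξ₃, ξ₄) ∈ ℝ⁴ with ξ ≠ 0. Set η = ξ₂ + iξ₁, κ = ξ₃ + iξ₄, τ = |ξ|²·(m − √(m² − ω²))/ω², and d = |ξ|²·(ω² + |ξ|²). Let K be the 4×4 complex matrix K = d^{−1}·M, where M has rows (2m+τ, 0, κ, η̄), (0, 2m+τ, η, −κ̄), (κ̄, η̄, τ, 0), (η, −κ, 0, τ). Then K is Hermitian and its characteristic polynomial equals ((X − λ₊)(X − λ₋))², where λ± = (m + τ ± √(m² + |ξ|²))/d. In particular, the eigenvalues of K are λ₊ and λ₋, each with multiplicity two. -/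
open Matrix Polynomial

lemma aux_det13 (x d m t a ab k kb r s : ℂ)
    (hu : a * ab + k * kb = s) (hr : r ^ 2 = m ^ 2 + s) :
    (!![x - d⁻¹ * (2 * m + t), 0, -(d⁻¹ * k), -(d⁻¹ * ab);
        0, x - d⁻¹ * (2 * m + t), -(d⁻¹ * a), d⁻¹ * kb;
        -(d⁻¹ * kb), -(d⁻¹ * ab), x - d⁻¹ * t, 0;
        -(d⁻¹ * a), d⁻¹ * k, 0, x - d⁻¹ * t] : Matrix (Fin 4) (Fin 4) ℂ).det
      = ((x - (m + t + r) / d) * (x - (m + t - r) / d)) ^ 2 := by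
  simp [Matrix.det_succ_row_zero, Fin.sum_univ_succ, Fin.succAbove, div_eq_mul_inv,
    show ((2 : Fin 3).castSucc : Fin 4) = 2 from rfl]
  linear_combination (norm := ring1)
    ((d⁻¹)^2 * (-2*x^2 + 4*t*d⁻¹*x + 4*m*d⁻¹*x - 2*t^2*(d⁻¹)^2 - 4*m*t*(d⁻¹)^2
      + s*(d⁻¹)^2 + k*kb*(d⁻¹)^2 + a*ab*(d⁻¹)^2)) * hu
    + ((d⁻¹)^2 * (2*x^2 - 4*t*d⁻¹*x - 4*m*d⁻¹*x + 2*t^2*(d⁻¹)^2 + 4*m*t*(d⁻¹)^2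
      + m^2*(d⁻¹)^2 - s*(d⁻¹)^2 - r^2*(d⁻¹)^2)) * hr

theorem stmt13 (m ω : ℝ) (hm : 0 < m) (hω : 0 < ω) (hωm : ω < m)
    (ξ : EuclideanSpace ℝ (Fin 4)) (hξ : ξ ≠ 0)
    (η κ : ℂ)
    (hη : η = (ξ 1 : ℂ) + Complex.I * (ξ 0 : ℂ))
    (hκ : κ = (ξ 2 : ℂ) + Complex.I * (ξ 3 : ℂ))
    (τ d : ℝ)
    (hτ : τ = ‖ξ‖ ^ 2 * (m - Real.sqrt (m ^ 2 - ω ^ 2)) / ω ^ 2)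
    (hd : d = ‖ξ‖ ^ 2 * (ω ^ 2 + ‖ξ‖ ^ 2))
    (K : Matrix (Fin 4) (Fin 4) ℂ)
    (hK : K = ((d : ℂ))⁻¹ •
      !![((2 * m + τ : ℝ) : ℂ), 0, κ, star η;
         0, ((2 * m + τ : ℝ) : ℂ), η, -star κ;
         star κ, star η, ((τ : ℝ) : ℂ), 0;
         η, -κ, 0, ((τ : ℝ) : ℂ)])
    (lamP lamM : ℝ)
    (hlp : lamP = (m + τ + Real.sqrt (m ^ 2 + ‖ξ‖ ^ 2)) / d)
    (hlm : lamM = (m + τ - Real.sqrt (m ^ 2 + ‖ξ‖ ^ 2)) / d) :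
    K.IsHermitian ∧
      K.charpoly = ((X - C ((lamP : ℂ))) * (X - C ((lamM : ℂ)))) ^ 2 := by
  have hnorm : ‖ξ‖ ^ 2 = (ξ 0) ^ 2 + (ξ 1) ^ 2 + (ξ 2) ^ 2 + (ξ 3) ^ 2 := by
    rw [EuclideanSpace.norm_eq, Real.sq_sqrt (by positivity)]
    simp [Fin.sum_univ_four, sq_abs]
  have hu : η * star η + κ * star κ = ((‖ξ‖ ^ 2 : ℝ) : ℂ) := by
    rw [hη, hκ, hnorm]
    simp only [Complex.star_def, map_add, _root_.map_mul, Complex.conj_I, Complex.conj_ofReal]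
    push_cast
    linear_combination (-(ξ 0 : ℂ)^2 - (ξ 3 : ℂ)^2) * Complex.I_sq
  have hr : ((Real.sqrt (m ^ 2 + ‖ξ‖ ^ 2) : ℝ) : ℂ) ^ 2
      = (m : ℂ) ^ 2 + ((‖ξ‖ ^ 2 : ℝ) : ℂ) := by
    rw [← Complex.ofReal_pow, Real.sq_sqrt (by positivity)]
    push_cast
    ring
  constructor
  · rw [hK]
    ext i j
    fin_cases i <;> fin_cases j <;>
      simp [Matrix.conjTranspose_apply, Complex.star_def, Complex.conj_ofReal, mul_comm]
  · apply Polynomial.funext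
    intro x
    have hdet : (Matrix.charmatrix K).map (eval x) =
        !![x - (d : ℂ)⁻¹ * (2 * (m : ℂ) + (τ : ℂ)), 0, -((d : ℂ)⁻¹ * κ), -((d : ℂ)⁻¹ * star η);
           0, x - (d : ℂ)⁻¹ * (2 * (m : ℂ) + (τ : ℂ)), -((d : ℂ)⁻¹ * η), (d : ℂ)⁻¹ * star κ;
           -((d : ℂ)⁻¹ * star κ), -((d : ℂ)⁻¹ * star η), x - (d : ℂ)⁻¹ * (τ : ℂ), 0;
           -((d : ℂ)⁻¹ * η), (d : ℂ)⁻¹ * κ, 0, x - (d : ℂ)⁻¹ * (τ : ℂ)] := by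
      ext i j
      fin_cases i <;> fin_cases j <;>
        simp [Matrix.charmatrix_apply, hK, Matrix.diagonal, mul_comm] <;> push_cast <;> ring
    rw [Matrix.charpoly, ← Polynomial.coe_evalRingHom, RingHom.map_det,
      RingHom.mapMatrix_apply, Polynomial.coe_evalRingHom, hdet,
      aux_det13 x (d : ℂ) (m : ℂ) (τ : ℂ) η (star η) κ (star κ)
        ((Real.sqrt (m ^ 2 + ‖ξ‖ ^ 2) : ℝ) : ℂ) ((‖ξ‖ ^ 2 : ℝ) : ℂ) hu hr]
    have e1 : ((lamP : ℝ) : ℂ) = ((m:ℂ) + (τ:ℂ) + ((Real.sqrt (m ^ 2 + ‖ξ‖ ^ 2) : ℝ) : ℂ)) / (d:ℂ) := by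
      rw [hlp]; push_cast; ring
    have e2 : ((lamM : ℝ) : ℂ) = ((m:ℂ) + (τ:ℂ) - ((Real.sqrt (m ^ 2 + ‖ξ‖ ^ 2) : ℝ) : ℂ)) / (d:ℂ) := by
      rw [hlm]; push_cast; ring
    simp [e1, e2]
end

section
/- Let m > 0, ω ∈ [0, m), and ξ = (ξ₁, ξ₂, ξ₃, ξ₄) ∈ ℝ⁴ with ξ ≠ 0. Set η = ξ₂ + iξ₁, κ = ξ₃ + iξ₄, d = |ξ|²·(ω² + |ξ|²), and let τ = |ξ|²·(m − √(m² − ω²))/ω² if ω > 0 and τ = |ξ|²/(2m) if ω = 0. Let K(ω, ξ) be the 4×4 complex matrix d^{−1}·M, where M has rows (2m+τ, 0, κ, η̄), (0, 2m+τ, η, −κ̄), (κ̄, η̄, τ, 0), (η, −κ, 0, τ). Then K(ω, ξ) is Hermitian and positive definite. -/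
open Matrix
open scoped ComplexOrder

set_option maxHeartbeats 1000000 in
theorem stmt14 (m ω : ℝ) (hm : 0 < m) (hω0 : 0 ≤ ω) (hωm : ω < m)
    (ξ : EuclideanSpace ℝ (Fin 4)) (hξ : ξ ≠ 0)
    (η κ : ℂ)
    (hη : η = (ξ 1 : ℂ) + Complex.I * (ξ 0 : ℂ))
    (hκ : κ = (ξ 2 : ℂ) + Complex.I * (ξ 3 : ℂ))
    (τ d : ℝ)
    (hτ : τ = if 0 < ω then ‖ξ‖ ^ 2 * (m - Real.sqrt (m ^ 2 - ω ^ 2)) / ω ^ 2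
              else ‖ξ‖ ^ 2 / (2 * m))
    (hd : d = ‖ξ‖ ^ 2 * (ω ^ 2 + ‖ξ‖ ^ 2))
    (K : Matrix (Fin 4) (Fin 4) ℂ)
    (hK : K = ((d : ℂ))⁻¹ •
      !![((2 * m + τ : ℝ) : ℂ), 0, κ, star η;
         0, ((2 * m + τ : ℝ) : ℂ), η, -star κ;
         star κ, star η, ((τ : ℝ) : ℂ), 0;
         η, -κ, 0, ((τ : ℝ) : ℂ)]) :
    K.IsHermitian ∧ K.PosDef := by
  have hc : 0 < ‖ξ‖ ^ 2 := by
    have := norm_pos_iff.mpr hξ; positivity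
  set c : ℝ := ‖ξ‖ ^ 2 with hcdef
  -- positivity facts about τ
  have hτkey : 0 < τ ∧ c < τ * (2 * m + τ) := by
    rcases lt_or_eq_of_le hω0 with hω | hω
    · rw [hτ, if_pos hω]
      set s := Real.sqrt (m ^ 2 - ω ^ 2) with hs
      have hs2 : s ^ 2 = m ^ 2 - ω ^ 2 := Real.sq_sqrt (by nlinarith)
      have hs0 : 0 ≤ s := Real.sqrt_nonneg _
      have hsm : s < m := by nlinarith
      have hω2 : 0 < ω ^ 2 := by positivity
      have hτpos : 0 < c * (m - s) / ω ^ 2 :=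
        div_pos (mul_pos hc (by linarith)) hω2
      refine ⟨hτpos, ?_⟩
      have hτω : c * (m - s) / ω ^ 2 * (m + s) = c := by
        rw [div_mul_eq_mul_div, div_eq_iff hω2.ne']
        nlinarith
      nlinarith [hτpos, hτω]
    · rw [hτ, if_neg (by simp [← hω])]
      have h1 : 0 < c / (2 * m) := by positivity
      refine ⟨h1, ?_⟩
      have h2 : c / (2 * m) * (2 * m) = c := div_mul_cancel₀ _ (by positivity)
      nlinarith
  obtain ⟨hτpos, hab⟩ := hτkey
  have ha : 0 < 2 * m + τ := by linarith
  have hd0 : 0 < d := by rw [hd]; positivity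
  -- Hermitian
  have herm : K.IsHermitian := by
    have : ∀ i j, K.conjTranspose i j = K i j := by
      intro i j
      fin_cases i <;> fin_cases j <;>
        simp [hK, Matrix.conjTranspose_apply, Complex.star_def, map_inv₀, Complex.conj_ofReal]
    exact Matrix.ext this
  -- the norm relation
  have hrel : η * star η + κ * star κ = (c : ℂ) := by
    have hnorm : c = (ξ 0) ^ 2 + (ξ 1) ^ 2 + (ξ 2) ^ 2 + (ξ 3) ^ 2 := by
      rw [hcdef, EuclideanSpace.norm_eq, Real.sq_sqrt (by positivity)]
      simp [Fin.sum_univ_four, Real.norm_eq_abs, sq_abs]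
    rw [hη, hκ, hnorm]
    simp only [Complex.star_def, map_add, _root_.map_mul, Complex.conj_ofReal, Complex.conj_I]
    push_cast
    ring_nf
    rw [Complex.I_sq]
    ring
  have hrel' : η * (starRingEnd ℂ) η + κ * (starRingEnd ℂ) κ = (c : ℂ) := by
    simpa [Complex.star_def] using hrel
  refine ⟨herm, Matrix.PosDef.of_dotProduct_mulVec_pos herm ?_⟩
  intro x hx
  set a : ℝ := 2 * m + τ with hadef
  -- key algebraic identity
  have key : (a : ℂ) * (star x ⬝ᵥ ((!![((a : ℝ) : ℂ), 0, κ, star η;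
         0, ((a : ℝ) : ℂ), η, -star κ;
         star κ, star η, ((τ : ℝ) : ℂ), 0;
         η, -κ, 0, ((τ : ℝ) : ℂ)]) *ᵥ x)) =
      ((Complex.normSq ((a:ℂ) * x 0 + (κ * x 2 + star η * x 3)) +
        Complex.normSq ((a:ℂ) * x 1 + (η * x 2 - star κ * x 3)) +
        (a * τ - c) * (Complex.normSq (x 2) + Complex.normSq (x 3)) : ℝ) : ℂ) := by
    simp only [dotProduct, Matrix.mulVec, Fin.sum_univ_four, Pi.star_apply]
    simp only [Matrix.cons_val', Matrix.cons_val_zero, Matrix.cons_val_one, Matrix.head_cons,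
      Matrix.empty_val', Matrix.cons_val_fin_one, Matrix.head_fin_const, Matrix.of_apply,
      Matrix.cons_val_two, Matrix.tail_cons, Matrix.cons_val_three]
    simp only [Complex.ofReal_add, Complex.ofReal_mul, Complex.ofReal_sub,
      ← Complex.mul_conj, Complex.star_def, map_add, _root_.map_mul, map_sub,
      Complex.conj_conj, Complex.conj_ofReal]
    linear_combination (-(x 2 * (starRingEnd ℂ) (x 2)) - x 3 * (starRingEnd ℂ) (x 3)) * hrel'
  set R : ℝ := Complex.normSq ((a:ℂ) * x 0 + (κ * x 2 + star η * x 3)) +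
        Complex.normSq ((a:ℂ) * x 1 + (η * x 2 - star κ * x 3)) +
        (a * τ - c) * (Complex.normSq (x 2) + Complex.normSq (x 3)) with hRdef
  have hatc : 0 < a * τ - c := by rw [hadef]; nlinarith
  have hRpos : 0 < R := by
    rw [hRdef]
    by_cases h23 : x 2 = 0 ∧ x 3 = 0
    · obtain ⟨h2, h3⟩ := h23
      have hx01 : x 0 ≠ 0 ∨ x 1 ≠ 0 := by
        by_contra h
        push_neg at h
        exact hx (funext fun i => by fin_cases i <;> simp [h.1, h.2, h2, h3])
      have haC : (a : ℂ) ≠ 0 := by exact_mod_cast ha.ne'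
      have h2' : Complex.normSq (x 2) = 0 := by simp [h2]
      have h3' : Complex.normSq (x 3) = 0 := by simp [h3]
      rcases hx01 with h0 | h1
      · have hA : ((a:ℂ) * x 0 + (κ * x 2 + star η * x 3)) ≠ 0 := by
          rw [h2, h3]; simpa using mul_ne_zero haC h0
        have := Complex.normSq_pos.mpr hA
        have := Complex.normSq_nonneg ((a:ℂ) * x 1 + (η * x 2 - star κ * x 3))
        rw [h2', h3']
        linarith
      · have hA : ((a:ℂ) * x 1 + (η * x 2 - star κ * x 3)) ≠ 0 := by
          rw [h2, h3]; simpa using mul_ne_zero haC h1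
        have := Complex.normSq_pos.mpr hA
        have := Complex.normSq_nonneg ((a:ℂ) * x 0 + (κ * x 2 + star η * x 3))
        rw [h2', h3']
        linarith
    · rw [not_and_or] at h23
      have h3pos : 0 < Complex.normSq (x 2) + Complex.normSq (x 3) := by
        rcases h23 with h2 | h3
        · nlinarith [Complex.normSq_pos.mpr h2, Complex.normSq_nonneg (x 3)]
        · nlinarith [Complex.normSq_pos.mpr h3, Complex.normSq_nonneg (x 2)]
      have := Complex.normSq_nonneg ((a:ℂ) * x 0 + (κ * x 2 + star η * x 3))
      have := Complex.normSq_nonneg ((a:ℂ) * x 1 + (η * x 2 - star κ * x 3))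
      have := mul_pos hatc h3pos
      linarith
  -- conclude
  have hz : star x ⬝ᵥ (K *ᵥ x) = (((d⁻¹ * (R / a)) : ℝ) : ℂ) := by
    rw [hK, smul_mulVec, dotProduct_smul]
    have haC : (a : ℂ) ≠ 0 := by exact_mod_cast ha.ne'
    have : star x ⬝ᵥ ((!![((a : ℝ) : ℂ), 0, κ, star η;
         0, ((a : ℝ) : ℂ), η, -star κ;
         star κ, star η, ((τ : ℝ) : ℂ), 0;
         η, -κ, 0, ((τ : ℝ) : ℂ)]) *ᵥ x) = ((R / a : ℝ) : ℂ) := by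
      rw [Complex.ofReal_div, eq_div_iff haC, mul_comm]
      exact key
    rw [this]
    simp only [smul_eq_mul]
    push_cast
    ring
  rw [hz]
  rw [Complex.zero_lt_real]
  positivity
end
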